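/- arXiv:2510.15302 — 12 statements merged into one kernel-verified Lean document; each statement's English description precedes it below -/
import Mathlib

section
/- For every x > 0, the series Σ_{j=1}^∞ d(x_j)·a_j(x)·2^{−j} converges and its sum equals a(x) = √x·λ(x) − ρ(⌊x⌋). -/
open Filter

/-- The `j`-th 4-ary digit of `x`: `x_j = ⌊4^j x⌋ − 4⌊4^{j−1} x⌋`. -/
noncomputable def fourAryDigit (x : ℝ) (j : ℕ) : ℤ :=
  ⌊(4 : ℝ) ^ j * x⌋ - 4 * ⌊(4 : ℝ) ^ (j - 1) * x⌋

/-- `a_j(x) := −1` if `4^j x < 1`, and `ρ(⌊4^j x⌋) − ρ(⌊4^j x⌋ − 1)` otherwise. -/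
noncomputable def ajCoeff (ρ : ℕ → ℕ) (x : ℝ) (j : ℕ) : ℝ :=
  if (4 : ℝ) ^ j * x < 1 then -1
  else (ρ ⌊(4 : ℝ) ^ j * x⌋₊ : ℝ) - (ρ (⌊(4 : ℝ) ^ j * x⌋₊ - 1) : ℝ)


section Aux

variable (ρ : ℕ → ℕ)
variable (hρ0 : ρ 0 = 1) (hρ1 : ρ 1 = 2) (hρ2 : ρ 2 = 3) (hρ3 : ρ 3 = 4)
variable (hρ4 : ∀ n : ℕ, 1 ≤ n → ρ (4 * n) = 2 * ρ n + 1)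
variable (hρ41 : ∀ n : ℕ, 1 ≤ n → ρ (4 * n + 1) = 2 * ρ n)
variable (hρ42 : ∀ n : ℕ, 1 ≤ n → ρ (4 * n + 2) = ρ n + ρ (n + 1))
variable (hρ43 : ∀ n : ℕ, 1 ≤ n → ρ (4 * n + 3) = 2 * ρ (n + 1))

include hρ0 hρ1 hρ2 hρ3 hρ4 hρ41 hρ42 hρ43 in
lemma rho_diff : ∀ m : ℕ, |(ρ (m+1) : ℝ) - (ρ m : ℝ)| ≤ 1 := by
  intro m
  induction m using Nat.strong_induction_on with
  | _ m ih =>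
    rcases Nat.lt_or_ge m 4 with h | h
    · interval_cases m
      · norm_num [hρ0, hρ1]
      · norm_num [hρ1, hρ2]
      · norm_num [hρ2, hρ3]
      · have h4 : ρ 4 = 5 := by
          have := hρ4 1 le_rfl; simpa [hρ1] using this
        norm_num [show (3:ℕ)+1 = 4 from rfl, h4, hρ3]
    · obtain ⟨q, r, hr, rfl⟩ : ∃ q r, r < 4 ∧ m = 4*q + r :=
        ⟨m/4, m%4, Nat.mod_lt _ (by norm_num), (Nat.div_add_mod m 4).symm⟩
      have hq : 1 ≤ q := by omega
      interval_cases r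
      · simp only [Nat.add_zero]
        rw [hρ41 q hq, hρ4 q hq]
        push_cast
        rw [abs_le]; constructor <;> linarith
      · rw [show 4*q+1+1 = 4*q+2 from rfl, hρ42 q hq, hρ41 q hq]
        have h := ih q (by omega)
        rw [abs_le] at h ⊢
        push_cast
        push_cast at h
        constructor <;> linarith
      · rw [show 4*q+2+1 = 4*q+3 from rfl, hρ43 q hq, hρ42 q hq]
        have h := ih q (by omega)
        rw [abs_le] at h ⊢
        push_cast
        push_cast at h
        constructor <;> linarith
      · rw [show 4*q+3+1 = 4*(q+1) from by ring, hρ4 (q+1) (by omega), hρ43 q hq]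
        push_cast
        rw [abs_le]; constructor <;> linarith

include hρ1 hρ3 hρ43 in
lemma rho_pred (n : ℕ) (hn : 1 ≤ n) : ρ (4*n - 1) = 2 * ρ n := by
  rcases Nat.lt_or_ge n 2 with h | h
  · have : n = 1 := by omega
    subst this
    rw [show (4*1-1 : ℕ) = 3 from rfl, hρ3, hρ1]
  · have h1 : 1 ≤ n - 1 := by omega
    have := hρ43 (n-1) h1
    rw [show 4*(n-1)+3 = 4*n-1 from by omega, show n-1+1 = n from by omega] at this
    exact this

end Aux

lemma digit_decomp (x : ℝ) (hx : 0 < x) (j : ℕ) :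
    ∃ d : ℕ, d < 4 ∧ ⌊(4:ℝ)^(j+1) * x⌋₊ = 4 * ⌊(4:ℝ)^j * x⌋₊ + d ∧
      fourAryDigit x (j+1) = (d : ℤ) := by
  have hy : 0 < (4:ℝ)^j * x := by positivity
  have h4 : (4:ℝ)^(j+1) * x = 4 * ((4:ℝ)^j * x) := by ring
  set y := (4:ℝ)^j * x with hydef
  have h1 : 4 * ⌊y⌋₊ ≤ ⌊4 * y⌋₊ := by
    rw [Nat.le_floor_iff (by positivity)]
    push_cast
    have := Nat.floor_le hy.le
    linarith
  have h2 : ⌊4 * y⌋₊ < 4 * ⌊y⌋₊ + 4 := by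
    rw [Nat.floor_lt (by positivity)]
    push_cast
    have := Nat.lt_floor_add_one y
    linarith
  refine ⟨⌊4*y⌋₊ - 4*⌊y⌋₊, by omega, by rw [h4]; omega, ?_⟩
  unfold fourAryDigit
  rw [Nat.add_sub_cancel]
  rw [← Int.natCast_floor_eq_floor (le_of_lt hy),
      ← Int.natCast_floor_eq_floor (by rw [h4]; positivity : (0:ℝ) ≤ (4:ℝ)^(j+1) * x),
      h4]
  push_cast [Nat.cast_sub h1]
  ring

lemma key_identity (ρ : ℕ → ℕ)
    (hρ0 : ρ 0 = 1) (hρ1 : ρ 1 = 2) (hρ2 : ρ 2 = 3) (hρ3 : ρ 3 = 4)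
    (hρ4 : ∀ n : ℕ, 1 ≤ n → ρ (4 * n) = 2 * ρ n + 1)
    (hρ41 : ∀ n : ℕ, 1 ≤ n → ρ (4 * n + 1) = 2 * ρ n)
    (hρ42 : ∀ n : ℕ, 1 ≤ n → ρ (4 * n + 2) = ρ n + ρ (n + 1))
    (hρ43 : ∀ n : ℕ, 1 ≤ n → ρ (4 * n + 3) = 2 * ρ (n + 1))
    (x : ℝ) (hx : 0 < x) (j : ℕ) :
    |(fourAryDigit x (j+1) : ℝ) - 1| * ajCoeff ρ x (j+1)
      = (ρ ⌊(4:ℝ)^(j+1) * x⌋₊ : ℝ) - 2 * (ρ ⌊(4:ℝ)^j * x⌋₊ : ℝ) := by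
  obtain ⟨d, hd4, hm, hdig⟩ := digit_decomp x hx j
  have hy : 0 < (4:ℝ)^(j+1) * x := by positivity
  set n := ⌊(4:ℝ)^j * x⌋₊ with hn
  rw [hdig]
  unfold ajCoeff
  rcases Nat.eq_zero_or_pos n with hn0 | hn1
  · -- n = 0
    rw [hn0] at hm
    simp only [Nat.mul_zero, Nat.zero_add] at hm
    rcases Nat.eq_zero_or_pos d with hd0 | hd1
    · -- d = 0 : 4^{j+1} x < 1
      have hlt : (4:ℝ)^(j+1) * x < 1 := by
        rw [← Nat.floor_eq_zero]; omega
      rw [if_pos hlt, hd0, hm, hd0, hn0, hρ0]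
      norm_num
    · have hge : ¬ ((4:ℝ)^(j+1) * x < 1) := by
        apply not_lt.mpr
        apply Nat.floor_pos.mp
        omega
      rw [if_neg hge, hm, hn0, hρ0]
      interval_cases d
      · rw [show (1:ℕ)-1 = 0 from rfl, hρ1, hρ0]; norm_num
      · rw [show (2:ℕ)-1 = 1 from rfl, hρ2, hρ1]; norm_num
      · rw [show (3:ℕ)-1 = 2 from rfl, hρ3, hρ2]; norm_num
  · -- n ≥ 1
    have hge : ¬ ((4:ℝ)^(j+1) * x < 1) := by
      apply not_lt.mpr
      apply Nat.floor_pos.mp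
      omega
    rw [if_neg hge, hm]
    interval_cases d
    · -- d = 0
      rw [Nat.add_zero, show 4*n-1 = 4*n-1 from rfl]
      rw [rho_pred ρ hρ1 hρ3 hρ43 n hn1, hρ4 n hn1]
      push_cast
      rw [show |(0:ℝ) - 1| = 1 from by norm_num]
      ring
    · rw [show 4*n+1-1 = 4*n from by omega, hρ41 n hn1, hρ4 n hn1]
      push_cast
      rw [show |(1:ℝ) - 1| = 0 from by norm_num]
      ring
    · rw [show 4*n+2-1 = 4*n+1 from by omega, hρ42 n hn1, hρ41 n hn1]
      push_cast
      rw [show |(2:ℝ) - 1| = 1 from by norm_num]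
      ring
    · rw [show 4*n+3-1 = 4*n+2 from by omega, hρ43 n hn1, hρ42 n hn1]
      push_cast
      rw [show |(3:ℝ) - 1| = 2 from by norm_num]
      ring

/-- For every `x > 0`, the series `Σ_{j=1}^∞ d(x_j)·a_j(x)·2^{−j}` converges to
`a(x) = √x·λ(x) − ρ(⌊x⌋)`, where `d(y) = |y − 1|`. -/
theorem hasSum_series_eq_a
    (ρ : ℕ → ℕ) (Λ : ℝ → ℝ)
    (hρ0 : ρ 0 = 1) (hρ1 : ρ 1 = 2) (hρ2 : ρ 2 = 3) (hρ3 : ρ 3 = 4)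
    (hρ4 : ∀ n : ℕ, 1 ≤ n → ρ (4 * n) = 2 * ρ n + 1)
    (hρ41 : ∀ n : ℕ, 1 ≤ n → ρ (4 * n + 1) = 2 * ρ n)
    (hρ42 : ∀ n : ℕ, 1 ≤ n → ρ (4 * n + 2) = ρ n + ρ (n + 1))
    (hρ43 : ∀ n : ℕ, 1 ≤ n → ρ (4 * n + 3) = 2 * ρ (n + 1))
    (hΛ : ∀ x : ℝ, 0 < x →
      Tendsto (fun k : ℕ => (ρ ⌊(4 : ℝ) ^ k * x⌋₊ : ℝ) / Real.sqrt ((4 : ℝ) ^ k * x))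
        atTop (nhds (Λ x)))
    (x : ℝ) (hx : 0 < x) :
    HasSum (fun j : ℕ =>
        |(fourAryDigit x (j + 1) : ℝ) - 1| * ajCoeff ρ x (j + 1) / 2 ^ (j + 1))
      (Real.sqrt x * Λ x - (ρ ⌊x⌋₊ : ℝ)) := by
  set f : ℕ → ℝ := fun j =>
    |(fourAryDigit x (j + 1) : ℝ) - 1| * ajCoeff ρ x (j + 1) / 2 ^ (j + 1) with hf
  set b : ℕ → ℝ := fun k => (ρ ⌊(4:ℝ)^k * x⌋₊ : ℝ) / 2^k with hb
  -- telescoping form of the terms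
  have hfb : ∀ j, f j = b (j+1) - b j := by
    intro j
    have hk := key_identity ρ hρ0 hρ1 hρ2 hρ3 hρ4 hρ41 hρ42 hρ43 x hx j
    simp only [hf, hb]
    rw [hk]
    have h1 : ((2:ℝ))^(j+1) ≠ 0 := by positivity
    have h2 : ((2:ℝ))^j ≠ 0 := by positivity
    field_simp
    ring
  -- limit of b
  have hsqrt : ∀ k : ℕ, Real.sqrt ((4:ℝ)^k * x) = 2^k * Real.sqrt x := by
    intro k
    rw [Real.sqrt_mul (by positivity)]
    congr 1
    rw [show (4:ℝ) = 2^2 by norm_num, ← pow_mul, show 2*k = k*2 by ring, pow_mul]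
    exact Real.sqrt_sq (by positivity)
  have hsx : Real.sqrt x ≠ 0 := ne_of_gt (Real.sqrt_pos.mpr hx)
  have hblim : Tendsto b atTop (nhds (Real.sqrt x * Λ x)) := by
    have h2 : Tendsto (fun k : ℕ =>
        (ρ ⌊(4:ℝ)^k * x⌋₊ : ℝ) / Real.sqrt ((4:ℝ)^k * x) * Real.sqrt x)
        atTop (nhds (Λ x * Real.sqrt x)) := (hΛ x hx).mul_const _
    have hbeq : b = fun k : ℕ =>
        (ρ ⌊(4:ℝ)^k * x⌋₊ : ℝ) / Real.sqrt ((4:ℝ)^k * x) * Real.sqrt x := by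
      funext k
      simp only [hb]
      rw [hsqrt k]
      have h2k : ((2:ℝ))^k ≠ 0 := by positivity
      field_simp
    rw [hbeq, mul_comm (Real.sqrt x)]
    exact h2
  -- partial sums converge to the target
  have hSlim : Tendsto (fun k => ∑ j ∈ Finset.range k, f j) atTop
      (nhds (Real.sqrt x * Λ x - (ρ ⌊x⌋₊ : ℝ))) := by
    have hps : ∀ k, ∑ j ∈ Finset.range k, f j = b k - b 0 := by
      intro k
      rw [Finset.sum_congr rfl fun j _ => hfb j]
      exact Finset.sum_range_sub b k
    have hb0 : b 0 = (ρ ⌊x⌋₊ : ℝ) := by simp [hb]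
    simp only [hps, hb0]
    exact hblim.sub tendsto_const_nhds
  -- summability
  have hsum : Summable f := by
    apply Summable.of_norm_bounded (g := fun j : ℕ => ((1:ℝ)/2)^j)
      (summable_geometric_of_lt_one (by norm_num) (by norm_num))
    intro j
    obtain ⟨d, hd4, hm, hdig⟩ := digit_decomp x hx j
    have hda : |(fourAryDigit x (j+1) : ℝ) - 1| ≤ 2 := by
      rw [hdig]
      interval_cases d <;> norm_num
    have haj : |ajCoeff ρ x (j+1)| ≤ 1 := by
      unfold ajCoeff
      split_ifs with h
      · norm_num
      · have hm1 : 1 ≤ ⌊(4:ℝ)^(j+1) * x⌋₊ := Nat.floor_pos.mpr (not_lt.mp h)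
        have := rho_diff ρ hρ0 hρ1 hρ2 hρ3 hρ4 hρ41 hρ42 hρ43 (⌊(4:ℝ)^(j+1) * x⌋₊ - 1)
        rwa [Nat.sub_add_cancel hm1] at this
    have h2j : (0:ℝ) < 2^(j+1) := by positivity
    rw [Real.norm_eq_abs, hf]
    simp only []
    rw [abs_div, abs_mul, abs_abs, abs_of_pos h2j]
    have hnum : |(fourAryDigit x (j+1) : ℝ) - 1| * |ajCoeff ρ x (j+1)| ≤ 2 := by
      calc |(fourAryDigit x (j+1) : ℝ) - 1| * |ajCoeff ρ x (j+1)|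
          ≤ 2 * 1 := mul_le_mul hda haj (abs_nonneg _) (by norm_num)
        _ = 2 := by norm_num
    rw [div_le_iff₀ h2j]
    calc |(fourAryDigit x (j+1) : ℝ) - 1| * |ajCoeff ρ x (j+1)| ≤ 2 := hnum
      _ = ((1:ℝ)/2)^j * 2^(j+1) := by
          rw [pow_succ, one_div, inv_pow]
          field_simp
  obtain ⟨a, ha⟩ := hsum
  have heq : a = Real.sqrt x * Λ x - (ρ ⌊x⌋₊ : ℝ) :=
    tendsto_nhds_unique ha.tendsto_sum_nat hSlim
  rwa [heq] at ha
end

section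
/- For all integers n ≥ 1, |ρ(n+1) − ρ(n)| = 1. -/
/-- For all integers `n ≥ 1`, `|ρ(n+1) − ρ(n)| = 1`, where `ρ` is the abelian complexity
of the Rudin–Shapiro sequence. -/
theorem abs_delta_rho_eq_one
    (ρ : ℕ → ℕ)
    (hρ0 : ρ 0 = 1) (hρ1 : ρ 1 = 2) (hρ2 : ρ 2 = 3) (hρ3 : ρ 3 = 4)
    (hρ4 : ∀ n : ℕ, 1 ≤ n → ρ (4 * n) = 2 * ρ n + 1)
    (hρ41 : ∀ n : ℕ, 1 ≤ n → ρ (4 * n + 1) = 2 * ρ n)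
    (hρ42 : ∀ n : ℕ, 1 ≤ n → ρ (4 * n + 2) = ρ n + ρ (n + 1))
    (hρ43 : ∀ n : ℕ, 1 ≤ n → ρ (4 * n + 3) = 2 * ρ (n + 1)) :
    ∀ n : ℕ, 1 ≤ n → |(ρ (n + 1) : ℤ) - (ρ n : ℤ)| = 1 := by
  intro n
  induction n using Nat.strong_induction_on with
  | _ n ih =>
    intro hn
    match n, hn with
    | 1, _ => simp [hρ1, hρ2]
    | 2, _ => simp [hρ2, hρ3]
    | 3, _ =>
      have h4 : ρ 4 = 5 := by simpa [hρ1] using hρ4 1 (le_refl 1)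
      rw [show (3:ℕ)+1 = 4 by norm_num, h4, hρ3]
      norm_num
    | (m+4), _ =>
      set k := m + 4 with hk
      have hm4 : 1 ≤ k / 4 := Nat.le_div_iff_mul_le (by norm_num) |>.mpr (by omega)
      set q := k / 4 with hq
      have hlt : q < k := by omega
      have hlt2 : q + 1 ≤ k := by omega
      have hr := Nat.mod_lt k (show 0 < 4 by norm_num)
      have hdm : 4 * q + k % 4 = k := by omega
      interval_cases h : k % 4
      · -- k = 4q
        have hk4 : k = 4 * q := by omega
        rw [hk4, show 4*q+1 = 4*q+1 from rfl, hρ41 q hm4, hρ4 q hm4]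
        push_cast; ring_nf
        norm_num
      · -- k = 4q+1
        have hk4 : k = 4 * q + 1 := by omega
        have := ih q hlt hm4
        rw [hk4, show 4*q+1+1 = 4*q+2 from rfl, hρ42 q hm4, hρ41 q hm4]
        push_cast
        convert this using 2
        ring
      · -- k = 4q+2
        have hk4 : k = 4 * q + 2 := by omega
        have := ih q hlt hm4
        rw [hk4, show 4*q+2+1 = 4*q+3 from rfl, hρ43 q hm4, hρ42 q hm4]
        push_cast
        convert this using 2
        ring
      · -- k = 4q+3
        have hk4 : k = 4 * q + 3 := by omega
        have hq1 : 1 ≤ q + 1 := by omega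
        rw [hk4, show 4*q+3+1 = 4*(q+1) from by ring, hρ4 (q+1) hq1, hρ43 q hm4]
        push_cast; ring_nf
        norm_num
end

section
/- For every x with 0 < x ≤ 1 and every integer n ≥ 1, |a(x) − f_n(x)| ≤ 2^{−n+1}. -/
open Filter

/-- The partial sum `f_n(x) := Σ_{j=1}^n d(x_j)·a_j(x)·2^{−j}` with `d(y) = |y − 1|`. -/
noncomputable def fPartial (ρ : ℕ → ℕ) (x : ℝ) (n : ℕ) : ℝ :=
  ∑ j ∈ Finset.Icc 1 n, |(fourAryDigit x j : ℝ) - 1| * ajCoeff ρ x j / 2 ^ j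

section Aux

variable (ρ : ℕ → ℕ)
variable (hρ0 : ρ 0 = 1) (hρ1 : ρ 1 = 2) (hρ2 : ρ 2 = 3) (hρ3 : ρ 3 = 4)
    (hρ4 : ∀ n : ℕ, 1 ≤ n → ρ (4 * n) = 2 * ρ n + 1)
    (hρ41 : ∀ n : ℕ, 1 ≤ n → ρ (4 * n + 1) = 2 * ρ n)
    (hρ42 : ∀ n : ℕ, 1 ≤ n → ρ (4 * n + 2) = ρ n + ρ (n + 1))
    (hρ43 : ∀ n : ℕ, 1 ≤ n → ρ (4 * n + 3) = 2 * ρ (n + 1))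

include hρ0 hρ1 hρ2 hρ3 hρ4 hρ41 hρ42 hρ43

/-- `|ρ(m+1) − ρ(m)| ≤ 1` for `m ≥ 1`. -/
lemma rho_step : ∀ m : ℕ, 1 ≤ m → |(ρ (m + 1) : ℤ) - (ρ m : ℤ)| ≤ 1 := by
  intro m
  induction m using Nat.strong_induction_on with
  | _ m IH =>
    intro hm
    have hq : 4 * (m / 4) + m % 4 = m := Nat.div_add_mod m 4
    set q := m / 4 with hqdef
    have hr4 : m % 4 < 4 := Nat.mod_lt m (by norm_num)
    interval_cases h : m % 4
    · -- m = 4q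
      have hq1 : 1 ≤ q := by omega
      have hm4 : m = 4 * q := by omega
      rw [hm4, hρ41 q hq1, hρ4 q hq1]
      push_cast; rw [abs_le]; constructor <;> omega
    · -- m = 4q + 1
      have hm4 : m = 4 * q + 1 := by omega
      rcases Nat.eq_zero_or_pos q with hq0 | hq1
      · have : m = 1 := by omega
        rw [this, hρ2, hρ1]; norm_num
      · rw [hm4, show 4 * q + 1 + 1 = 4 * q + 2 from rfl, hρ42 q hq1, hρ41 q hq1]
        have := IH q (by omega) hq1
        rw [abs_le] at this
        push_cast at this ⊢; rw [abs_le]; constructor <;> omega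
    · -- m = 4q + 2
      have hm4 : m = 4 * q + 2 := by omega
      rcases Nat.eq_zero_or_pos q with hq0 | hq1
      · have : m = 2 := by omega
        rw [this, hρ3, hρ2]; norm_num
      · rw [hm4, show 4 * q + 2 + 1 = 4 * q + 3 from rfl, hρ43 q hq1, hρ42 q hq1]
        have := IH q (by omega) hq1
        rw [abs_le] at this
        push_cast at this ⊢; rw [abs_le]; constructor <;> omega
    · -- m = 4q + 3
      have hm4 : m = 4 * q + 3 := by omega
      rcases Nat.eq_zero_or_pos q with hq0 | hq1
      · have : m = 3 := by omega
        rw [this, hρ4 1 le_rfl, hρ3, hρ1]; norm_num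
      · rw [hm4, show 4 * q + 3 + 1 = 4 * (q + 1) from by ring, hρ4 (q + 1) (by omega),
          hρ43 q hq1]
        push_cast; rw [abs_le]; constructor <;> omega

/-- `ρ(4m − 1) = 2 ρ m` for `m ≥ 1`. -/
lemma rho_pred_s5 : ∀ m : ℕ, 1 ≤ m → ρ (4 * m - 1) = 2 * ρ m := by
  intro m hm
  rcases Nat.lt_or_ge m 2 with h2 | h2
  · have : m = 1 := by omega
    rw [this]; simpa [hρ1] using hρ3
  · have h1 : 1 ≤ m - 1 := by omega
    have : 4 * m - 1 = 4 * (m - 1) + 3 := by omega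
    rw [this, hρ43 (m - 1) h1, show m - 1 + 1 = m from by omega]

/-- The core arithmetic identity and bound. -/
lemma rho_core (m r : ℕ) (hr : r ≤ 3) :
    ((ρ (4 * m + r) : ℝ) - 2 * ρ m
       = |(r : ℝ) - 1| *
          (if 4 * m + r = 0 then (-1 : ℝ)
           else (ρ (4 * m + r) : ℝ) - ρ (4 * m + r - 1)))
    ∧ |(ρ (4 * m + r) : ℝ) - 2 * (ρ m : ℝ)| ≤ 2 := by
  have hstep : ∀ k : ℕ, 1 ≤ k → |(ρ (k + 1) : ℝ) - (ρ k : ℝ)| ≤ 1 := by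
    intro k hk
    have := rho_step ρ hρ0 hρ1 hρ2 hρ3 hρ4 hρ41 hρ42 hρ43 k hk
    rw [abs_le] at this
    rw [abs_le]; constructor <;> [exact_mod_cast this.1; exact_mod_cast this.2]
  interval_cases r
  · -- r = 0
    rcases Nat.eq_zero_or_pos m with hm0 | hm1
    · subst hm0; simp [hρ0]; norm_num
    · have h0 : ¬ (4 * m + 0 = 0) := by omega
      rw [if_neg h0]
      have e1 : ρ (4 * m + 0) = 2 * ρ m + 1 := by simpa using hρ4 m hm1
      have e2 : ρ (4 * m + 0 - 1) = 2 * ρ m := by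
        have : 4 * m + 0 - 1 = 4 * m - 1 := by omega
        rw [this]; exact rho_pred_s5 ρ hρ0 hρ1 hρ2 hρ3 hρ4 hρ41 hρ42 hρ43 m hm1
      rw [e1, e2]
      constructor
      · push_cast; norm_num
      · push_cast; rw [abs_le]; constructor <;> nlinarith
  · -- r = 1
    have e1 : ρ (4 * m + 1) = 2 * ρ m := by
      rcases Nat.eq_zero_or_pos m with hm0 | hm1
      · subst hm0; simpa [hρ0] using hρ1
      · exact hρ41 m hm1
    rw [e1]
    constructor
    · push_cast; norm_num
    · push_cast; norm_num
  · -- r = 2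
    have e1 : ρ (4 * m + 2) = ρ m + ρ (m + 1) := by
      rcases Nat.eq_zero_or_pos m with hm0 | hm1
      · subst hm0; simp [hρ0, hρ1, hρ2]
      · exact hρ42 m hm1
    have e2 : ρ (4 * m + 2 - 1) = 2 * ρ m := by
      have : 4 * m + 2 - 1 = 4 * m + 1 := by omega
      rw [this]
      rcases Nat.eq_zero_or_pos m with hm0 | hm1
      · subst hm0; simpa [hρ0] using hρ1
      · exact hρ41 m hm1
    have h0 : ¬ (4 * m + 2 = 0) := by omega
    rw [if_neg h0, e1, e2]
    constructor
    · push_cast; norm_num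
    · rcases Nat.eq_zero_or_pos m with hm0 | hm1
      · subst hm0; simp [hρ0, hρ1]; norm_num
      · have := hstep m hm1
        push_cast at this ⊢
        rw [abs_le] at this ⊢
        constructor <;> nlinarith
  · -- r = 3
    have e1 : ρ (4 * m + 3) = 2 * ρ (m + 1) := by
      rcases Nat.eq_zero_or_pos m with hm0 | hm1
      · subst hm0; simpa [hρ1] using hρ3
      · exact hρ43 m hm1
    have e2 : ρ (4 * m + 3 - 1) = ρ m + ρ (m + 1) := by
      have : 4 * m + 3 - 1 = 4 * m + 2 := by omega
      rw [this]
      rcases Nat.eq_zero_or_pos m with hm0 | hm1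
      · subst hm0; simp [hρ0, hρ1, hρ2]
      · exact hρ42 m hm1
    have h0 : ¬ (4 * m + 3 = 0) := by omega
    rw [if_neg h0, e1, e2]
    constructor
    · push_cast; rw [show |(3:ℝ) - 1| = 2 from by norm_num]; ring
    · rcases Nat.eq_zero_or_pos m with hm0 | hm1
      · subst hm0; simp [hρ0, hρ1]; norm_num
      · have := hstep m hm1
        push_cast at this ⊢
        rw [abs_le] at this ⊢
        constructor <;> nlinarith

end Aux

/-- For every `0 < x ≤ 1` and `n ≥ 1`, `|a(x) − f_n(x)| ≤ 2^{−n+1}`. -/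
theorem abs_a_sub_fPartial_le
    (ρ : ℕ → ℕ) (Λ : ℝ → ℝ)
    (hρ0 : ρ 0 = 1) (hρ1 : ρ 1 = 2) (hρ2 : ρ 2 = 3) (hρ3 : ρ 3 = 4)
    (hρ4 : ∀ n : ℕ, 1 ≤ n → ρ (4 * n) = 2 * ρ n + 1)
    (hρ41 : ∀ n : ℕ, 1 ≤ n → ρ (4 * n + 1) = 2 * ρ n)
    (hρ42 : ∀ n : ℕ, 1 ≤ n → ρ (4 * n + 2) = ρ n + ρ (n + 1))
    (hρ43 : ∀ n : ℕ, 1 ≤ n → ρ (4 * n + 3) = 2 * ρ (n + 1))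
    (hΛ : ∀ x : ℝ, 0 < x →
      Tendsto (fun k : ℕ => (ρ ⌊(4 : ℝ) ^ k * x⌋₊ : ℝ) / Real.sqrt ((4 : ℝ) ^ k * x))
        atTop (nhds (Λ x)))
    (x : ℝ) (hx0 : 0 < x) (hx1 : x ≤ 1) (n : ℕ) (hn : 1 ≤ n) :
    |(Real.sqrt x * Λ x - (ρ ⌊x⌋₊ : ℝ)) - fPartial ρ x n| ≤ (2 : ℝ) ^ ((1 : ℤ) - n) := by
  set S : ℕ → ℝ := fun k => (ρ ⌊(4 : ℝ) ^ k * x⌋₊ : ℝ) / 2 ^ k with hSdef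
  -- the per-step identity and bound
  have key : ∀ j : ℕ,
      S (j + 1) - S j = |(fourAryDigit x (j + 1) : ℝ) - 1| * ajCoeff ρ x (j + 1) / 2 ^ (j + 1)
      ∧ |S (j + 1) - S j| ≤ 2 / 2 ^ (j + 1) := by
    intro j
    set y : ℝ := (4 : ℝ) ^ j * x with hydef
    have hy : 0 < y := by positivity
    have h4 : (4 : ℝ) ^ (j + 1) * x = 4 * y := by rw [hydef, pow_succ]; ring
    set m : ℕ := ⌊y⌋₊ with hmdef
    set M : ℕ := ⌊(4 : ℝ) * y⌋₊ with hMdef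
    have hmy : (m : ℝ) ≤ y := Nat.floor_le hy.le
    have hym : y < m + 1 := Nat.lt_floor_add_one y
    have hle : 4 * m ≤ M := by
      apply Nat.le_floor; push_cast; linarith
    have hlt : M < 4 * m + 4 := by
      rw [hMdef, Nat.floor_lt (by positivity)]; push_cast; linarith
    obtain ⟨r, hr3, hrM⟩ : ∃ r : ℕ, r ≤ 3 ∧ M = 4 * m + r :=
      ⟨M - 4 * m, by omega, by omega⟩
    have hdig : (fourAryDigit x (j + 1) : ℝ) = (M : ℝ) - 4 * m := by
      have e1 : (⌊(4 : ℝ) ^ (j + 1) * x⌋ : ℤ) = (M : ℤ) := by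
        rw [h4, ← Int.natCast_floor_eq_floor (by positivity : (0:ℝ) ≤ 4 * y)]
      have e2 : (⌊(4 : ℝ) ^ (j + 1 - 1) * x⌋ : ℤ) = (m : ℤ) := by
        rw [show j + 1 - 1 = j from rfl, ← hydef,
          ← Int.natCast_floor_eq_floor hy.le]
      rw [fourAryDigit, e1, e2]; push_cast; ring
    have haj : ajCoeff ρ x (j + 1)
        = (if 4 * m + r = 0 then (-1 : ℝ) else (ρ (4 * m + r) : ℝ) - ρ (4 * m + r - 1)) := by
      rw [ajCoeff, h4]
      have hcond : (4 : ℝ) * y < 1 ↔ 4 * m + r = 0 := by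
        rw [← hrM]; exact Nat.floor_eq_zero.symm
      by_cases hc : (4 : ℝ) * y < 1
      · rw [if_pos hc, if_pos (hcond.mp hc)]
      · rw [if_neg hc, if_neg (fun h => hc (hcond.mpr h)), ← hMdef, hrM]
    have core := rho_core ρ hρ0 hρ1 hρ2 hρ3 hρ4 hρ41 hρ42 hρ43 m r hr3
    have hSS : S (j + 1) - S j = ((ρ M : ℝ) - 2 * ρ m) / 2 ^ (j + 1) := by
      rw [hSdef]
      simp only [h4, ← hydef, ← hMdef, ← hmdef]
      rw [pow_succ]
      field_simp
    have habs : |(fourAryDigit x (j + 1) : ℝ) - 1| = |(r : ℝ) - 1| := by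
      rw [hdig, hrM]; push_cast; ring_nf
    constructor
    · rw [hSS, habs, haj, hrM, core.1]
    · rw [hSS, abs_div, abs_of_nonneg (by positivity : (0:ℝ) ≤ (2:ℝ) ^ (j+1))]
      apply div_le_div_of_nonneg_right ?_ (by positivity)
      rw [hrM]; exact core.2
  -- telescoping
  have htel : ∀ k : ℕ, S k = S 0 + ∑ j ∈ Finset.Icc 1 k,
      |(fourAryDigit x j : ℝ) - 1| * ajCoeff ρ x j / 2 ^ j := by
    intro k
    induction k with
    | zero => simp
    | succ k ih =>
      rw [← Finset.insert_Icc_right_eq_Icc_add_one (by omega : 1 ≤ k + 1),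
        Finset.sum_insert (by simp)]
      have hk := (key k).1
      linarith [hk, ih]
  -- chain bound
  have hchain : ∀ k : ℕ, n ≤ k → |S k - S n| ≤ 2 / 2 ^ n - 2 / 2 ^ k := by
    intro k
    induction k with
    | zero => intro h; interval_cases n <;> simp
    | succ k ih =>
      intro h
      rcases Nat.lt_or_ge n (k + 1) with h' | h'
      · have hk : n ≤ k := by omega
        have b1 := ih hk
        have b2 := (key k).2
        calc |S (k+1) - S n| ≤ |S (k+1) - S k| + |S k - S n| := by
              have := abs_sub_le (S (k+1)) (S k) (S n); linarith
          _ ≤ 2 / 2 ^ (k+1) + (2 / 2 ^ n - 2 / 2 ^ k) := by linarith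
          _ = 2 / 2 ^ n - 2 / 2 ^ (k+1) := by
              have : (0:ℝ) < 2 ^ k := by positivity
              rw [pow_succ]
              field_simp
              ring
      · have : n = k + 1 := by omega
        subst this; simp
  -- limit of S
  have hS : Tendsto S atTop (nhds (Real.sqrt x * Λ x)) := by
    have h := (hΛ x hx0).mul_const (Real.sqrt x)
    have heq : ∀ k : ℕ,
        (ρ ⌊(4 : ℝ) ^ k * x⌋₊ : ℝ) / Real.sqrt ((4 : ℝ) ^ k * x) * Real.sqrt x = S k := by
      intro k
      have h1 : Real.sqrt ((4 : ℝ) ^ k * x) = 2 ^ k * Real.sqrt x := by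
        have h44 : ((4:ℝ) ^ k) = ((2:ℝ) ^ k) ^ 2 := by
          rw [← pow_mul, mul_comm, pow_mul]; norm_num
        rw [Real.sqrt_mul (by positivity), h44, Real.sqrt_sq (by positivity)]
      have hsx : Real.sqrt x ≠ 0 := by positivity
      rw [hSdef, h1]
      field_simp
    rw [show Real.sqrt x * Λ x = Λ x * Real.sqrt x from mul_comm _ _]
    exact h.congr heq
  -- conclude
  have hS0 : S 0 = (ρ ⌊x⌋₊ : ℝ) := by simp [hSdef]
  have hSn : S n = (ρ ⌊x⌋₊ : ℝ) + fPartial ρ x n := by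
    rw [htel n, hS0, fPartial]
  have hlim : Tendsto (fun k => |S k - S n|) atTop (nhds |Real.sqrt x * Λ x - S n|) :=
    ((hS.sub_const (S n)).abs)
  have hfin : |Real.sqrt x * Λ x - S n| ≤ 2 / 2 ^ n := by
    apply le_of_tendsto hlim
    filter_upwards [eventually_ge_atTop n] with k hk
    have := hchain k hk
    have : 2 / 2 ^ k ≥ (0:ℝ) := by positivity
    linarith [hchain k hk]
  have hpow : (2 : ℝ) ^ ((1 : ℤ) - n) = 2 / 2 ^ n := by
    rw [zpow_sub₀ (by norm_num : (2:ℝ) ≠ 0), zpow_one, zpow_natCast]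
  rw [hpow]
  calc |(Real.sqrt x * Λ x - (ρ ⌊x⌋₊ : ℝ)) - fPartial ρ x n|
      = |Real.sqrt x * Λ x - S n| := by rw [hSn]; ring_nf
    _ ≤ 2 / 2 ^ n := hfin
end

section
/- Let x ∈ (0,1) and n ≥ 1 be such that the n-th 4-ary digit of x satisfies x_n = 1. Then for every y in the 4-adic interval I_{n−1}(x) := [⌊4^{n−1}x⌋/4^{n−1}, (⌊4^{n−1}x⌋+1)/4^{n−1}) containing x, one has |f_n(x) − f_n(y)| ≤ 2^{−n+1}. -/
/-- The first differences of the abelian complexity `ρ` are bounded by 1. -/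
lemma rho_diff_le (ρ : ℕ → ℕ)
    (hρ0 : ρ 0 = 1) (hρ1 : ρ 1 = 2) (hρ2 : ρ 2 = 3) (hρ3 : ρ 3 = 4)
    (hρ4 : ∀ n : ℕ, 1 ≤ n → ρ (4 * n) = 2 * ρ n + 1)
    (hρ41 : ∀ n : ℕ, 1 ≤ n → ρ (4 * n + 1) = 2 * ρ n)
    (hρ42 : ∀ n : ℕ, 1 ≤ n → ρ (4 * n + 2) = ρ n + ρ (n + 1))
    (hρ43 : ∀ n : ℕ, 1 ≤ n → ρ (4 * n + 3) = 2 * ρ (n + 1)) :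
    ∀ m : ℕ, 1 ≤ m → |(ρ m : ℤ) - (ρ (m - 1) : ℤ)| ≤ 1 := by
  intro m
  induction m using Nat.strong_induction_on with
  | _ m ih =>
    intro hm
    rcases lt_or_ge m 5 with h | h
    · interval_cases m
      · rw [abs_le]; simp [hρ0, hρ1]
      · rw [abs_le]; simp [hρ1, hρ2]
      · rw [abs_le]; simp [hρ2, hρ3]
      · have h4 := hρ4 1 le_rfl
        rw [abs_le]; norm_num at h4 ⊢; rw [h4, hρ1, hρ3]; omega
    · obtain ⟨q, r, hr, rfl⟩ : ∃ q r, r < 4 ∧ m = 4 * q + r :=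
        ⟨m / 4, m % 4, by omega, by omega⟩
      interval_cases r
      · simp only [Nat.add_zero] at *
        have hq : 2 ≤ q := by omega
        have h1 : ρ (4 * q) = 2 * ρ q + 1 := hρ4 q (by omega)
        have h2 : 4 * q - 1 = 4 * (q - 1) + 3 := by omega
        have h3 : ρ (4 * (q - 1) + 3) = 2 * ρ (q - 1 + 1) := hρ43 (q - 1) (by omega)
        have h4 : q - 1 + 1 = q := by omega
        rw [h2, h3, h4, h1, abs_le]; push_cast; omega
      · have hq : 1 ≤ q := by omega
        have h1 : ρ (4 * q + 1) = 2 * ρ q := hρ41 q hq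
        have h2 : 4 * q + 1 - 1 = 4 * q := by omega
        have h3 : ρ (4 * q) = 2 * ρ q + 1 := hρ4 q hq
        rw [h1, h2, h3, abs_le]; push_cast; omega
      · have hq : 1 ≤ q := by omega
        have h1 : ρ (4 * q + 2) = ρ q + ρ (q + 1) := hρ42 q hq
        have h2 : 4 * q + 2 - 1 = 4 * q + 1 := by omega
        have h3 : ρ (4 * q + 1) = 2 * ρ q := hρ41 q hq
        have hih := ih (q + 1) (by omega) (by omega)
        have h4 : q + 1 - 1 = q := by omega
        rw [h4] at hih
        rw [h1, h2, h3, abs_le] at *; push_cast at *; omega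
      · have hq : 1 ≤ q := by omega
        have h1 : ρ (4 * q + 3) = 2 * ρ (q + 1) := hρ43 q hq
        have h2 : 4 * q + 3 - 1 = 4 * q + 2 := by omega
        have h3 : ρ (4 * q + 2) = ρ q + ρ (q + 1) := hρ42 q hq
        have hih := ih (q + 1) (by omega) (by omega)
        have h4 : q + 1 - 1 = q := by omega
        rw [h4] at hih
        rw [h1, h2, h3, abs_le] at *; push_cast at *; omega

/-- If the `n`-th 4-ary digit of `x ∈ (0,1)` equals `1`, then for every `y` in the 4-adic
interval `I_{n−1}(x)` containing `x`, `|f_n(x) − f_n(y)| ≤ 2^{−n+1}`. -/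
theorem abs_fPartial_sub_fPartial_le
    (ρ : ℕ → ℕ)
    (hρ0 : ρ 0 = 1) (hρ1 : ρ 1 = 2) (hρ2 : ρ 2 = 3) (hρ3 : ρ 3 = 4)
    (hρ4 : ∀ n : ℕ, 1 ≤ n → ρ (4 * n) = 2 * ρ n + 1)
    (hρ41 : ∀ n : ℕ, 1 ≤ n → ρ (4 * n + 1) = 2 * ρ n)
    (hρ42 : ∀ n : ℕ, 1 ≤ n → ρ (4 * n + 2) = ρ n + ρ (n + 1))
    (hρ43 : ∀ n : ℕ, 1 ≤ n → ρ (4 * n + 3) = 2 * ρ (n + 1))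
    (x : ℝ) (hx0 : 0 < x) (hx1 : x < 1) (n : ℕ) (hn : 1 ≤ n)
    (hdigit : fourAryDigit x n = 1)
    (y : ℝ)
    (hy1 : (⌊(4 : ℝ) ^ (n - 1) * x⌋₊ : ℝ) / 4 ^ (n - 1) ≤ y)
    (hy2 : y < ((⌊(4 : ℝ) ^ (n - 1) * x⌋₊ : ℝ) + 1) / 4 ^ (n - 1)) :
    |fPartial ρ x n - fPartial ρ y n| ≤ (2 : ℝ) ^ ((1 : ℤ) - n) := by
  obtain ⟨m, rfl⟩ : ∃ m, n = m + 1 := ⟨n - 1, by omega⟩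
  simp only [Nat.add_sub_cancel] at hy1 hy2
  have hpm : (0 : ℝ) < 4 ^ m := by positivity
  have hx0' : 0 ≤ x := hx0.le
  have hy0 : 0 ≤ y := le_trans (by positivity) hy1
  -- Nat floors agree at every level k ≤ m
  have hflm : ⌊(4 : ℝ) ^ m * y⌋₊ = ⌊(4 : ℝ) ^ m * x⌋₊ := by
    rw [Nat.floor_eq_iff (by positivity)]
    constructor
    · calc (⌊(4:ℝ)^m * x⌋₊ : ℝ) = (⌊(4:ℝ)^m * x⌋₊ : ℝ) / 4 ^ m * 4 ^ m := by
            field_simp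
      _ ≤ y * 4 ^ m := by gcongr
      _ = 4 ^ m * y := by ring
    · calc (4:ℝ)^m * y < 4 ^ m * (((⌊(4:ℝ)^m * x⌋₊ : ℝ) + 1) / 4 ^ m) := by gcongr
      _ = (⌊(4:ℝ)^m * x⌋₊ : ℝ) + 1 := by field_simp
  have hfl : ∀ k ≤ m, ⌊(4 : ℝ) ^ k * y⌋₊ = ⌊(4 : ℝ) ^ k * x⌋₊ := by
    intro k hk
    have key : ∀ t : ℝ, (4 : ℝ) ^ k * t = (4 : ℝ) ^ m * t / ((4 ^ (m - k) : ℕ) : ℝ) := by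
      intro t
      have : (4 : ℝ) ^ k * (4 : ℝ) ^ (m - k) = 4 ^ m := by
        rw [← pow_add]; congr 1; omega
      have h0 : ((4 ^ (m - k) : ℕ) : ℝ) = (4 : ℝ) ^ (m - k) := by push_cast; ring
      rw [h0, eq_div_iff (by positivity)]
      linear_combination t * this
    rw [key y, key x, Nat.floor_div_natCast, Nat.floor_div_natCast, hflm]
  have hflZ : ∀ k ≤ m, ⌊(4 : ℝ) ^ k * y⌋ = ⌊(4 : ℝ) ^ k * x⌋ := by
    intro k hk
    rw [← Int.natCast_floor_eq_floor (by positivity),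
        ← Int.natCast_floor_eq_floor (by positivity : (0:ℝ) ≤ (4:ℝ)^k * x), hfl k hk]
  -- terms for j ≤ m agree
  have hterm : ∀ j ∈ Finset.Icc 1 m,
      |(fourAryDigit x j : ℝ) - 1| * ajCoeff ρ x j / 2 ^ j
        = |(fourAryDigit y j : ℝ) - 1| * ajCoeff ρ y j / 2 ^ j := by
    intro j hj
    simp only [Finset.mem_Icc] at hj
    have hdig : fourAryDigit y j = fourAryDigit x j := by
      unfold fourAryDigit
      rw [hflZ j hj.2, hflZ (j - 1) (by omega)]
    have hcond : ((4 : ℝ) ^ j * y < 1) ↔ ((4 : ℝ) ^ j * x < 1) := by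
      constructor <;> intro hc
      · by_contra hcx
        have h1 : (1:ℤ) ≤ ⌊(4:ℝ)^j * x⌋ := Int.le_floor.mpr (by push_cast; linarith)
        have h2 : ⌊(4:ℝ)^j * y⌋ < 1 := Int.floor_lt.mpr (by push_cast; linarith)
        rw [hflZ j hj.2] at h2; omega
      · by_contra hcy
        have h1 : (1:ℤ) ≤ ⌊(4:ℝ)^j * y⌋ := Int.le_floor.mpr (by push_cast; linarith)
        have h2 : ⌊(4:ℝ)^j * x⌋ < 1 := Int.floor_lt.mpr (by push_cast; linarith)
        rw [hflZ j hj.2] at h1; omega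
    have haj : ajCoeff ρ y j = ajCoeff ρ x j := by
      unfold ajCoeff
      rw [hfl j hj.2]
      by_cases hc : (4 : ℝ) ^ j * x < 1
      · rw [if_pos hc, if_pos (hcond.mpr hc)]
      · rw [if_neg hc, if_neg (fun hcy => hc (hcond.mp hcy))]
    rw [hdig, haj]
  -- split the sums
  have hsplit : ∀ t : ℝ, fPartial ρ t (m + 1) =
      (∑ j ∈ Finset.Icc 1 m, |(fourAryDigit t j : ℝ) - 1| * ajCoeff ρ t j / 2 ^ j)
        + |(fourAryDigit t (m + 1) : ℝ) - 1| * ajCoeff ρ t (m + 1) / 2 ^ (m + 1) := by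
    intro t
    unfold fPartial
    rw [← Finset.sum_Icc_succ_top (by omega : 1 ≤ m + 1)]
  have hxzero : |(fourAryDigit x (m + 1) : ℝ) - 1| = 0 := by
    rw [hdigit]; norm_num
  -- bound on the n-th digit of y
  have hdigy : |(fourAryDigit y (m + 1) : ℝ) - 1| ≤ 2 := by
    have h4 : (4 : ℝ) ^ (m + 1) * y = 4 * ((4 : ℝ) ^ m * y) := by ring
    have hlow : 4 * ⌊(4:ℝ)^m * y⌋ ≤ ⌊(4:ℝ)^(m+1) * y⌋ := by
      rw [h4]
      apply Int.le_floor.mpr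
      push_cast
      have := Int.floor_le ((4:ℝ)^m * y)
      linarith
    have hhigh : ⌊(4:ℝ)^(m+1) * y⌋ < 4 * ⌊(4:ℝ)^m * y⌋ + 4 := by
      rw [h4]
      apply Int.floor_lt.mpr
      push_cast
      have := Int.lt_floor_add_one ((4:ℝ)^m * y)
      linarith
    have hZ : |⌊(4:ℝ)^(m+1) * y⌋ - 4 * ⌊(4:ℝ)^m * y⌋ - 1| ≤ 2 := by
      rw [abs_le]; omega
    unfold fourAryDigit
    simp only [Nat.add_sub_cancel]
    calc |((⌊(4:ℝ)^(m+1) * y⌋ - 4 * ⌊(4:ℝ)^m * y⌋ : ℤ) : ℝ) - 1|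
        = |((⌊(4:ℝ)^(m+1) * y⌋ - 4 * ⌊(4:ℝ)^m * y⌋ - 1 : ℤ) : ℝ)| := by push_cast; ring_nf
      _ = ((|⌊(4:ℝ)^(m+1) * y⌋ - 4 * ⌊(4:ℝ)^m * y⌋ - 1| : ℤ) : ℝ) := by rw [Int.cast_abs]
      _ ≤ 2 := by exact_mod_cast hZ
  -- bound on the coefficient
  have haybd : |ajCoeff ρ y (m + 1)| ≤ 1 := by
    unfold ajCoeff
    by_cases hc : (4 : ℝ) ^ (m + 1) * y < 1
    · rw [if_pos hc]; norm_num
    · rw [if_neg hc]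
      push_neg at hc
      have h1 : 1 ≤ ⌊(4:ℝ)^(m+1) * y⌋₊ := Nat.le_floor (by push_cast; linarith)
      have := rho_diff_le ρ hρ0 hρ1 hρ2 hρ3 hρ4 hρ41 hρ42 hρ43 ⌊(4:ℝ)^(m+1) * y⌋₊ h1
      rw [abs_le] at this ⊢
      constructor
      · exact_mod_cast this.1
      · exact_mod_cast this.2
  -- conclude
  rw [hsplit x, hsplit y, Finset.sum_congr rfl hterm, hxzero]
  have hrhs : (2 : ℝ) ^ ((1 : ℤ) - (m + 1 : ℕ)) = 2 / 2 ^ (m + 1) := by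
    have : ((1 : ℤ) - (m + 1 : ℕ)) = 1 - ((m+1 : ℕ) : ℤ) := by push_cast; ring
    rw [this, zpow_sub₀ (by norm_num), zpow_one, zpow_natCast]
  rw [hrhs]
  have hbd : |(|(fourAryDigit y (m + 1) : ℝ) - 1| * ajCoeff ρ y (m + 1) / 2 ^ (m + 1))|
      ≤ 2 / 2 ^ (m + 1) := by
    have hp2 : (0:ℝ) < 2 ^ (m + 1) := by positivity
    rw [abs_div, abs_mul, abs_abs, abs_of_pos hp2]
    gcongr
    exact le_trans (mul_le_mul hdigy haybd (abs_nonneg _) (by norm_num)) (by norm_num)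
  have heq : (∑ j ∈ Finset.Icc 1 m, |(fourAryDigit y j : ℝ) - 1| * ajCoeff ρ y j / 2 ^ j) +
        0 * ajCoeff ρ x (m + 1) / 2 ^ (m + 1) -
        ((∑ j ∈ Finset.Icc 1 m, |(fourAryDigit y j : ℝ) - 1| * ajCoeff ρ y j / 2 ^ j) +
          |(fourAryDigit y (m + 1) : ℝ) - 1| * ajCoeff ρ y (m + 1) / 2 ^ (m + 1)) =
        -(|(fourAryDigit y (m + 1) : ℝ) - 1| * ajCoeff ρ y (m + 1) / 2 ^ (m + 1)) := by
    ring
  rw [heq, abs_neg]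
  exact hbd
end

section
/- For every integer n ≥ 1, every integer k with 0 ≤ k ≤ 4^n − 1, and every i ∈ {0,1,2,3}, the rectangle F_{n+1,4k+i} is contained in F_{n,k}; consequently F_{n+1} := ∪_{k=0}^{4^{n+1}−1} F_{n+1,k} ⊆ F_n := ∪_{k=0}^{4^n−1} F_{n,k}. -/
/-- The rectangle `F_{n,k} = [k/4^n, (k+1)/4^n) × [f_n(k/4^n) − 2^{1−n}, f_n(k/4^n) + 2^{1−n}]`. -/
noncomputable def Frect (ρ : ℕ → ℕ) (n k : ℕ) : Set (ℝ × ℝ) :=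
  Set.Ico ((k : ℝ) / 4 ^ n) (((k : ℝ) + 1) / 4 ^ n) ×ˢ
    Set.Icc (fPartial ρ ((k : ℝ) / 4 ^ n) n - (2 : ℝ) ^ ((1 : ℤ) - n))
      (fPartial ρ ((k : ℝ) / 4 ^ n) n + (2 : ℝ) ^ ((1 : ℤ) - n))

private lemma natFloor_aux (m N j : ℕ) (hj : j ≤ N) :
    ⌊(4:ℝ)^j * ((m:ℝ) / 4^N)⌋₊ = m / 4^(N-j) := by
  have h4 : (4:ℝ)^N = 4^j * 4^(N-j) := by rw [← pow_add]; congr 1; omega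
  have he : (4:ℝ)^j * ((m:ℝ)/4^N) = (m:ℝ) / 4^(N-j) := by
    rw [h4]; have : (4:ℝ)^j ≠ 0 := by positivity
    field_simp
  rw [he, show ((4:ℝ)^(N-j)) = ((4^(N-j):ℕ):ℝ) by push_cast; ring]
  exact Nat.floor_div_eq_div _ _

private lemma intFloor_aux (m N j : ℕ) (hj : j ≤ N) :
    ⌊(4:ℝ)^j * ((m:ℝ) / 4^N)⌋ = (m / 4^(N-j) : ℕ) := by
  rw [← natFloor_aux m N j hj]
  exact (Int.natCast_floor_eq_floor (by positivity)).symm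

private lemma rho_step_s8 (ρ : ℕ → ℕ)
    (hρ0 : ρ 0 = 1) (hρ1 : ρ 1 = 2) (hρ2 : ρ 2 = 3) (hρ3 : ρ 3 = 4)
    (hρ4 : ∀ n : ℕ, 1 ≤ n → ρ (4 * n) = 2 * ρ n + 1)
    (hρ41 : ∀ n : ℕ, 1 ≤ n → ρ (4 * n + 1) = 2 * ρ n)
    (hρ42 : ∀ n : ℕ, 1 ≤ n → ρ (4 * n + 2) = ρ n + ρ (n + 1))
    (hρ43 : ∀ n : ℕ, 1 ≤ n → ρ (4 * n + 3) = 2 * ρ (n + 1)) :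
    ∀ m : ℕ, 1 ≤ m → ρ m = ρ (m - 1) + 1 ∨ ρ (m - 1) = ρ m + 1 := by
  intro m
  induction m using Nat.strong_induction_on with
  | _ m ih =>
    intro hm
    match m, hm with
    | 1, _ => left; simp [hρ0, hρ1]
    | 2, _ => left; simp [hρ1, hρ2]
    | 3, _ => left; simp [hρ2, hρ3]
    | 4, _ => left; have h := hρ4 1 le_rfl; simp [h, hρ1, hρ3]
    | (m+5), _ =>
      obtain ⟨q, r, hr, hqr⟩ : ∃ q r, r < 4 ∧ m + 5 = 4*q + r :=
        ⟨(m+5)/4, (m+5)%4, Nat.mod_lt _ (by norm_num), (Nat.div_add_mod (m+5) 4).symm⟩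
      have hq1 : 1 ≤ q := by omega
      interval_cases r
      · have h1 : ρ (m+5) = 2 * ρ q + 1 := by rw [hqr]; exact hρ4 q hq1
        have h2 : m + 5 - 1 = 4*(q-1)+3 := by omega
        have h3 : ρ (m+5-1) = 2 * ρ ((q-1)+1) := by rw [h2]; exact hρ43 (q-1) (by omega)
        rw [show (q-1)+1 = q by omega] at h3
        left; omega
      · have h1 : ρ (m+5) = 2 * ρ q := by rw [hqr]; exact hρ41 q hq1
        have h2 : ρ (m+5-1) = 2 * ρ q + 1 := by rw [show m+5-1 = 4*q by omega]; exact hρ4 q hq1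
        right; omega
      · have h1 : ρ (m+5) = ρ q + ρ (q+1) := by rw [hqr]; exact hρ42 q hq1
        have h2 : ρ (m+5-1) = 2 * ρ q := by rw [show m+5-1 = 4*q+1 by omega]; exact hρ41 q hq1
        have h3 := ih (q+1) (by omega) (by omega)
        simp only [Nat.add_sub_cancel] at h3
        omega
      · have h1 : ρ (m+5) = 2 * ρ (q+1) := by rw [hqr]; exact hρ43 q hq1
        have h2 : ρ (m+5-1) = ρ q + ρ (q+1) := by rw [show m+5-1 = 4*q+2 by omega]; exact hρ42 q hq1
        have h3 := ih (q+1) (by omega) (by omega)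
        simp only [Nat.add_sub_cancel] at h3
        omega

private lemma ajCoeff_abs_le (ρ : ℕ → ℕ)
    (hstep : ∀ m : ℕ, 1 ≤ m → ρ m = ρ (m - 1) + 1 ∨ ρ (m - 1) = ρ m + 1)
    (x : ℝ) (j : ℕ) : |ajCoeff ρ x j| ≤ 1 := by
  unfold ajCoeff
  split
  · simp
  · rename_i h
    push_neg at h
    have h1 : 1 ≤ ⌊(4:ℝ)^j * x⌋₊ := Nat.le_floor (by exact_mod_cast h)
    rcases hstep _ h1 with h2 | h2
    · have : (ρ ⌊(4:ℝ)^j * x⌋₊ : ℝ) - (ρ (⌊(4:ℝ)^j * x⌋₊ - 1) : ℝ) = 1 := by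
        rw [h2]; push_cast; ring
      rw [this]; simp
    · have : (ρ ⌊(4:ℝ)^j * x⌋₊ : ℝ) - (ρ (⌊(4:ℝ)^j * x⌋₊ - 1) : ℝ) = -1 := by
        rw [h2]; push_cast; ring
      rw [this]; simp

private lemma ajCoeff_congr (ρ : ℕ → ℕ) (x y : ℝ) (j : ℕ)
    (hx : 0 ≤ (4:ℝ)^j * x) (hy : 0 ≤ (4:ℝ)^j * y)
    (h : ⌊(4:ℝ)^j * x⌋₊ = ⌊(4:ℝ)^j * y⌋₊) : ajCoeff ρ x j = ajCoeff ρ y j := by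
  unfold ajCoeff
  have hc : ((4:ℝ)^j * x < 1) ↔ ((4:ℝ)^j * y < 1) := by
    rw [show (1:ℝ) = ((1:ℕ):ℝ) by norm_cast, ← Nat.floor_lt hx, ← Nat.floor_lt hy, h]
  simp only [h, hc]

private lemma div_eq_aux (k i n j : ℕ) (hi : i ≤ 3) (hj : j ≤ n) :
    (4*k+i) / 4^(n+1-j) = k / 4^(n-j) := by
  rw [show n+1-j = (n-j)+1 by omega, pow_succ']
  rw [← Nat.div_div_eq_div_mul, show (4*k+i)/4 = k from by omega]

private lemma fPartial_step (ρ : ℕ → ℕ) (n k i : ℕ) (hi : i ≤ 3) :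
    fPartial ρ (((4*k+i : ℕ):ℝ) / 4^(n+1)) (n+1)
      = fPartial ρ ((k:ℝ)/4^n) n
        + |(i:ℝ) - 1| * ajCoeff ρ (((4*k+i:ℕ):ℝ)/4^(n+1)) (n+1) / 2^(n+1) := by
  have hfl : ∀ j ≤ n, ⌊(4:ℝ)^j * (((4*k+i:ℕ):ℝ) / 4^(n+1))⌋ = ⌊(4:ℝ)^j * ((k:ℝ) / 4^n)⌋ := by
    intro j hj
    rw [intFloor_aux (4*k+i) (n+1) j (by omega), intFloor_aux k n j hj,
      div_eq_aux k i n j hi hj]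
  have hflN : ∀ j ≤ n, ⌊(4:ℝ)^j * (((4*k+i:ℕ):ℝ) / 4^(n+1))⌋₊ = ⌊(4:ℝ)^j * ((k:ℝ) / 4^n)⌋₊ := by
    intro j hj
    rw [natFloor_aux (4*k+i) (n+1) j (by omega), natFloor_aux k n j hj,
      div_eq_aux k i n j hi hj]
  unfold fPartial
  rw [Finset.sum_Icc_succ_top (by omega : 1 ≤ n+1)]
  congr 1
  · apply Finset.sum_congr rfl
    intro j hj
    rw [Finset.mem_Icc] at hj
    have hd : fourAryDigit (((4*k+i:ℕ):ℝ) / 4^(n+1)) j = fourAryDigit ((k:ℝ)/4^n) j := by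
      unfold fourAryDigit
      rw [hfl j hj.2, hfl (j-1) (by omega)]
    have ha : ajCoeff ρ (((4*k+i:ℕ):ℝ) / 4^(n+1)) j = ajCoeff ρ ((k:ℝ)/4^n) j :=
      ajCoeff_congr ρ _ _ j (by positivity) (by positivity) (hflN j hj.2)
    rw [hd, ha]
  · have hd : fourAryDigit (((4*k+i:ℕ):ℝ) / 4^(n+1)) (n+1) = (i : ℤ) := by
      unfold fourAryDigit
      rw [show (n+1) - 1 = n by omega,
        intFloor_aux (4*k+i) (n+1) (n+1) le_rfl, hfl n le_rfl,
        intFloor_aux k n n le_rfl]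
      simp
    rw [hd]
    norm_cast

/-- For `n ≥ 1`, `0 ≤ k ≤ 4^n − 1` and `i ∈ {0,1,2,3}`, `F_{n+1,4k+i} ⊆ F_{n,k}`;
consequently `F_{n+1} ⊆ F_n`. -/
theorem Frect_nested
    (ρ : ℕ → ℕ)
    (hρ0 : ρ 0 = 1) (hρ1 : ρ 1 = 2) (hρ2 : ρ 2 = 3) (hρ3 : ρ 3 = 4)
    (hρ4 : ∀ n : ℕ, 1 ≤ n → ρ (4 * n) = 2 * ρ n + 1)
    (hρ41 : ∀ n : ℕ, 1 ≤ n → ρ (4 * n + 1) = 2 * ρ n)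
    (hρ42 : ∀ n : ℕ, 1 ≤ n → ρ (4 * n + 2) = ρ n + ρ (n + 1))
    (hρ43 : ∀ n : ℕ, 1 ≤ n → ρ (4 * n + 3) = 2 * ρ (n + 1)) :
    ∀ n : ℕ, 1 ≤ n →
      (∀ k : ℕ, k ≤ 4 ^ n - 1 → ∀ i : ℕ, i ≤ 3 →
        Frect ρ (n + 1) (4 * k + i) ⊆ Frect ρ n k) ∧
      (⋃ k ∈ Finset.range (4 ^ (n + 1)), Frect ρ (n + 1) k) ⊆
        ⋃ k ∈ Finset.range (4 ^ n), Frect ρ n k := by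
  have hstep := rho_step_s8 ρ hρ0 hρ1 hρ2 hρ3 hρ4 hρ41 hρ42 hρ43
  intro n hn
  have main : ∀ k : ℕ, k ≤ 4 ^ n - 1 → ∀ i : ℕ, i ≤ 3 →
      Frect ρ (n + 1) (4 * k + i) ⊆ Frect ρ n k := by
    intro k hk i hi
    rintro ⟨p, q⟩ ⟨hp, hq⟩
    simp only [Set.mem_Ico] at hp
    simp only [Set.mem_Icc] at hq
    have h4n : (0:ℝ) < (4:ℝ)^n := by positivity
    have h4n1 : (0:ℝ) < (4:ℝ)^(n+1) := by positivity
    have hi3 : (i:ℝ) ≤ 3 := by exact_mod_cast hi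
    have hi0 : (0:ℝ) ≤ (i:ℝ) := Nat.cast_nonneg i
    constructor
    · simp only [Set.mem_Ico]
      constructor
      · refine le_trans ?_ hp.1
        rw [div_le_div_iff₀ h4n h4n1, pow_succ]
        push_cast
        nlinarith
      · refine lt_of_lt_of_le hp.2 ?_
        rw [div_le_div_iff₀ h4n1 h4n, pow_succ]
        push_cast
        nlinarith
    · simp only [Set.mem_Icc]
      have hF := fPartial_step ρ n k i hi
      have haj := ajCoeff_abs_le ρ hstep (((4*k+i:ℕ):ℝ)/4^(n+1)) (n+1)
      have hiabs : |(i:ℝ) - 1| ≤ 2 := by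
        rw [abs_le]; constructor <;> linarith
      have hterm : |fPartial ρ (((4*k+i:ℕ):ℝ)/4^(n+1)) (n+1) - fPartial ρ ((k:ℝ)/4^n) n|
          ≤ 1/2^n := by
        have hT : fPartial ρ (((4*k+i:ℕ):ℝ)/4^(n+1)) (n+1) - fPartial ρ ((k:ℝ)/4^n) n
            = |(i:ℝ) - 1| * ajCoeff ρ (((4*k+i:ℕ):ℝ)/4^(n+1)) (n+1) / 2^(n+1) := by
          rw [hF]; ring
        rw [hT]
        calc |(|(i:ℝ) - 1| * ajCoeff ρ (((4*k+i:ℕ):ℝ)/4^(n+1)) (n+1) / 2^(n+1))|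
            = |(i:ℝ) - 1| * |ajCoeff ρ (((4*k+i:ℕ):ℝ)/4^(n+1)) (n+1)| / 2^(n+1) := by
              rw [abs_div, abs_mul, abs_abs,
                abs_of_pos (show (0:ℝ) < (2:ℝ)^(n+1) by positivity)]
          _ ≤ 2 * 1 / 2^(n+1) := by gcongr
          _ = 1/2^n := by rw [pow_succ]; ring
      have hexp1 : (2:ℝ)^((1:ℤ) - ((n+1 : ℕ) : ℤ)) = 1/2^n := by
        rw [show (1:ℤ) - ((n+1:ℕ):ℤ) = -(n:ℤ) by push_cast; ring, zpow_neg, zpow_natCast]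
        ring
      have hexp2 : (2:ℝ)^((1:ℤ) - (n : ℤ)) = 2/2^n := by
        rw [zpow_sub₀ (by norm_num : (2:ℝ) ≠ 0), zpow_one, zpow_natCast]
      rw [hexp1] at hq
      rw [hexp2]
      have habs := abs_le.mp hterm
      have h3 : (2:ℝ)/2^n = 1/2^n + 1/2^n := by ring
      constructor
      · linarith [hq.1, habs.1]
      · linarith [hq.2, habs.2]
  refine ⟨main, ?_⟩
  intro p hp
  simp only [Set.mem_iUnion] at hp ⊢
  obtain ⟨k', hk', hmem⟩ := hp
  rw [Finset.mem_range] at hk'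
  have h4 : 4^(n+1) = 4 * 4^n := by rw [pow_succ]; ring
  refine ⟨k'/4, ?_, ?_⟩
  · rw [Finset.mem_range]; omega
  · have hk'eq : k' = 4 * (k'/4) + k' % 4 := by omega
    have := main (k'/4) (by omega) (k' % 4) (by omega)
    rw [← hk'eq] at this
    exact this hmem
end

section
/- Let s be quasi-linear in base b with constant C > 0 and exponents α > β = 0, and let λ_s be its (continuous) limit function. Assume there exist a strictly increasing sequence (t_n)_{n≥1} of positive integers with bounded gaps (there is M with t_{n+1} − t_n ≤ M for all n ≥ 1) and a constant c > 0 such that a_s(t_{n+1} b^{−k}) − a_s(t_n b^{−k}) > c·b^{−αk} for every integer k ≥ 1 and every n with 1 ≤ t_n < t_{n+1} ≤ b^k − 1. Then for all real u, v with 0 < u < v ≤ 1, the Hausdorff dimension of {(x, λ_s(x)) : u < x < v} ⊆ ℝ² equals 2 − α. -/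
open Filter
open scoped ENNReal NNReal

/-- `a_s(x) := x^α·λ_s(x) − s(⌊x⌋)`. -/
noncomputable def aS (s : ℕ → ℤ) (α : ℝ) (Λ : ℝ → ℝ) (x : ℝ) : ℝ :=
  x ^ α * Λ x - (s ⌊x⌋₊ : ℝ)

/-- Growth bound for quasi-linear sequences. -/
lemma qlin_growth (b : ℕ) (hb : 2 ≤ b) (s : ℕ → ℤ) (α C : ℝ) (hα : 0 < α) (hC : 0 < C)
    (hql : ∀ n i : ℕ, i ≤ b - 1 → |(s (b * n + i) : ℝ) - (b : ℝ) ^ α * (s n : ℝ)| ≤ C) :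
    ∃ K : ℝ, 0 < K ∧ ∀ m : ℕ, |(s m : ℝ)| ≤ K * (max (m : ℝ) 1) ^ α := by
  have hb1 : (1 : ℝ) < (b : ℝ) := by exact_mod_cast hb.trans_lt' one_lt_two
  have hbα : (1 : ℝ) < (b : ℝ) ^ α := Real.one_lt_rpow_iff_of_pos (by linarith) |>.2 (Or.inl ⟨hb1, hα⟩)
  set D : ℝ := C / ((b : ℝ) ^ α - 1) with hD_def
  have hD : 0 < D := div_pos hC (by linarith)
  have hCD : C = ((b : ℝ) ^ α - 1) * D := by rw [hD_def, mul_div_cancel₀ _ (by linarith : (b:ℝ)^α - 1 ≠ 0)]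
  have hs0 : |(s 0 : ℝ)| ≤ D := by
    have h := hql 0 0 (Nat.zero_le _)
    simp only [Nat.mul_zero, Nat.add_zero] at h
    have : |(s 0 : ℝ)| * ((b : ℝ) ^ α - 1) ≤ C := by
      calc |(s 0 : ℝ)| * ((b : ℝ) ^ α - 1) = |(s 0 : ℝ) - (b:ℝ)^α * (s 0 : ℝ)| := by
            rw [abs_sub_comm, show (b:ℝ)^α * (s 0:ℝ) - s 0 = (s 0 : ℝ) * ((b:ℝ)^α - 1) by ring,
              abs_mul, abs_of_pos (by linarith : (0:ℝ) < (b:ℝ)^α - 1)]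
        _ ≤ C := h
    rw [hD_def, le_div_iff₀ (by linarith)]
    exact this
  set K : ℝ := (b : ℝ) ^ α * D + C + D with hK_def
  have hK : 0 < K := by positivity
  have main : ∀ m : ℕ, 1 ≤ m → |(s m : ℝ)| ≤ K * (m : ℝ) ^ α - D := by
    intro m
    induction m using Nat.strong_induction_on with
    | _ m ih =>
      intro hm1
      have hm1' : (1 : ℝ) ≤ (m : ℝ) := by exact_mod_cast hm1
      have hmα : (1 : ℝ) ≤ (m : ℝ) ^ α := Real.one_le_rpow hm1' hα.le
      by_cases hmb : m < b
      · -- base case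
        have h := hql 0 m (Nat.le_sub_one_of_lt hmb)
        simp only [Nat.mul_zero, Nat.zero_add] at h
        have : |(s m : ℝ)| ≤ C + (b:ℝ)^α * |(s 0 : ℝ)| := by
          calc |(s m : ℝ)| ≤ |(s m : ℝ) - (b:ℝ)^α * (s 0:ℝ)| + |(b:ℝ)^α * (s 0:ℝ)| := by
                have := abs_add_le ((s m : ℝ) - (b:ℝ)^α * (s 0:ℝ)) ((b:ℝ)^α * (s 0:ℝ))
                simpa using this
            _ ≤ C + (b:ℝ)^α * |(s 0 : ℝ)| := by
                rw [abs_mul, abs_of_pos (by linarith : (0:ℝ) < (b:ℝ)^α)]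
                exact add_le_add h le_rfl
        have h2 : C + (b:ℝ)^α * |(s 0:ℝ)| ≤ C + (b:ℝ)^α * D := by nlinarith
        calc |(s m : ℝ)| ≤ C + (b:ℝ)^α * D := this.trans h2
          _ = K * 1 - D := by rw [hK_def]; ring
          _ ≤ K * (m:ℝ)^α - D := by nlinarith
      · push_neg at hmb
        set q := m / b with hq_def
        set r := m % b with hr_def
        have hqr : b * q + r = m := Nat.div_add_mod m b
        have hrb : r ≤ b - 1 := Nat.le_sub_one_of_lt (Nat.mod_lt _ (by omega))
        have hq1 : 1 ≤ q := (Nat.one_le_div_iff (by omega)).2 hmb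
        have hqm : q < m := Nat.div_lt_self (by omega) (by omega)
        have ihq := ih q hqm hq1
        have h := hql q r hrb
        rw [hqr] at h
        have hbq : ((b * q : ℕ) : ℝ) ≤ (m : ℝ) := by exact_mod_cast Nat.le.intro hqr
        have hbq' : ((b * q : ℕ) : ℝ) ^ α ≤ (m : ℝ) ^ α :=
          Real.rpow_le_rpow (by positivity) hbq hα.le
        have hmul : (b : ℝ) ^ α * (q : ℝ) ^ α = ((b * q : ℕ) : ℝ) ^ α := by
          rw [Nat.cast_mul, ← Real.mul_rpow (by positivity) (by positivity)]
        calc |(s m : ℝ)| ≤ |(s m : ℝ) - (b:ℝ)^α * (s q:ℝ)| + |(b:ℝ)^α * (s q:ℝ)| := by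
              have := abs_add_le ((s m : ℝ) - (b:ℝ)^α * (s q:ℝ)) ((b:ℝ)^α * (s q:ℝ))
              simpa using this
          _ ≤ C + (b:ℝ)^α * (K * (q:ℝ)^α - D) := by
              rw [abs_mul, abs_of_pos (by linarith : (0:ℝ) < (b:ℝ)^α)]
              exact add_le_add h (mul_le_mul_of_nonneg_left ihq (by linarith))
          _ = K * ((b:ℝ)^α * (q:ℝ)^α) - D := by rw [hCD]; ring
          _ ≤ K * (m:ℝ)^α - D := by rw [hmul]; nlinarith
  refine ⟨K, hK, fun m => ?_⟩
  rcases Nat.eq_zero_or_pos m with rfl | hm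
  · simpa using hs0.trans (by rw [hK_def]; nlinarith)
  · have hmax : max (m : ℝ) 1 = (m : ℝ) := max_eq_left (by exact_mod_cast hm)
    rw [hmax]
    exact (main m hm).trans (by linarith)

lemma lambda_bound (b : ℕ) (hb : 2 ≤ b) (s : ℕ → ℤ) (α : ℝ) (hα : 0 < α) (K : ℝ) (hK0 : 0 ≤ K)
    (hK : ∀ m : ℕ, |(s m : ℝ)| ≤ K * (max (m : ℝ) 1) ^ α)
    (Λ : ℝ → ℝ)
    (hΛ : ∀ x : ℝ, 0 < x →
      Tendsto (fun k : ℕ => (s ⌊(b : ℝ) ^ k * x⌋₊ : ℝ) / ((b : ℝ) ^ k * x) ^ α)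
        atTop (nhds (Λ x))) :
    ∀ x : ℝ, 0 < x → |Λ x| ≤ K := by
  intro x hx
  have hb1 : (1 : ℝ) < (b : ℝ) := by exact_mod_cast hb.trans_lt' one_lt_two
  have hbk : Tendsto (fun k : ℕ => (b : ℝ) ^ k * x) atTop atTop :=
    Tendsto.atTop_mul_const hx (tendsto_pow_atTop_atTop_of_one_lt hb1)
  have habs : Tendsto (fun k : ℕ => |(s ⌊(b : ℝ) ^ k * x⌋₊ : ℝ) / ((b : ℝ) ^ k * x) ^ α|)
      atTop (nhds |Λ x|) := (hΛ x hx).abs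
  refine le_of_tendsto habs ?_
  filter_upwards [hbk.eventually_ge_atTop 1] with k hk
  set y : ℝ := (b : ℝ) ^ k * x with hy_def
  have hy1 : (1 : ℝ) ≤ y := hk
  have hy0 : 0 < y := by linarith
  have hfl : max (↑⌊y⌋₊ : ℝ) 1 ≤ y := max_le (Nat.floor_le hy0.le) hy1
  have h1 : |(s ⌊y⌋₊ : ℝ)| ≤ K * y ^ α :=
    (hK ⌊y⌋₊).trans (mul_le_mul_of_nonneg_left
      (Real.rpow_le_rpow (by positivity) hfl hα.le) hK0)
  rw [abs_div, abs_of_pos (Real.rpow_pos_of_pos hy0 α)]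
  rw [div_le_iff₀ (Real.rpow_pos_of_pos hy0 α)]
  exact h1

set_option maxHeartbeats 800000 in
lemma alpha_ge_one (b : ℕ) (hb : 2 ≤ b) (s : ℕ → ℤ) (α : ℝ) (hα : 0 < α)
    (K : ℝ) (hK0 : 0 < K)
    (hK : ∀ m : ℕ, |(s m : ℝ)| ≤ K * (max (m : ℝ) 1) ^ α)
    (Λ : ℝ → ℝ) (hΛbd : ∀ x : ℝ, 0 < x → |Λ x| ≤ K)
    (t : ℕ → ℕ) (ht : ∀ n : ℕ, 1 ≤ n → t n < t (n + 1)) (htpos : 1 ≤ t 1)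
    (M : ℕ) (hM : ∀ n : ℕ, 1 ≤ n → t (n + 1) - t n ≤ M)
    (c : ℝ) (hc : 0 < c)
    (hgap : ∀ k : ℕ, 1 ≤ k → ∀ n : ℕ, 1 ≤ n → 1 ≤ t n → t (n + 1) ≤ b ^ k - 1 →
      c * (b : ℝ) ^ (-(α * (k : ℝ))) <
        aS s α Λ ((t (n + 1) : ℝ) / (b : ℝ) ^ k) - aS s α Λ ((t n : ℝ) / (b : ℝ) ^ k)) :
    1 ≤ α := by
  by_contra hα1
  push_neg at hα1
  have hb1 : (1 : ℝ) < (b : ℝ) := by exact_mod_cast hb.trans_lt' one_lt_two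
  have hb0 : (0 : ℝ) < (b : ℝ) := by linarith
  -- basic facts about t
  have hmono : ∀ n : ℕ, 1 ≤ n → ∀ j : ℕ, t n ≤ t (n + j) := by
    intro n hn j
    induction j with
    | zero => exact le_rfl
    | succ j ih => exact ih.trans (ht (n + j) (by omega)).le
  have ht1 : ∀ n : ℕ, 1 ≤ n → 1 ≤ t n := by
    intro n hn
    have := hmono 1 le_rfl (n - 1)
    rw [show 1 + (n - 1) = n by omega] at this
    omega
  have hub : ∀ n : ℕ, t (n + 1) ≤ t 1 + n * M := by
    intro n
    induction n with
    | zero => simp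
    | succ n ih =>
      have h1 := hM (n + 1) (by omega)
      have h2 := ht (n + 1) (by omega)
      calc t (n + 1 + 1) ≤ t (n + 1) + M := by omega
        _ ≤ t 1 + n * M + M := by omega
        _ = t 1 + (n + 1) * M := by ring
  have hM1 : 1 ≤ M := by
    have h1 := hM 1 le_rfl
    have h2 := ht 1 le_rfl
    omega
  -- bound on aS on (0,1)
  have haS : ∀ x : ℝ, 0 < x → x < 1 → |aS s α Λ x| ≤ 2 * K := by
    intro x hx hx1
    have hfl : ⌊x⌋₊ = 0 := Nat.floor_eq_zero.2 hx1
    have h1 : |x ^ α * Λ x| ≤ K := by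
      rw [abs_mul]
      have hxα : |x ^ α| ≤ 1 := by
        rw [abs_of_pos (Real.rpow_pos_of_pos hx α)]
        exact Real.rpow_le_one hx.le hx1.le hα.le
      have := hΛbd x hx
      nlinarith [abs_nonneg (Λ x), abs_nonneg (x ^ α)]
    have h2 : |(s 0 : ℝ)| ≤ K := by simpa using hK 0
    rw [aS, hfl]
    calc |x ^ α * Λ x - (s 0 : ℝ)| ≤ |x ^ α * Λ x| + |(s 0 : ℝ)| := abs_sub _ _
      _ ≤ 2 * K := by linarith
  -- the main inequality for large k
  have key : ∀ k : ℕ, 1 ≤ k → t 1 + M + 1 ≤ b ^ k →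
      (b : ℝ) ^ k ≤ 4 * K * M / c * (b : ℝ) ^ (α * (k : ℝ)) + ((M : ℝ) + 1 + t 1) := by
    intro k hk hbk
    set N : ℕ := (b ^ k - 1 - t 1) / M with hN_def
    have hNub : ∀ n : ℕ, 1 ≤ n → n ≤ N → t (n + 1) ≤ b ^ k - 1 := by
      intro n hn hnN
      have h1 : t (n + 1) ≤ t 1 + n * M := hub n
      have h2 : n * M ≤ N * M := Nat.mul_le_mul_right _ hnN
      have h3 : N * M ≤ b ^ k - 1 - t 1 := Nat.div_mul_le_self _ _
      omega
    have hN1 : 1 ≤ N := by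
      rw [hN_def]
      rw [Nat.le_div_iff_mul_le (by omega)]
      omega
    set P : ℝ := (b : ℝ) ^ (-(α * (k : ℝ))) with hP_def
    have hP : 0 < P := Real.rpow_pos_of_pos hb0 _
    set f : ℕ → ℝ := fun i => aS s α Λ ((t (i + 1) : ℝ) / (b : ℝ) ^ k) with hf_def
    have hterm : ∀ i ∈ Finset.range N, c * P ≤ f (i + 1) - f i := by
      intro i hi
      rw [Finset.mem_range] at hi
      exact (hgap k hk (i + 1) (by omega) (ht1 (i + 1) (by omega))
        (hNub (i + 1) (by omega) hi)).le
    have hsum : (N : ℝ) * (c * P) ≤ f N - f 0 := by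
      have h1 := Finset.card_nsmul_le_sum (Finset.range N) (fun i => f (i + 1) - f i) (c * P) hterm
      rw [Finset.sum_range_sub f] at h1
      simpa [nsmul_eq_mul] using h1
    have hxr : ∀ n : ℕ, 1 ≤ t n → t n ≤ b ^ k - 1 →
        0 < (t n : ℝ) / (b : ℝ) ^ k ∧ (t n : ℝ) / (b : ℝ) ^ k < 1 := by
      intro n h1 h2
      have hbk0 : (0 : ℝ) < (b : ℝ) ^ k := by positivity
      have htn0 : (0 : ℝ) < (t n : ℝ) := by exact_mod_cast h1
      refine ⟨div_pos htn0 hbk0, ?_⟩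
      rw [div_lt_one hbk0]
      have h3 : (t n : ℝ) ≤ ((b ^ k - 1 : ℕ) : ℝ) := by exact_mod_cast h2
      have h4 : ((b ^ k - 1 : ℕ) : ℝ) = ((b ^ k : ℕ) : ℝ) - 1 := by
        have : 1 ≤ b ^ k := Nat.one_le_pow _ _ (by omega)
        push_cast [this]
        ring
      have h5 : ((b ^ k : ℕ) : ℝ) = (b : ℝ) ^ k := by push_cast; ring
      linarith [h3.trans_eq (h4.trans (by rw [h5]))]
    have hbnd0 : |f 0| ≤ 2 * K := by
      have := hxr 1 htpos (by omega)
      exact haS _ this.1 this.2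
    have hbndN : |f N| ≤ 2 * K := by
      have h1 : 1 ≤ t (N + 1) := ht1 (N + 1) (by omega)
      have := hxr (N + 1) h1 (hNub N hN1 le_rfl)
      exact haS _ this.1 this.2
    have h4K : (N : ℝ) * (c * P) ≤ 4 * K := by
      have : f N - f 0 ≤ |f N| + |f 0| := by
        calc f N - f 0 ≤ |f N - f 0| := le_abs_self _
          _ ≤ |f N| + |f 0| := abs_sub _ _
      linarith
    -- lower bound on N
    set a : ℕ := b ^ k - 1 - t 1 with ha_def
    have haM : M ≤ a := by omega
    have hNlb : (a : ℝ) ≤ (M : ℝ) * N + M := by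
      have hNa : N = a / M := rfl
      have h1 : M * N + a % M = a := by rw [hNa]; exact Nat.div_add_mod a M
      have h2 : a % M < M := Nat.mod_lt _ (by omega)
      have : a ≤ M * N + M := by omega
      exact_mod_cast this
    have hM0 : (0 : ℝ) < M := by exact_mod_cast hM1
    -- combine
    have hNP : (N : ℝ) ≤ 4 * K / (c * P) := by
      rw [le_div_iff₀ (by positivity)]
      exact h4K
    have hPinv : P⁻¹ = (b : ℝ) ^ (α * (k : ℝ)) := by
      rw [hP_def, ← Real.rpow_neg hb0.le, neg_neg]
    have ha : (a : ℝ) ≤ 4 * K * M / c * (b : ℝ) ^ (α * (k : ℝ)) + M := by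
      have h1 : (M : ℝ) * N ≤ M * (4 * K / (c * P)) :=
        mul_le_mul_of_nonneg_left hNP hM0.le
      have h2 : (M : ℝ) * (4 * K / (c * P)) = 4 * K * M / c * P⁻¹ := by
        field_simp
      rw [h2, hPinv] at h1
      linarith
    have hacast : (a : ℝ) = (b : ℝ) ^ k - 1 - t 1 := by
      rw [ha_def]
      have h1 : 1 + t 1 ≤ b ^ k := by omega
      have h5 : ((b ^ k : ℕ) : ℝ) = (b : ℝ) ^ k := by push_cast; ring
      push_cast [show t 1 ≤ b ^ k - 1 by omega, show 1 ≤ b ^ k by omega]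
      ring
    rw [hacast] at ha
    linarith
  -- take the limit
  set ρ : ℝ := (b : ℝ) ^ (α - 1) with hρ_def
  have hρ0 : 0 ≤ ρ := (Real.rpow_pos_of_pos hb0 _).le
  have hρ1 : ρ < 1 := Real.rpow_lt_one_of_one_lt_of_neg hb1 (by linarith)
  have hbinv0 : (0 : ℝ) ≤ (b : ℝ)⁻¹ := by positivity
  have hbinv1 : (b : ℝ)⁻¹ < 1 := by
    rw [inv_lt_one_iff₀]; right; exact hb1
  have hG : Tendsto (fun k : ℕ => 4 * K * M / c * ρ ^ k + ((M : ℝ) + 1 + t 1) * ((b : ℝ)⁻¹) ^ k)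
      atTop (nhds 0) := by
    have h1 := (tendsto_pow_atTop_nhds_zero_of_lt_one hρ0 hρ1).const_mul (4 * K * M / c)
    have h2 := (tendsto_pow_atTop_nhds_zero_of_lt_one hbinv0 hbinv1).const_mul ((M : ℝ) + 1 + t 1)
    have := h1.add h2
    simpa using this
  have hev1 : ∀ᶠ k : ℕ in atTop, t 1 + M + 1 ≤ b ^ k :=
    (tendsto_pow_atTop_atTop_of_one_lt (by omega : 1 < b)).eventually_ge_atTop _
  have hev2 : ∀ᶠ k : ℕ in atTop,
      4 * K * M / c * ρ ^ k + ((M : ℝ) + 1 + t 1) * ((b : ℝ)⁻¹) ^ k < 1 :=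
    hG.eventually (gt_mem_nhds one_pos)
  obtain ⟨k, hk1, hkb', hkG⟩ := ((eventually_ge_atTop 1).and (hev1.and hev2)).exists
  have hkey := key k hk1 hkb'
  -- divide by b^k
  have hbk0 : (0 : ℝ) < (b : ℝ) ^ k := by positivity
  have hsplit : (b : ℝ) ^ (α * (k : ℝ)) = ρ ^ k * (b : ℝ) ^ k := by
    rw [← Real.rpow_natCast ρ k, ← Real.rpow_natCast (b : ℝ) k, hρ_def,
      ← Real.rpow_mul hb0.le, ← Real.rpow_add hb0]
    ring_nf
  rw [hsplit] at hkey
  have hone : ((b : ℝ)⁻¹) ^ k * (b : ℝ) ^ k = 1 := by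
    rw [← mul_pow, inv_mul_cancel₀ hb0.ne', one_pow]
  have h2 : (4 * K * M / c * ρ ^ k + ((M : ℝ) + 1 + t 1) * ((b : ℝ)⁻¹) ^ k) * (b : ℝ) ^ k
      = 4 * K * M / c * (ρ ^ k * (b : ℝ) ^ k) + ((M : ℝ) + 1 + t 1) := by
    linear_combination ((M : ℝ) + 1 + t 1) * hone
  have h3 : 1 * (b : ℝ) ^ k
      ≤ (4 * K * M / c * ρ ^ k + ((M : ℝ) + 1 + t 1) * ((b : ℝ)⁻¹) ^ k) * (b : ℝ) ^ k := by
    rw [one_mul, h2]; exact hkey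
  have : 1 ≤ 4 * K * M / c * ρ ^ k + ((M : ℝ) + 1 + t 1) * ((b : ℝ)⁻¹) ^ k :=
    le_of_mul_le_mul_right h3 hbk0
  linarith

lemma diff_bound (s : ℕ → ℤ) (α K : ℝ) (hα : 0 < α) (hK0 : 0 < K)
    (hK : ∀ m : ℕ, |(s m : ℝ)| ≤ K * (max (m : ℝ) 1) ^ α)
    (hβs : sInf {x : ℝ | 0 ≤ x ∧
        Tendsto (fun n : ℕ => |(s (n + 1) : ℝ) - (s n : ℝ)| / (n : ℝ) ^ x) atTop (nhds 0)} = 0)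
    (ε : ℝ) (hε : 0 < ε) :
    ∃ A : ℝ, 1 ≤ A ∧ ∀ n : ℕ, |(s (n + 1) : ℝ) - (s n : ℝ)| ≤ A * ((n : ℝ) + 1) ^ ε := by
  set Tβ := {x : ℝ | 0 ≤ x ∧
      Tendsto (fun n : ℕ => |(s (n + 1) : ℝ) - (s n : ℝ)| / (n : ℝ) ^ x) atTop (nhds 0)} with hTβ
  have hbdd : BddBelow Tβ := ⟨0, fun x hx => hx.1⟩
  have hne : Tβ.Nonempty := by
    refine ⟨α + 1, by linarith, ?_⟩
    have hbound : ∀ n : ℕ, 1 ≤ n →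
        |(s (n + 1) : ℝ) - (s n : ℝ)| / (n : ℝ) ^ (α + 1) ≤ 2 * 2 ^ α * K / (n : ℝ) := by
      intro n hn
      have hn1 : (1 : ℝ) ≤ (n : ℝ) := by exact_mod_cast hn
      have hn0 : (0 : ℝ) < (n : ℝ) := by linarith
      have h1 : |(s (n + 1) : ℝ)| ≤ K * ((n : ℝ) + 1) ^ α := by
        have := hK (n + 1)
        rwa [show max ((n + 1 : ℕ) : ℝ) 1 = (n : ℝ) + 1 by
          push_cast; exact max_eq_left (by linarith)] at this
      have h2 : |(s n : ℝ)| ≤ K * (n : ℝ) ^ α := by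
        have := hK n
        rwa [max_eq_left hn1] at this
      have h3 : ((n : ℝ) + 1) ^ α ≤ 2 ^ α * (n : ℝ) ^ α := by
        rw [← Real.mul_rpow (by norm_num) hn0.le]
        exact Real.rpow_le_rpow (by linarith) (by linarith) hα.le
      have h4 : (n : ℝ) ^ α ≤ 2 ^ α * (n : ℝ) ^ α := by
        have h2α : (1 : ℝ) ≤ 2 ^ α := Real.one_le_rpow (by norm_num) hα.le
        nlinarith [Real.rpow_pos_of_pos hn0 α]
      have hΔ : |(s (n + 1) : ℝ) - (s n : ℝ)| ≤ 2 * 2 ^ α * K * (n : ℝ) ^ α := by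
        have habs : |(s (n + 1) : ℝ) - (s n : ℝ)| ≤ |(s (n + 1) : ℝ)| + |(s n : ℝ)| := abs_sub _ _
        nlinarith [mul_le_mul_of_nonneg_left h3 hK0.le, mul_le_mul_of_nonneg_left h4 hK0.le]
      rw [div_le_div_iff₀ (Real.rpow_pos_of_pos hn0 _) hn0]
      have h6 : (n : ℝ) ^ (α + 1) = (n : ℝ) ^ α * (n : ℝ) := by
        rw [Real.rpow_add hn0, Real.rpow_one]
      rw [h6]
      nlinarith [Real.rpow_pos_of_pos hn0 α, abs_nonneg ((s (n + 1) : ℝ) - (s n : ℝ))]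
    refine squeeze_zero' (g := fun n : ℕ => 2 * 2 ^ α * K / (n : ℝ)) ?_ ?_ ?_
    · filter_upwards with n
      positivity
    · filter_upwards [eventually_ge_atTop 1] with n hn
      exact hbound n hn
    · exact tendsto_const_div_atTop_nhds_zero_nat _
  have hlt : sInf Tβ < ε := by rw [hβs]; exact hε
  obtain ⟨x, hxT, hxε⟩ := (csInf_lt_iff hbdd hne).1 hlt
  obtain ⟨hx0, hxt⟩ := hxT
  obtain ⟨N, hN⟩ := eventually_atTop.1 (hxt.eventually (gt_mem_nhds one_pos))
  set N' := max N 1 with hN'_def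
  have hlarge : ∀ n : ℕ, N' ≤ n → |(s (n + 1) : ℝ) - (s n : ℝ)| ≤ ((n : ℝ) + 1) ^ ε := by
    intro n hn
    have hn1 : (1 : ℝ) ≤ (n : ℝ) := by
      have : 1 ≤ n := le_trans (le_max_right _ _) hn
      exact_mod_cast this
    have hn0 : (0 : ℝ) < (n : ℝ) := by linarith
    have h1 := hN n (le_trans (le_max_left _ _) hn)
    have h2 : |(s (n + 1) : ℝ) - (s n : ℝ)| ≤ (n : ℝ) ^ x := by
      have := (div_lt_one (Real.rpow_pos_of_pos hn0 x)).1 h1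
      linarith
    calc |(s (n + 1) : ℝ) - (s n : ℝ)| ≤ (n : ℝ) ^ x := h2
      _ ≤ (n : ℝ) ^ ε := Real.rpow_le_rpow_of_exponent_le hn1 hxε.le
      _ ≤ ((n : ℝ) + 1) ^ ε := Real.rpow_le_rpow hn0.le (by linarith) hε.le
  set A : ℝ := 1 + ∑ i ∈ Finset.range N', |(s (i + 1) : ℝ) - (s i : ℝ)| with hA_def
  have hA1 : 1 ≤ A := by
    have : 0 ≤ ∑ i ∈ Finset.range N', |(s (i + 1) : ℝ) - (s i : ℝ)| :=
      Finset.sum_nonneg fun i _ => abs_nonneg _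
    linarith
  refine ⟨A, hA1, fun n => ?_⟩
  have hone : (1 : ℝ) ≤ ((n : ℝ) + 1) ^ ε :=
    Real.one_le_rpow (by have := Nat.cast_nonneg (α := ℝ) n; linarith) hε.le
  by_cases hn : N' ≤ n
  · calc |(s (n + 1) : ℝ) - (s n : ℝ)| ≤ ((n : ℝ) + 1) ^ ε := hlarge n hn
      _ ≤ A * ((n : ℝ) + 1) ^ ε := by nlinarith
  · push_neg at hn
    have hmem : |(s (n + 1) : ℝ) - (s n : ℝ)| ≤
        ∑ i ∈ Finset.range N', |(s (i + 1) : ℝ) - (s i : ℝ)| :=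
      Finset.single_le_sum (f := fun i => |(s (i + 1) : ℝ) - (s i : ℝ)|)
        (fun i _ => abs_nonneg _) (Finset.mem_range.2 hn)
    calc |(s (n + 1) : ℝ) - (s n : ℝ)| ≤ A := by rw [hA_def]; linarith
      _ = A * 1 := (mul_one _).symm
      _ ≤ A * ((n : ℝ) + 1) ^ ε := by nlinarith

lemma alpha_le_one (s : ℕ → ℤ) (α K : ℝ) (hα : 0 < α) (hK0 : 0 < K)
    (hK : ∀ m : ℕ, |(s m : ℝ)| ≤ K * (max (m : ℝ) 1) ^ α)
    (hαs : sInf {x : ℝ | 0 ≤ x ∧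
        Tendsto (fun n : ℕ => |(s n : ℝ)| / (n : ℝ) ^ x) atTop (nhds 0)} = α)
    (hβs : sInf {x : ℝ | 0 ≤ x ∧
        Tendsto (fun n : ℕ => |(s (n + 1) : ℝ) - (s n : ℝ)| / (n : ℝ) ^ x) atTop (nhds 0)} = 0) :
    α ≤ 1 := by
  by_contra hlt
  push_neg at hlt
  set ε : ℝ := (α - 1) / 4 with hε_def
  have hε : 0 < ε := by rw [hε_def]; linarith
  obtain ⟨A, hA1, hA⟩ := diff_bound s α K hα hK0 hK hβs ε hε
  have hA0 : 0 < A := by linarith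
  -- growth of |s n|
  have hsum : ∀ n : ℕ, |(s n : ℝ)| ≤ |(s 0 : ℝ)| + A * n * ((n : ℝ) + 1) ^ ε := by
    intro n
    induction n with
    | zero => simp
    | succ n ih =>
      have h1 := hA n
      have hmono : ((n : ℝ) + 1) ^ ε ≤ ((n : ℝ) + 1 + 1) ^ ε :=
        Real.rpow_le_rpow (by positivity) (by linarith) hε.le
      have habs : |(s (n + 1) : ℝ)| ≤ |(s n : ℝ)| + |(s (n + 1) : ℝ) - (s n : ℝ)| := by
        have := abs_add_le ((s n : ℝ)) ((s (n + 1) : ℝ) - (s n : ℝ))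
        simpa using this
      push_cast
      have hεpos : (0 : ℝ) ≤ ((n : ℝ) + 1) ^ ε := by positivity
      nlinarith [mul_le_mul_of_nonneg_left hmono (by positivity : (0:ℝ) ≤ A * n),
        mul_le_mul_of_nonneg_left hmono hA0.le]
  -- the exponent y
  set y : ℝ := 1 + 2 * ε with hy_def
  have hy0 : 0 ≤ y := by rw [hy_def]; linarith
  have hyα : y < α := by rw [hy_def, hε_def]; linarith
  have hmem : y ∈ {x : ℝ | 0 ≤ x ∧
      Tendsto (fun n : ℕ => |(s n : ℝ)| / (n : ℝ) ^ x) atTop (nhds 0)} := by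
    refine ⟨hy0, ?_⟩
    have hb1 : Tendsto (fun n : ℕ => |(s 0 : ℝ)| * (n : ℝ) ^ (-y)) atTop (nhds 0) := by
      have := (tendsto_rpow_neg_atTop (by linarith : (0:ℝ) < y)).comp
        (tendsto_natCast_atTop_atTop (R := ℝ))
      simpa using this.const_mul |(s 0 : ℝ)|
    have hb2 : Tendsto (fun n : ℕ => A * 2 ^ ε * (n : ℝ) ^ (-ε)) atTop (nhds 0) := by
      have := (tendsto_rpow_neg_atTop hε).comp (tendsto_natCast_atTop_atTop (R := ℝ))
      simpa using this.const_mul (A * 2 ^ ε)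
    have hb := hb1.add hb2
    rw [add_zero] at hb
    refine squeeze_zero' ?_ ?_ hb
    · filter_upwards with n; positivity
    · filter_upwards [eventually_ge_atTop 1] with n hn
      have hn1 : (1 : ℝ) ≤ (n : ℝ) := by exact_mod_cast hn
      have hn0 : (0 : ℝ) < (n : ℝ) := by linarith
      have hyn : (0 : ℝ) < (n : ℝ) ^ y := Real.rpow_pos_of_pos hn0 _
      have h2 : ((n : ℝ) + 1) ^ ε ≤ 2 ^ ε * (n : ℝ) ^ ε := by
        rw [← Real.mul_rpow (by norm_num) hn0.le]
        exact Real.rpow_le_rpow (by linarith) (by linarith) hε.le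
      have h3 : |(s n : ℝ)| ≤ |(s 0 : ℝ)| + A * 2 ^ ε * ((n : ℝ) * (n : ℝ) ^ ε) := by
        have := hsum n
        nlinarith [mul_le_mul_of_nonneg_left h2 (by positivity : (0:ℝ) ≤ A * n)]
      rw [div_le_iff₀ hyn]
      have he1 : (n : ℝ) ^ (-y) * (n : ℝ) ^ y = 1 := by
        rw [← Real.rpow_add hn0]; simp
      have he2 : (n : ℝ) ^ (-ε) * (n : ℝ) ^ y = (n : ℝ) * (n : ℝ) ^ ε := by
        rw [← Real.rpow_add hn0, hy_def]
        rw [show -ε + (1 + 2 * ε) = 1 + ε by ring, Real.rpow_add hn0, Real.rpow_one]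
      calc |(s n : ℝ)| ≤ |(s 0 : ℝ)| + A * 2 ^ ε * ((n : ℝ) * (n : ℝ) ^ ε) := h3
        _ = (|(s 0 : ℝ)| * (n : ℝ) ^ (-y) + A * 2 ^ ε * (n : ℝ) ^ (-ε)) * (n : ℝ) ^ y := by
            linear_combination (-(A * 2 ^ ε)) * he2 + (-|(s 0 : ℝ)|) * he1
  have hble : sInf {x : ℝ | 0 ≤ x ∧
      Tendsto (fun n : ℕ => |(s n : ℝ)| / (n : ℝ) ^ x) atTop (nhds 0)} ≤ y :=
    csInf_le ⟨0, fun x hx => hx.1⟩ hmem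
  rw [hαs] at hble
  linarith

lemma rate_one (b : ℕ) (hb : 2 ≤ b) (s : ℕ → ℤ) (C : ℝ) (hC : 0 < C)
    (hql : ∀ n i : ℕ, i ≤ b - 1 → |(s (b * n + i) : ℝ) - (b : ℝ) * (s n : ℝ)| ≤ C)
    (Λ : ℝ → ℝ)
    (hΛ : ∀ x : ℝ, 0 < x →
      Tendsto (fun k : ℕ => (s ⌊(b : ℝ) ^ k * x⌋₊ : ℝ) / ((b : ℝ) ^ k * x)) atTop (nhds (Λ x))) :
    ∀ x : ℝ, 0 < x → ∀ k : ℕ,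
      |(s ⌊(b : ℝ) ^ k * x⌋₊ : ℝ) / (b : ℝ) ^ k - x * Λ x| ≤
        C / ((b : ℝ) - 1) / (b : ℝ) ^ k := by
  intro x hx
  have hb1 : (1 : ℝ) < (b : ℝ) := by exact_mod_cast hb.trans_lt' one_lt_two
  have hb0 : (0 : ℝ) < (b : ℝ) := by linarith
  set D : ℝ := C / ((b : ℝ) - 1) with hD_def
  have hD : 0 < D := div_pos hC (by linarith)
  have hDC : D * ((b : ℝ) - 1) = C := div_mul_cancel₀ _ (by linarith)
  set g : ℕ → ℝ := fun k => (s ⌊(b : ℝ) ^ k * x⌋₊ : ℝ) / (b : ℝ) ^ k with hg_def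
  have hglim : Tendsto g atTop (nhds (x * Λ x)) := by
    have h1 := (hΛ x hx).mul_const x
    have h2 : (fun k : ℕ => (s ⌊(b : ℝ) ^ k * x⌋₊ : ℝ) / ((b : ℝ) ^ k * x) * x) = g := by
      funext k
      rw [hg_def]
      have hbk0 : ((b : ℝ) ^ k) ≠ 0 := by positivity
      field_simp
    rw [h2] at h1
    rwa [mul_comm (Λ x) x] at h1
  have hstep : ∀ k : ℕ, |g (k + 1) - g k| ≤ C / (b : ℝ) ^ (k + 1) := by
    intro k
    set y : ℝ := (b : ℝ) ^ k * x with hy_def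
    have hy0 : 0 < y := by positivity
    set m : ℕ := ⌊y⌋₊ with hm_def
    have hbm : b * m ≤ ⌊(b : ℝ) * y⌋₊ := by
      apply Nat.le_floor
      push_cast
      nlinarith [Nat.floor_le hy0.le]
    have hup : ⌊(b : ℝ) * y⌋₊ < b * m + b := by
      rw [Nat.floor_lt (by positivity)]
      push_cast
      nlinarith [Nat.lt_floor_add_one y]
    set i : ℕ := ⌊(b : ℝ) * y⌋₊ - b * m with hi_def
    have hieq : b * m + i = ⌊(b : ℝ) * y⌋₊ := by omega
    have hile : i ≤ b - 1 := by omega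
    have hqli := hql m i hile
    rw [hieq] at hqli
    have hfl : ⌊(b : ℝ) ^ (k + 1) * x⌋₊ = ⌊(b : ℝ) * y⌋₊ := by
      rw [hy_def]
      ring_nf
    have hbk0 : (0 : ℝ) < (b : ℝ) ^ k := by positivity
    have hbk10 : (0 : ℝ) < (b : ℝ) ^ (k + 1) := by positivity
    have hgg : g (k + 1) - g k =
        ((s ⌊(b : ℝ) * y⌋₊ : ℝ) - (b : ℝ) * (s m : ℝ)) / (b : ℝ) ^ (k + 1) := by
      rw [hg_def]
      simp only [hfl, hm_def, hy_def]
      rw [pow_succ]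
      field_simp
    rw [hgg, abs_div, abs_of_pos hbk10]
    gcongr
  have htel : ∀ k j : ℕ, |g k - g (k + j)| ≤ D / (b : ℝ) ^ k - D / (b : ℝ) ^ (k + j) := by
    intro k j
    induction j with
    | zero => simp
    | succ j ih =>
      have h1 := hstep (k + j)
      have hp : (0 : ℝ) < (b : ℝ) ^ (k + j) := by positivity
      have heq : D / (b : ℝ) ^ (k + j) - D / (b : ℝ) ^ (k + j + 1) = C / (b : ℝ) ^ (k + j + 1) := by
        rw [pow_succ]
        rw [← hDC, div_sub_div _ _ hp.ne' (by positivity), div_eq_div_iff (by positivity) (by positivity)]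
        ring
      calc |g k - g (k + (j + 1))| ≤ |g k - g (k + j)| + |g (k + j + 1) - g (k + j)| := by
            rw [show k + (j + 1) = k + j + 1 by ring]
            have := abs_sub_le (g k) (g (k + j)) (g (k + j + 1))
            rw [abs_sub_comm (g (k + j)) (g (k + j + 1))] at this
            exact this
        _ ≤ (D / (b : ℝ) ^ k - D / (b : ℝ) ^ (k + j)) + C / (b : ℝ) ^ (k + j + 1) :=
            add_le_add ih h1
        _ = D / (b : ℝ) ^ k - D / (b : ℝ) ^ (k + (j + 1)) := by
            rw [show k + (j + 1) = k + j + 1 by ring]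
            linarith [heq]
  intro k
  have h1 : Tendsto (fun j : ℕ => g (k + j)) atTop (nhds (x * Λ x)) := by
    have := hglim.comp (tendsto_add_atTop_nat k)
    simpa [add_comm, Function.comp_def] using this
  have h2 : Tendsto (fun j : ℕ => |g k - g (k + j)|) atTop (nhds |g k - x * Λ x|) :=
    (tendsto_const_nhds.sub h1).abs
  have h3 : |g k - x * Λ x| ≤ D / (b : ℝ) ^ k := by
    refine le_of_tendsto h2 ?_
    filter_upwards with j
    refine (htel k j).trans ?_
    have : (0 : ℝ) ≤ D / (b : ℝ) ^ (k + j) := by positivity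
    linarith
  exact h3

set_option maxHeartbeats 2000000 in
lemma holder_tilde (b : ℕ) (hb : 2 ≤ b) (s : ℕ → ℤ) (C : ℝ) (hC : 0 < C)
    (Λ : ℝ → ℝ)
    (hrate : ∀ x : ℝ, 0 < x → ∀ k : ℕ,
      |(s ⌊(b : ℝ) ^ k * x⌋₊ : ℝ) / (b : ℝ) ^ k - x * Λ x| ≤
        C / ((b : ℝ) - 1) / (b : ℝ) ^ k)
    (A ε : ℝ) (hε : 0 < ε) (hε1 : ε < 1) (hA1 : 1 ≤ A)
    (hA : ∀ n : ℕ, |(s (n + 1) : ℝ) - (s n : ℝ)| ≤ A * ((n : ℝ) + 1) ^ ε) :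
    ∀ x y : ℝ, 0 < x → x < y → y ≤ 1 →
      |y * Λ y - x * Λ x| ≤
        (2 * (C / ((b : ℝ) - 1)) + ((b : ℝ) + 1) * A * (b : ℝ)) * (y - x) ^ (1 - ε) := by
  intro x y hx hxy hy1
  have hb1 : (1 : ℝ) < (b : ℝ) := by exact_mod_cast hb.trans_lt' one_lt_two
  have hb0 : (0 : ℝ) < (b : ℝ) := by linarith
  set R : ℝ := C / ((b : ℝ) - 1) with hR_def
  have hR : 0 < R := div_pos hC (by linarith)
  set h : ℝ := y - x with hh_def
  have hh0 : 0 < h := by rw [hh_def]; linarith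
  have hh1 : h ≤ 1 := by rw [hh_def]; linarith
  have hy0 : 0 < y := lt_trans hx hxy
  clear_value h
  -- choice of k
  set n0 : ℕ := ⌊1 / h⌋₊ with hn0_def
  have hinv1 : (1 : ℝ) ≤ 1 / h := by
    rw [le_div_iff₀ hh0]; linarith
  have hn01 : 1 ≤ n0 := by
    rw [hn0_def]
    exact Nat.le_floor (by exact_mod_cast hinv1)
  set k : ℕ := Nat.log b n0 + 1 with hk_def
  have hklow : 1 / h < (b : ℝ) ^ k := by
    have h1 : n0 < b ^ k := Nat.lt_pow_succ_log_self (by omega) n0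
    have h2 : 1 / h < (n0 : ℝ) + 1 := Nat.lt_floor_add_one (1 / h)
    have h3 : ((n0 : ℕ) : ℝ) + 1 ≤ ((b ^ k : ℕ) : ℝ) := by exact_mod_cast h1
    have h4 : ((b ^ k : ℕ) : ℝ) = (b : ℝ) ^ k := by push_cast; ring
    linarith [h3.trans_eq h4]
  have hkup : (b : ℝ) ^ k ≤ (b : ℝ) / h := by
    have h1 : b ^ Nat.log b n0 ≤ n0 := Nat.pow_log_le_self b (by omega)
    have h2 : ((b ^ Nat.log b n0 : ℕ) : ℝ) ≤ (n0 : ℝ) := by exact_mod_cast h1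
    have h3 : (n0 : ℝ) ≤ 1 / h := Nat.floor_le (by positivity)
    have h4 : (b : ℝ) ^ k = (b : ℝ) * (b : ℝ) ^ Nat.log b n0 := by
      rw [hk_def, pow_succ]; ring
    have h5 : ((b ^ Nat.log b n0 : ℕ) : ℝ) = (b : ℝ) ^ Nat.log b n0 := by push_cast; ring
    rw [h4, div_eq_mul_one_div]
    have := h5.symm.trans_le (h2.trans h3)
    nlinarith
  clear_value n0 k
  have hbk0 : (0 : ℝ) < (b : ℝ) ^ k := by positivity
  have hbkh : (1 : ℝ) / (b : ℝ) ^ k ≤ h := by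
    rw [div_le_iff₀ hbk0]
    rw [div_lt_iff₀ hh0] at hklow
    nlinarith
  have hbkhb : (b : ℝ) ^ k * h ≤ b := by
    have h1 := mul_le_mul_of_nonneg_right hkup hh0.le
    have h2 : (b : ℝ) / h * h = b := by field_simp
    linarith
  -- floors
  set m' : ℕ := ⌊(b : ℝ) ^ k * x⌋₊ with hm'_def
  set m : ℕ := ⌊(b : ℝ) ^ k * y⌋₊ with hm_def
  have hm'm : m' ≤ m := Nat.floor_le_floor (by nlinarith)
  have hmub : (m : ℝ) ≤ (b : ℝ) ^ k * y := Nat.floor_le (by positivity)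
  have hmbk : (m : ℝ) ≤ (b : ℝ) ^ k := by nlinarith
  have hry' := hrate y hy0 k
  have hrx' := hrate x hx k
  rw [← hm_def] at hry'
  rw [← hm'_def] at hrx'
  clear_value m m'
  have hm'lb : (b : ℝ) ^ k * x - 1 < m' := by
    have h9 := Nat.lt_floor_add_one ((b : ℝ) ^ k * x)
    rw [← hm'_def] at h9
    linarith
  have hdiff : (m : ℝ) - m' ≤ (b : ℝ) + 1 := by
    have h1 : (b : ℝ) ^ k * y = (b : ℝ) ^ k * x + (b : ℝ) ^ k * h := by
      rw [hh_def]; ring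
    nlinarith
  have hdiffn : m - m' ≤ b + 1 := by
    have : (m : ℝ) ≤ (m' : ℝ) + ((b : ℝ) + 1) := by linarith
    have h2 : m ≤ m' + (b + 1) := by exact_mod_cast this
    omega
  -- telescoping bound on |s m - s m'|
  have hsm : |(s m : ℝ) - (s m' : ℝ)| ≤ ((b : ℝ) + 1) * (A * ((b : ℝ) ^ k) ^ ε) := by
    have hsum : (s m : ℝ) - (s m' : ℝ) =
        ∑ i ∈ Finset.range (m - m'), ((s (m' + i + 1) : ℝ) - (s (m' + i) : ℝ)) := by
      have h0 := Finset.sum_range_sub (fun i => ((s (m' + i)) : ℝ)) (m - m')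
      simp only [Nat.add_zero] at h0
      rw [Nat.add_sub_cancel' hm'm] at h0
      exact h0.symm
    have hterm : ∀ i ∈ Finset.range (m - m'),
        |(s (m' + i + 1) : ℝ) - (s (m' + i) : ℝ)| ≤ A * ((b : ℝ) ^ k) ^ ε := by
      intro i hi
      rw [Finset.mem_range] at hi
      have h1 := hA (m' + i)
      have h2 : ((m' + i : ℕ) : ℝ) + 1 ≤ (b : ℝ) ^ k := by
        have : m' + i + 1 ≤ m := by omega
        have h3 : ((m' + i + 1 : ℕ) : ℝ) ≤ (m : ℝ) := by exact_mod_cast this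
        push_cast at h3 ⊢
        linarith
      have h4 : (((m' + i : ℕ) : ℝ) + 1) ^ ε ≤ ((b : ℝ) ^ k) ^ ε :=
        Real.rpow_le_rpow (by positivity) h2 hε.le
      calc |(s (m' + i + 1) : ℝ) - (s (m' + i) : ℝ)| ≤ A * (((m' + i : ℕ) : ℝ) + 1) ^ ε := h1
        _ ≤ A * ((b : ℝ) ^ k) ^ ε := by nlinarith
    calc |(s m : ℝ) - (s m' : ℝ)|
        ≤ ∑ i ∈ Finset.range (m - m'), |(s (m' + i + 1) : ℝ) - (s (m' + i) : ℝ)| := by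
          rw [hsum]; exact Finset.abs_sum_le_sum_abs _ _
      _ ≤ (m - m' : ℕ) * (A * ((b : ℝ) ^ k) ^ ε) := by
          have := Finset.sum_le_card_nsmul (Finset.range (m - m'))
            (fun i => |(s (m' + i + 1) : ℝ) - (s (m' + i) : ℝ)|) (A * ((b : ℝ) ^ k) ^ ε) hterm
          simpa [nsmul_eq_mul] using this
      _ ≤ ((b : ℝ) + 1) * (A * ((b : ℝ) ^ k) ^ ε) := by
          have h5 : ((m - m' : ℕ) : ℝ) ≤ (b : ℝ) + 1 := by
            have : ((m - m' : ℕ) : ℝ) ≤ ((b + 1 : ℕ) : ℝ) := by exact_mod_cast hdiffn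
            push_cast at this; linarith
          have h6 : (0 : ℝ) ≤ A * ((b : ℝ) ^ k) ^ ε := by positivity
          nlinarith
  -- rpow estimates
  have hrpow1 : ((b : ℝ) ^ k) ^ ε ≤ (b : ℝ) ^ ε * h ^ (-ε) := by
    have h1 : ((b : ℝ) ^ k) ^ ε ≤ ((b : ℝ) / h) ^ ε :=
      Real.rpow_le_rpow (by positivity) hkup hε.le
    have h2 : ((b : ℝ) / h) ^ ε = (b : ℝ) ^ ε * h ^ (-ε) := by
      rw [Real.div_rpow hb0.le hh0.le, Real.rpow_neg hh0.le, div_eq_mul_inv]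
    linarith [h1.trans_eq h2]
  have hbε : (b : ℝ) ^ ε ≤ (b : ℝ) := by
    have := Real.rpow_le_rpow_of_exponent_le hb1.le hε1.le
    rwa [Real.rpow_one] at this
  have hhε : h ^ (-ε) * h = h ^ (1 - ε) := by
    nth_rewrite 2 [← Real.rpow_one h]
    rw [← Real.rpow_add hh0]
    ring_nf
  have hh1ε : h ≤ h ^ (1 - ε) := by
    nth_rewrite 1 [← Real.rpow_one h]
    exact Real.rpow_le_rpow_of_exponent_ge hh0 hh1 (by linarith)
  -- triangle inequality
  have hry := hry'
  have hrx := hrx'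
  have htri : |y * Λ y - x * Λ x| ≤
      |(s m : ℝ) / (b : ℝ) ^ k - y * Λ y| + |(s m : ℝ) - (s m' : ℝ)| / (b : ℝ) ^ k
        + |(s m' : ℝ) / (b : ℝ) ^ k - x * Λ x| := by
    have e1 : y * Λ y - x * Λ x =
        -((s m : ℝ) / (b : ℝ) ^ k - y * Λ y) + ((s m : ℝ) - (s m' : ℝ)) / (b : ℝ) ^ k
          + ((s m' : ℝ) / (b : ℝ) ^ k - x * Λ x) := by
      field_simp
      ring
    have e2 : |(s m : ℝ) - (s m' : ℝ)| / (b : ℝ) ^ k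
        = |((s m : ℝ) - (s m' : ℝ)) / (b : ℝ) ^ k| := by
      rw [abs_div, abs_of_pos hbk0]
    rw [e1, e2]
    have t1 := abs_add_le (-((s m : ℝ) / (b : ℝ) ^ k - y * Λ y)
        + ((s m : ℝ) - (s m' : ℝ)) / (b : ℝ) ^ k) ((s m' : ℝ) / (b : ℝ) ^ k - x * Λ x)
    have t2 := abs_add_le (-((s m : ℝ) / (b : ℝ) ^ k - y * Λ y))
        (((s m : ℝ) - (s m' : ℝ)) / (b : ℝ) ^ k)
    rw [abs_neg] at t2
    linarith
  have hmid : |(s m : ℝ) - (s m' : ℝ)| / (b : ℝ) ^ k ≤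
      ((b : ℝ) + 1) * A * (b : ℝ) * h ^ (1 - ε) := by
    have h1 : |(s m : ℝ) - (s m' : ℝ)| / (b : ℝ) ^ k ≤
        ((b : ℝ) + 1) * (A * ((b : ℝ) ^ ε * h ^ (-ε))) * (1 / (b : ℝ) ^ k) := by
      rw [div_eq_mul_one_div]
      have hAb : (0 : ℝ) < A := by linarith
      have : |(s m : ℝ) - (s m' : ℝ)| ≤ ((b : ℝ) + 1) * (A * ((b : ℝ) ^ ε * h ^ (-ε))) := by
        refine hsm.trans ?_
        have h99 := mul_le_mul_of_nonneg_left hrpow1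
          (by positivity : (0 : ℝ) ≤ ((b : ℝ) + 1) * A)
        nlinarith [h99]
      have h10 : (0 : ℝ) ≤ 1 / (b : ℝ) ^ k := by positivity
      nlinarith
    have h2 : ((b : ℝ) + 1) * (A * ((b : ℝ) ^ ε * h ^ (-ε))) * (1 / (b : ℝ) ^ k) ≤
        ((b : ℝ) + 1) * (A * ((b : ℝ) ^ ε * h ^ (-ε))) * h := by
      have : (0 : ℝ) ≤ ((b : ℝ) + 1) * (A * ((b : ℝ) ^ ε * h ^ (-ε))) := by
        have := (Real.rpow_pos_of_pos hh0 (-ε)).le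
        positivity
      nlinarith
    have h3 : ((b : ℝ) + 1) * (A * ((b : ℝ) ^ ε * h ^ (-ε))) * h =
        ((b : ℝ) + 1) * A * (b : ℝ) ^ ε * (h ^ (-ε) * h) := by ring
    have h4 : ((b : ℝ) + 1) * A * (b : ℝ) ^ ε * (h ^ (-ε) * h) ≤
        ((b : ℝ) + 1) * A * (b : ℝ) * h ^ (1 - ε) := by
      rw [hhε]
      have h5 : (0 : ℝ) < h ^ (1 - ε) := Real.rpow_pos_of_pos hh0 _
      have h98 := mul_le_mul_of_nonneg_right
        (mul_le_mul_of_nonneg_left hbε (by positivity : (0 : ℝ) ≤ ((b : ℝ) + 1) * A)) h5.le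
      nlinarith [h98]
    linarith
  have hRy : |(s m : ℝ) / (b : ℝ) ^ k - y * Λ y| ≤ R * h ^ (1 - ε) := by
    have h1 : R / (b : ℝ) ^ k ≤ R * h := by
      rw [div_eq_mul_one_div]
      nlinarith
    have h2 : R * h ≤ R * h ^ (1 - ε) := by nlinarith
    exact hry.trans (h1.trans h2)
  have hRx : |(s m' : ℝ) / (b : ℝ) ^ k - x * Λ x| ≤ R * h ^ (1 - ε) := by
    have h1 : R / (b : ℝ) ^ k ≤ R * h := by
      rw [div_eq_mul_one_div]
      nlinarith
    have h2 : R * h ≤ R * h ^ (1 - ε) := by nlinarith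
    exact hrx.trans (h1.trans h2)
  calc |y * Λ y - x * Λ x| ≤ _ := htri
    _ ≤ R * h ^ (1 - ε) + ((b : ℝ) + 1) * A * (b : ℝ) * h ^ (1 - ε) + R * h ^ (1 - ε) := by
        gcongr
    _ = (2 * R + ((b : ℝ) + 1) * A * (b : ℝ)) * h ^ (1 - ε) := by ring

lemma holder_lambda (Λ : ℝ → ℝ) (K CT : ℝ) (hK0 : 0 < K) (hCT : 0 < CT)
    (hΛbd : ∀ x : ℝ, 0 < x → |Λ x| ≤ K)
    (θ : ℝ) (hθ0 : 0 < θ) (hθ1 : θ ≤ 1)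
    (htilde : ∀ x y : ℝ, 0 < x → x < y → y ≤ 1 → |y * Λ y - x * Λ x| ≤ CT * (y - x) ^ θ)
    (u v : ℝ) (hu : 0 < u) (hv : v ≤ 1) :
    ∀ x ∈ Set.Ioo u v, ∀ y ∈ Set.Ioo u v,
      |Λ x - Λ y| ≤ (CT + K) / u * |x - y| ^ θ := by
  have main : ∀ x ∈ Set.Ioo u v, ∀ y ∈ Set.Ioo u v, x < y →
      |Λ x - Λ y| ≤ (CT + K) / u * |x - y| ^ θ := by
    rintro x ⟨hx1, hx2⟩ y ⟨hy1, hy2⟩ hxy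
    have hx0 : 0 < x := lt_trans hu hx1
    have hy0 : 0 < y := lt_trans hx0 hxy
    have hy1' : y ≤ 1 := le_trans hy2.le hv
    have hd0 : 0 < y - x := by linarith
    have hd1 : y - x ≤ 1 := by linarith
    have habs : |x - y| = y - x := by rw [abs_sub_comm, abs_of_pos hd0]
    have hkey : Λ x - Λ y = (x * Λ x - y * Λ y) / x + Λ y * ((y - x) / x) := by
      field_simp
      ring
    have h1 : |x * Λ x - y * Λ y| ≤ CT * (y - x) ^ θ := by
      rw [abs_sub_comm]
      exact htilde x y hx0 hxy hy1'
    have h2 : |Λ y| ≤ K := hΛbd y hy0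
    have hdθ : y - x ≤ (y - x) ^ θ := by
      nth_rewrite 1 [← Real.rpow_one (y - x)]
      exact Real.rpow_le_rpow_of_exponent_ge hd0 hd1 hθ1
    have hdθ0 : 0 < (y - x) ^ θ := Real.rpow_pos_of_pos hd0 _
    have hux : u ≤ x := hx1.le
    calc |Λ x - Λ y| = |(x * Λ x - y * Λ y) / x + Λ y * ((y - x) / x)| := by rw [hkey]
      _ ≤ |(x * Λ x - y * Λ y) / x| + |Λ y * ((y - x) / x)| := abs_add_le _ _
      _ = |x * Λ x - y * Λ y| / x + |Λ y| * ((y - x) / x) := by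
          rw [abs_div, abs_of_pos hx0, abs_mul, abs_div, abs_of_pos hd0, abs_of_pos hx0]
      _ ≤ CT * (y - x) ^ θ / u + K * ((y - x) ^ θ / u) := by
          have e1 : |x * Λ x - y * Λ y| / x ≤ CT * (y - x) ^ θ / u := by
            apply div_le_div₀ (by positivity) h1 hu hux
          have e2 : |Λ y| * ((y - x) / x) ≤ K * ((y - x) ^ θ / u) := by
            have e3 : (y - x) / x ≤ (y - x) ^ θ / u :=
              div_le_div₀ (by positivity) hdθ hu hux
            have e4 : (0 : ℝ) ≤ (y - x) / x := by positivity
            nlinarith [abs_nonneg (Λ y)]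
          linarith
      _ = (CT + K) / u * (y - x) ^ θ := by ring
      _ = (CT + K) / u * |x - y| ^ θ := by rw [habs]
  intro x hx y hy
  rcases lt_trichotomy x y with hlt | heq | hgt
  · exact main x hx y hy hlt
  · subst heq
    simp [Real.zero_rpow hθ0.ne']
  · rw [abs_sub_comm (Λ x), abs_sub_comm x]
    exact main y hy x hx hgt

lemma dimH_graph_le_one (Λ : ℝ → ℝ) (u v : ℝ) (huv : u < v) (hsub : v - u ≤ 1)
    (hH : ∀ θ : ℝ, 0 < θ → θ < 1 → ∃ CH : ℝ, 0 < CH ∧ ∀ x ∈ Set.Ioo u v, ∀ y ∈ Set.Ioo u v,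
        |Λ x - Λ y| ≤ CH * |x - y| ^ θ) :
    dimH ((fun x : ℝ => (x, Λ x)) '' Set.Ioo u v) ≤ 1 := by
  by_contra hgt
  push_neg at hgt
  obtain ⟨q, hq0, hq1, hq2⟩ := ENNReal.lt_iff_exists_real_btwn.1 hgt
  have hq1' : 1 < q := ENNReal.one_lt_ofReal.1 hq1
  set θ : ℝ := 1 / q with hθ_def
  have hθ0 : 0 < θ := by rw [hθ_def]; positivity
  have hθ1 : θ < 1 := by
    rw [hθ_def, div_lt_one (by linarith)]; linarith
  obtain ⟨CH, hCH0, hCH⟩ := hH θ hθ0 hθ1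
  set MCr : ℝ := max CH 1 with hMCr_def
  have hMCr0 : 0 ≤ MCr := le_trans zero_le_one (le_max_right _ _)
  set MC : ℝ≥0 := Real.toNNReal MCr with hMC_def
  set r : ℝ≥0 := Real.toNNReal θ with hr_def
  have hrθ : (r : ℝ) = θ := Real.coe_toNNReal _ hθ0.le
  have hr0 : 0 < r := by
    rw [← NNReal.coe_lt_coe, hrθ]; exact hθ0
  -- the distance estimate
  have hdist : ∀ x ∈ Set.Ioo u v, ∀ y ∈ Set.Ioo u v,
      dist ((x, Λ x) : ℝ × ℝ) (y, Λ y) ≤ MCr * |x - y| ^ θ := by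
    rintro x hx y hy
    rw [Prod.dist_eq]
    have hxy1 : |x - y| ≤ 1 := by
      rw [abs_le]
      obtain ⟨hx1, hx2⟩ := hx
      obtain ⟨hy1, hy2⟩ := hy
      constructor <;> linarith
    have hfst : dist x y ≤ MCr * |x - y| ^ θ := by
      rw [Real.dist_eq]
      have h1 : |x - y| ≤ |x - y| ^ θ := by
        rcases eq_or_lt_of_le (abs_nonneg (x - y)) with h0 | h0
        · rw [← h0, Real.zero_rpow hθ0.ne']
        · nth_rewrite 1 [← Real.rpow_one |x - y|]
          exact Real.rpow_le_rpow_of_exponent_ge h0 hxy1 hθ1.le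
      have h2 : (0 : ℝ) ≤ |x - y| ^ θ := Real.rpow_nonneg (abs_nonneg _) _
      have h3 : (1 : ℝ) ≤ MCr := le_max_right _ _
      nlinarith
    have hsnd : dist (Λ x) (Λ y) ≤ MCr * |x - y| ^ θ := by
      rw [Real.dist_eq]
      have h1 := hCH x hx y hy
      have h2 : (0 : ℝ) ≤ |x - y| ^ θ := Real.rpow_nonneg (abs_nonneg _) _
      have h3 : CH ≤ MCr := le_max_left _ _
      nlinarith
    exact max_le hfst hsnd
  have hHolder : HolderOnWith MC r (fun x : ℝ => (x, Λ x)) (Set.Ioo u v) := by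
    intro x hx y hy
    have h1 := hdist x hx y hy
    have he1 : edist ((x, Λ x) : ℝ × ℝ) (y, Λ y) = ENNReal.ofReal (dist ((x, Λ x) : ℝ × ℝ) (y, Λ y)) :=
      edist_dist _ _
    have he2 : edist x y = (ENNReal.ofReal (|x - y|)) := by
      rw [edist_dist, Real.dist_eq]
    rw [he1, he2, hrθ]
    have s1 : ENNReal.ofReal (dist ((x, Λ x) : ℝ × ℝ) (y, Λ y))
        ≤ ENNReal.ofReal (MCr * |x - y| ^ θ) := ENNReal.ofReal_le_ofReal h1
    have s2 : ENNReal.ofReal (MCr * |x - y| ^ θ)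
        = ENNReal.ofReal MCr * ENNReal.ofReal (|x - y| ^ θ) := ENNReal.ofReal_mul hMCr0
    have s3 : ENNReal.ofReal MCr * ENNReal.ofReal (|x - y| ^ θ)
        = (MC : ℝ≥0∞) * (ENNReal.ofReal (|x - y|)) ^ θ := by
      rw [ENNReal.ofReal_rpow_of_nonneg (abs_nonneg _) hθ0.le]
      rfl
    rw [s2, s3] at s1
    exact s1
  have hdim := hHolder.dimH_image_le hr0
  have hIoo : dimH (Set.Ioo u v) = 1 := by
    have hmem : Set.Ioo u v ∈ nhds ((u + v) / 2) := Ioo_mem_nhds (by linarith) (by linarith)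
    rw [Real.dimH_of_mem_nhds hmem, Module.finrank_self, Nat.cast_one]
  rw [hIoo] at hdim
  have hrq : (1 : ℝ≥0∞) / (r : ℝ≥0∞) = ENNReal.ofReal q := by
    have h1 : (r : ℝ≥0∞) = ENNReal.ofReal θ := rfl
    rw [one_div, h1, ← ENNReal.ofReal_inv_of_pos hθ0, hθ_def, one_div, inv_inv]
  rw [hrq] at hdim
  exact absurd (lt_of_le_of_lt hdim hq2) (lt_irrefl _)

set_option maxHeartbeats 1000000 in
/-- For a quasi-linear sequence `s` in base `b` with exponents `α > β = 0` whose limit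
function `λ_s` satisfies the separation condition along a syndetic sequence `(t_n)`,
the Hausdorff dimension of the graph of `λ_s` over any `(u,v) ⊆ (0,1]` equals `2 − α`. -/
theorem dimH_graph_lambda_s_eq
    (b : ℕ) (hb : 2 ≤ b) (s : ℕ → ℤ) (α β C : ℝ)
    (hβ0 : β = 0) (hαβ : β < α) (hC : 0 < C)
    (hαs : sInf {x : ℝ | 0 ≤ x ∧
        Tendsto (fun n : ℕ => |(s n : ℝ)| / (n : ℝ) ^ x) atTop (nhds 0)} = α)
    (hβs : sInf {x : ℝ | 0 ≤ x ∧
        Tendsto (fun n : ℕ => |(s (n + 1) : ℝ) - (s n : ℝ)| / (n : ℝ) ^ x) atTop (nhds 0)} = β)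
    (hql : ∀ n i : ℕ, i ≤ b - 1 →
      |(s (b * n + i) : ℝ) - (b : ℝ) ^ α * (s n : ℝ)| ≤ C * (max (n : ℝ) 1) ^ β)
    (Λ : ℝ → ℝ) (hΛcont : ContinuousOn Λ (Set.Ioi 0))
    (hΛ : ∀ x : ℝ, 0 < x →
      Tendsto (fun k : ℕ => (s ⌊(b : ℝ) ^ k * x⌋₊ : ℝ) / ((b : ℝ) ^ k * x) ^ α)
        atTop (nhds (Λ x)))
    (t : ℕ → ℕ) (ht : ∀ n : ℕ, 1 ≤ n → t n < t (n + 1)) (htpos : 1 ≤ t 1)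
    (M : ℕ) (hM : ∀ n : ℕ, 1 ≤ n → t (n + 1) - t n ≤ M)
    (c : ℝ) (hc : 0 < c)
    (hgap : ∀ k : ℕ, 1 ≤ k → ∀ n : ℕ, 1 ≤ n → 1 ≤ t n → t (n + 1) ≤ b ^ k - 1 →
      c * (b : ℝ) ^ (-(α * (k : ℝ))) <
        aS s α Λ ((t (n + 1) : ℝ) / (b : ℝ) ^ k) - aS s α Λ ((t n : ℝ) / (b : ℝ) ^ k)) :
    ∀ u v : ℝ, 0 < u → u < v → v ≤ 1 →
      dimH {p : ℝ × ℝ | ∃ x : ℝ, u < x ∧ x < v ∧ p = (x, Λ x)} =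
        ENNReal.ofReal (2 - α) := by
  subst hβ0
  have hα : 0 < α := hαβ
  have hb1 : (1 : ℝ) < (b : ℝ) := by exact_mod_cast hb.trans_lt' one_lt_two
  have hql' : ∀ n i : ℕ, i ≤ b - 1 → |(s (b * n + i) : ℝ) - (b : ℝ) ^ α * (s n : ℝ)| ≤ C := by
    intro n i hi
    have := hql n i hi
    rwa [Real.rpow_zero, mul_one] at this
  obtain ⟨K, hK0, hK⟩ := qlin_growth b hb s α C hα hC hql'
  have hΛbd : ∀ x : ℝ, 0 < x → |Λ x| ≤ K := lambda_bound b hb s α hα K hK0.le hK Λ hΛ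
  have h1α : 1 ≤ α := alpha_ge_one b hb s α hα K hK0 hK Λ hΛbd t ht htpos M hM c hc hgap
  have hα1 : α ≤ 1 := alpha_le_one s α K hα hK0 hK hαs hβs
  have hαone : α = 1 := le_antisymm hα1 h1α
  subst hαone
  have hql1 : ∀ n i : ℕ, i ≤ b - 1 → |(s (b * n + i) : ℝ) - (b : ℝ) * (s n : ℝ)| ≤ C := by
    intro n i hi
    have := hql' n i hi
    rwa [Real.rpow_one] at this
  have hΛ1 : ∀ x : ℝ, 0 < x →
      Tendsto (fun k : ℕ => (s ⌊(b : ℝ) ^ k * x⌋₊ : ℝ) / ((b : ℝ) ^ k * x))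
        atTop (nhds (Λ x)) := by
    intro x hx
    have := hΛ x hx
    simpa [Real.rpow_one] using this
  have hrate := rate_one b hb s C hC hql1 Λ hΛ1
  intro u v hu huv hv1
  have hset : {p : ℝ × ℝ | ∃ x : ℝ, u < x ∧ x < v ∧ p = (x, Λ x)}
      = (fun x : ℝ => (x, Λ x)) '' Set.Ioo u v := by
    ext p
    constructor
    · rintro ⟨x, h1, h2, rfl⟩
      exact ⟨x, ⟨h1, h2⟩, rfl⟩
    · rintro ⟨x, ⟨h1, h2⟩, rfl⟩
      exact ⟨x, h1, h2, rfl⟩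
  rw [hset, show (2 : ℝ) - 1 = 1 by norm_num, ENNReal.ofReal_one]
  apply le_antisymm
  · -- upper bound
    apply dimH_graph_le_one Λ u v huv (by linarith)
    intro θ hθ0 hθ1
    set ε : ℝ := 1 - θ with hε_def
    have hε : 0 < ε := by rw [hε_def]; linarith
    have hε1 : ε < 1 := by rw [hε_def]; linarith
    obtain ⟨A, hA1, hA⟩ := diff_bound s 1 K one_pos hK0 hK hβs ε hε
    have htilde := holder_tilde b hb s C hC Λ hrate A ε hε hε1 hA1 hA
    set CT : ℝ := 2 * (C / ((b : ℝ) - 1)) + ((b : ℝ) + 1) * A * (b : ℝ) with hCT_def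
    have hCT0 : 0 < CT := by
      rw [hCT_def]
      have h1 : 0 < C / ((b : ℝ) - 1) := div_pos hC (by linarith)
      have h2 : (0 : ℝ) < ((b : ℝ) + 1) * A * (b : ℝ) :=
        mul_pos (mul_pos (by linarith) (by linarith)) (by linarith)
      linarith
    have htilde' : ∀ x y : ℝ, 0 < x → x < y → y ≤ 1 →
        |y * Λ y - x * Λ x| ≤ CT * (y - x) ^ θ := by
      intro x y hx hxy hy1
      have := htilde x y hx hxy hy1
      rwa [show (1 : ℝ) - ε = θ by rw [hε_def]; ring] at this
    have hlam := holder_lambda Λ K CT hK0 hCT0 hΛbd θ hθ0 hθ1.le htilde' u v hu hv1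
    exact ⟨(CT + K) / u, by positivity, hlam⟩
  · -- lower bound
    have himg : Prod.fst '' ((fun x : ℝ => (x, Λ x)) '' Set.Ioo u v) = Set.Ioo u v := by
      ext x
      constructor
      · rintro ⟨p, ⟨z, hz, rfl⟩, rfl⟩
        exact hz
      · intro hx
        exact ⟨(x, Λ x), ⟨x, hx, rfl⟩, rfl⟩
    have hIoo : dimH (Set.Ioo u v) = 1 := by
      have hmem : Set.Ioo u v ∈ nhds ((u + v) / 2) := Ioo_mem_nhds (by linarith) (by linarith)
      rw [Real.dimH_of_mem_nhds hmem, Module.finrank_self, Nat.cast_one]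
    calc (1 : ℝ≥0∞) = dimH (Set.Ioo u v) := hIoo.symm
      _ = dimH (Prod.fst '' ((fun x : ℝ => (x, Λ x)) '' Set.Ioo u v)) := by rw [himg]
      _ ≤ dimH ((fun x : ℝ => (x, Λ x)) '' Set.Ioo u v) :=
          LipschitzWith.dimH_image_le LipschitzWith.prod_fst _
end

section
/- Let s be quasi-linear in base b with constant C > 0 and exponents α > β ≥ 0, and let λ_s be its (continuous) limit function. Then for every x > 0 the series Σ_{j=1}^∞ c(j,x)·b^{−αj} converges and its sum equals a_s(x) = x^α·λ_s(x) − s(⌊x⌋). -/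
open Filter

/-- `c(j,x) := s(b^j x) − b^α·s(b^{j−1} x)`, where `s` is extended by `s(x) = s(⌊x⌋)`. -/
noncomputable def cCoeff (b : ℕ) (s : ℕ → ℤ) (α : ℝ) (x : ℝ) (j : ℕ) : ℝ :=
  (s ⌊(b : ℝ) ^ j * x⌋₊ : ℝ) - (b : ℝ) ^ α * (s ⌊(b : ℝ) ^ (j - 1) * x⌋₊ : ℝ)

/-- For a quasi-linear sequence `s`, the series `Σ_{j=1}^∞ c(j,x)·b^{−αj}` converges to
`a_s(x) = x^α·λ_s(x) − s(⌊x⌋)` for every `x > 0`. -/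
theorem hasSum_cCoeff_eq_aS
    (b : ℕ) (hb : 2 ≤ b) (s : ℕ → ℤ) (α β C : ℝ)
    (hβ0 : 0 ≤ β) (hαβ : β < α) (hC : 0 < C)
    (hαs : sInf {x : ℝ | 0 ≤ x ∧
        Tendsto (fun n : ℕ => |(s n : ℝ)| / (n : ℝ) ^ x) atTop (nhds 0)} = α)
    (hβs : sInf {x : ℝ | 0 ≤ x ∧
        Tendsto (fun n : ℕ => |(s (n + 1) : ℝ) - (s n : ℝ)| / (n : ℝ) ^ x) atTop (nhds 0)} = β)
    (hql : ∀ n i : ℕ, i ≤ b - 1 →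
      |(s (b * n + i) : ℝ) - (b : ℝ) ^ α * (s n : ℝ)| ≤ C * (max (n : ℝ) 1) ^ β)
    (Λ : ℝ → ℝ) (hΛcont : ContinuousOn Λ (Set.Ioi 0))
    (hΛ : ∀ x : ℝ, 0 < x →
      Tendsto (fun k : ℕ => (s ⌊(b : ℝ) ^ k * x⌋₊ : ℝ) / ((b : ℝ) ^ k * x) ^ α)
        atTop (nhds (Λ x)))
    (x : ℝ) (hx : 0 < x) :
    HasSum (fun j : ℕ => cCoeff b s α x (j + 1) * (b : ℝ) ^ (-(α * ((j : ℝ) + 1))))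
      (aS s α Λ x) := by
  have hB1 : (1:ℝ) < (b:ℝ) := by exact_mod_cast lt_of_lt_of_le one_lt_two hb
  have hB0 : (0:ℝ) < (b:ℝ) := lt_trans one_pos hB1
  set B : ℝ := (b:ℝ) with hBdef
  set M : ℝ := max x 1 with hMdef
  have hM1 : 1 ≤ M := le_max_right _ _
  have hM0 : 0 < M := lt_of_lt_of_le one_pos hM1
  set f : ℕ → ℝ := fun j => cCoeff b s α x (j + 1) * B ^ (-(α * ((j : ℝ) + 1))) with hf
  set g : ℕ → ℝ := fun k => (s ⌊B ^ k * x⌋₊ : ℝ) * B ^ (-(α * (k : ℝ))) with hg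
  -- floor decomposition
  have hfloor : ∀ j : ℕ, ∃ i : ℕ, i ≤ b - 1 ∧
      ⌊B ^ (j + 1) * x⌋₊ = b * ⌊B ^ j * x⌋₊ + i := by
    intro j
    have ht0 : (0:ℝ) ≤ B ^ j * x := by positivity
    have h1 : b * ⌊B ^ j * x⌋₊ ≤ ⌊B ^ (j + 1) * x⌋₊ := by
      apply Nat.le_floor
      push_cast
      rw [pow_succ]
      calc (B : ℝ) * (⌊B ^ j * x⌋₊ : ℝ) ≤ B * (B ^ j * x) :=
            mul_le_mul_of_nonneg_left (Nat.floor_le ht0) hB0.le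
        _ = B ^ j * B * x := by ring
    have h2 : ⌊B ^ (j + 1) * x⌋₊ < b * ⌊B ^ j * x⌋₊ + b := by
      rw [Nat.floor_lt (by positivity)]
      push_cast
      rw [← hBdef, pow_succ]
      calc B ^ j * B * x = B * (B ^ j * x) := by ring
        _ < B * ((⌊B ^ j * x⌋₊ : ℝ) + 1) :=
            mul_lt_mul_of_pos_left (Nat.lt_floor_add_one _) hB0
        _ = B * (⌊B ^ j * x⌋₊ : ℝ) + B := by ring
    refine ⟨⌊B ^ (j + 1) * x⌋₊ - b * ⌊B ^ j * x⌋₊, ?_, ?_⟩ <;> omega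
  -- bound on cCoeff
  have hc : ∀ j : ℕ, |cCoeff b s α x (j + 1)| ≤ C * (B ^ j * M) ^ β := by
    intro j
    obtain ⟨i, hi, hfl⟩ := hfloor j
    have hcc : cCoeff b s α x (j + 1) =
        (s (b * ⌊B ^ j * x⌋₊ + i) : ℝ) - B ^ α * (s ⌊B ^ j * x⌋₊ : ℝ) := by
      simp only [cCoeff, Nat.add_sub_cancel, ← hBdef, hfl]
    rw [hcc]
    refine le_trans (hql _ i hi) ?_
    have hBj1 : (1:ℝ) ≤ B ^ j := one_le_pow₀ hB1.le
    have hle : max (⌊B ^ j * x⌋₊ : ℝ) 1 ≤ B ^ j * M := by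
      refine max_le ?_ ?_
      · calc (⌊B ^ j * x⌋₊ : ℝ) ≤ B ^ j * x := Nat.floor_le (by positivity)
          _ ≤ B ^ j * M := by
            exact mul_le_mul_of_nonneg_left (le_max_left _ _) (by positivity)
      · calc (1:ℝ) = 1 * 1 := (one_mul 1).symm
          _ ≤ B ^ j * M := mul_le_mul hBj1 hM1 one_pos.le (by positivity)
    exact mul_le_mul_of_nonneg_left
      (Real.rpow_le_rpow (le_trans zero_le_one (le_max_right _ _)) hle hβ0) hC.le
  -- exponent algebra
  have key : ∀ j : ℕ, C * (B ^ j * M) ^ β * B ^ (-(α * ((j : ℝ) + 1))) =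
      (C * M ^ β * B ^ (-α)) * (B ^ (β - α)) ^ j := by
    intro j
    have h1 : ((B ^ j : ℝ)) ^ β = B ^ ((j : ℝ) * β) := by
      rw [← Real.rpow_natCast B j, ← Real.rpow_mul hB0.le]
    have h2 : ((B ^ (β - α) : ℝ)) ^ j = B ^ ((β - α) * (j : ℝ)) := by
      rw [← Real.rpow_natCast (B ^ (β - α)) j, ← Real.rpow_mul hB0.le]
    rw [Real.mul_rpow (by positivity) hM0.le, h1, h2]
    have e1 : B ^ ((j : ℝ) * β) * B ^ (-(α * ((j : ℝ) + 1))) =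
        B ^ (-α) * B ^ ((β - α) * (j : ℝ)) := by
      rw [← Real.rpow_add hB0, ← Real.rpow_add hB0]
      ring_nf
    linear_combination C * M ^ β * e1
  -- summability
  have hfb : ∀ j : ℕ, |f j| ≤ (C * M ^ β * B ^ (-α)) * (B ^ (β - α)) ^ j := by
    intro j
    rw [← key j, hf]
    have hw : |B ^ (-(α * ((j : ℝ) + 1)))| = B ^ (-(α * ((j : ℝ) + 1))) :=
      abs_of_pos (Real.rpow_pos_of_pos hB0 _)
    calc |cCoeff b s α x (j + 1) * B ^ (-(α * ((j : ℝ) + 1)))|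
        = |cCoeff b s α x (j + 1)| * B ^ (-(α * ((j : ℝ) + 1))) := by rw [abs_mul, hw]
      _ ≤ C * (B ^ j * M) ^ β * B ^ (-(α * ((j : ℝ) + 1))) :=
          mul_le_mul_of_nonneg_right (hc j) (Real.rpow_pos_of_pos hB0 _).le
  have hr0 : (0:ℝ) ≤ B ^ (β - α) := (Real.rpow_pos_of_pos hB0 _).le
  have hr1 : B ^ (β - α) < 1 :=
    Real.rpow_lt_one_of_one_lt_of_neg hB1 (by linarith)
  have hgeo : Summable (fun j : ℕ => (C * M ^ β * B ^ (-α)) * (B ^ (β - α)) ^ j) :=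
    (summable_geometric_of_lt_one hr0 hr1).mul_left _
  have habs : Summable (fun j => |f j|) :=
    Summable.of_nonneg_of_le (fun j => abs_nonneg _) hfb hgeo
  have hsumm : Summable f := habs.of_abs
  -- telescoping
  have htel : ∀ j : ℕ, f j = g (j + 1) - g j := by
    intro j
    have e : B ^ α * B ^ (-(α * ((j : ℝ) + 1))) = B ^ (-(α * (j : ℝ))) := by
      rw [← Real.rpow_add hB0]
      ring_nf
    simp only [hf, hg, cCoeff, Nat.add_sub_cancel, ← hBdef]
    push_cast
    linear_combination (-(s ⌊B ^ j * x⌋₊ : ℝ)) * e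
  have hpart : ∀ N, ∑ j ∈ Finset.range N, f j = g N - g 0 := by
    intro N
    calc ∑ j ∈ Finset.range N, f j = ∑ j ∈ Finset.range N, (g (j + 1) - g j) :=
          Finset.sum_congr rfl (fun j _ => htel j)
      _ = g N - g 0 := Finset.sum_range_sub g N
  have hg0 : g 0 = (s ⌊x⌋₊ : ℝ) := by
    simp [hg]
  -- limit of g
  have hgl : Tendsto g atTop (nhds (x ^ α * Λ x)) := by
    have h := (hΛ x hx).const_mul (x ^ α)
    refine h.congr (fun k => ?_)
    have hxa : (0:ℝ) < x ^ α := Real.rpow_pos_of_pos hx α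
    have hBk : ((B ^ k * x) : ℝ) ^ α = B ^ (α * (k : ℝ)) * x ^ α := by
      rw [Real.mul_rpow (by positivity) hx.le, ← Real.rpow_natCast B k,
        ← Real.rpow_mul hB0.le, mul_comm (k:ℝ) α]
    have hBne : B ^ (α * (k : ℝ)) ≠ 0 := (Real.rpow_pos_of_pos hB0 _).ne'
    rw [hg]
    simp only [← hBdef]
    rw [hBk, Real.rpow_neg hB0.le]
    field_simp
  -- conclusion
  have hps : Tendsto (fun N => ∑ j ∈ Finset.range N, f j) atTop (nhds (aS s α Λ x)) := by
    refine Tendsto.congr (fun N => (hpart N).symm) ?_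
    rw [hg0, show aS s α Λ x = x ^ α * Λ x - (s ⌊x⌋₊ : ℝ) from rfl]
    exact hgl.sub_const _
  have hts : ∑' j, f j = aS s α Λ x :=
    tendsto_nhds_unique hsumm.hasSum.tendsto_sum_nat hps
  exact hts ▸ hsumm.hasSum
end

section
/- Let s be quasi-linear in base b with constant C > 0 and exponents α > β ≥ 0, where α > 0, and let λ_s be its (continuous) limit function. Then for all real u, v with 0 < u < v < 1, the Hausdorff dimension of {(x, a_s(x)) : u < x < v} ⊆ ℝ² is at most the Hausdorff dimension of {(x, λ_s(x)) : u < x < v} ⊆ ℝ². -/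
open Filter

/-- `x ↦ x^α` is Lipschitz on `Icc u v ⊆ (0,1)`. -/
lemma rpow_lipschitz (α u v : ℝ) (hα : 0 < α) (hu : 0 < u) (huv : u < v) (hv : v < 1) :
    LipschitzOnWith (α * max (u ^ (α - 1)) 1).toNNReal
      (fun x : ℝ => x ^ α) (Set.Icc u v) := by
  apply (convex_Icc u v).lipschitzOnWith_of_nnnorm_deriv_le
  · intro x hx
    exact (Real.hasDerivAt_rpow_const (Or.inl (lt_of_lt_of_le hu hx.1).ne')).differentiableAt
  · intro x hx
    obtain ⟨hx1, hx2⟩ := hx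
    have hx0 : 0 < x := lt_of_lt_of_le hu hx1
    have hd : deriv (fun x : ℝ => x ^ α) x = α * x ^ (α - 1) :=
      (Real.hasDerivAt_rpow_const (Or.inl hx0.ne')).deriv
    rw [← NNReal.coe_le_coe, coe_nnnorm, hd, Real.coe_toNNReal _ (by positivity)]
    rw [Real.norm_eq_abs, abs_of_nonneg (by positivity)]
    gcongr
    rcases le_or_gt 1 α with h1 | h1
    · exact le_max_of_le_right (Real.rpow_le_one hx0.le (hx2.trans hv.le) (by linarith))
    · exact le_max_of_le_left (Real.rpow_le_rpow_of_nonpos hu hx1 (by linarith))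

/-- For a quasi-linear sequence `s` with exponents `α > β ≥ 0`, `α > 0`, and `0 < u < v < 1`,
the Hausdorff dimension of the graph of `a_s` over `(u,v)` is at most that of the graph of
the limit function `λ_s` over `(u,v)`. -/
theorem dimH_graph_aS_le_dimH_graph_lambda_s
    (b : ℕ) (hb : 2 ≤ b) (s : ℕ → ℤ) (α β C : ℝ)
    (hβ0 : 0 ≤ β) (hαβ : β < α) (hα : 0 < α) (hC : 0 < C)
    (hαs : sInf {x : ℝ | 0 ≤ x ∧
        Tendsto (fun n : ℕ => |(s n : ℝ)| / (n : ℝ) ^ x) atTop (nhds 0)} = α)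
    (hβs : sInf {x : ℝ | 0 ≤ x ∧
        Tendsto (fun n : ℕ => |(s (n + 1) : ℝ) - (s n : ℝ)| / (n : ℝ) ^ x) atTop (nhds 0)} = β)
    (hql : ∀ n i : ℕ, i ≤ b - 1 →
      |(s (b * n + i) : ℝ) - (b : ℝ) ^ α * (s n : ℝ)| ≤ C * (max (n : ℝ) 1) ^ β)
    (Λ : ℝ → ℝ) (hΛcont : ContinuousOn Λ (Set.Ioi 0))
    (hΛ : ∀ x : ℝ, 0 < x →
      Tendsto (fun k : ℕ => (s ⌊(b : ℝ) ^ k * x⌋₊ : ℝ) / ((b : ℝ) ^ k * x) ^ α)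
        atTop (nhds (Λ x)))
    (u v : ℝ) (hu : 0 < u) (huv : u < v) (hv : v < 1) :
    dimH {p : ℝ × ℝ | ∃ x : ℝ, u < x ∧ x < v ∧ p = (x, aS s α Λ x)} ≤
      dimH {p : ℝ × ℝ | ∃ x : ℝ, u < x ∧ x < v ∧ p = (x, Λ x)} := by
  -- bound on Λ over [u,v]
  obtain ⟨M, hM⟩ := isCompact_Icc.exists_bound_of_continuousOn
    (hΛcont.mono (fun x hx => lt_of_lt_of_le hu hx.1))
  set M' : ℝ := max M 0 with hM'def
  have hM'0 : 0 ≤ M' := le_max_right _ _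
  have hMb : ∀ x ∈ Set.Icc u v, |Λ x| ≤ M' := fun x hx =>
    (Real.norm_eq_abs _ ▸ hM x hx).trans (le_max_left _ _)
  -- Lipschitz constant for x^α
  set D : ℝ := α * max (u ^ (α - 1)) 1 with hDdef
  have hD0 : 0 ≤ D := by positivity
  have hDlip := rpow_lipschitz α u v hα hu huv hv
  -- the map
  set f : ℝ × ℝ → ℝ × ℝ := fun p => (p.1, p.1 ^ α * p.2 - (s 0 : ℝ)) with hfdef
  set K : Set (ℝ × ℝ) := Set.Icc u v ×ˢ Set.Icc (-M') M' with hKdef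
  have hLip : LipschitzOnWith (1 + M' * D).toNNReal f K := by
    rw [lipschitzOnWith_iff_dist_le_mul]
    rintro ⟨x1, y1⟩ ⟨hx1, hy1⟩ ⟨x2, y2⟩ ⟨hx2, hy2⟩
    have hcoe : ((1 + M' * D).toNNReal : ℝ) = 1 + M' * D :=
      Real.coe_toNNReal _ (by positivity)
    rw [Prod.dist_eq, hcoe]
    have hd1 : dist x1 x2 ≤ dist (x1, y1) (x2, y2) := by
      rw [Prod.dist_eq]; exact le_max_left _ _
    have hd2 : dist y1 y2 ≤ dist (x1, y1) (x2, y2) := by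
      rw [Prod.dist_eq]; exact le_max_right _ _
    have hdnn : (0:ℝ) ≤ dist (x1, y1) (x2, y2) := dist_nonneg
    apply max_le
    · simp only [f]
      calc dist x1 x2 ≤ 1 * dist (x1, y1) (x2, y2) := by linarith
        _ ≤ (1 + M' * D) * dist (x1, y1) (x2, y2) := by nlinarith [mul_nonneg hM'0 hD0]
    · simp only [f]
      have key : dist (x1 ^ α * y1 - (s 0 : ℝ)) (x2 ^ α * y2 - (s 0 : ℝ))
          = |x1 ^ α * y1 - x2 ^ α * y2| := by
        rw [Real.dist_eq]; ring_nf
      rw [key]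
      have hsplit : |x1 ^ α * y1 - x2 ^ α * y2|
          ≤ x1 ^ α * |y1 - y2| + |y2| * |x1 ^ α - x2 ^ α| := by
        have : x1 ^ α * y1 - x2 ^ α * y2
            = x1 ^ α * (y1 - y2) + y2 * (x1 ^ α - x2 ^ α) := by ring
        rw [this]
        refine (abs_add_le _ _).trans ?_
        rw [abs_mul, abs_mul, abs_of_nonneg (Real.rpow_nonneg (le_of_lt (lt_of_lt_of_le hu hx1.1)) α)]
      have hx1le : x1 ^ α ≤ 1 :=
        Real.rpow_le_one (le_of_lt (lt_of_lt_of_le hu hx1.1)) (hx1.2.trans hv.le) hα.le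
      have hy2b : |y2| ≤ M' := abs_le.mpr hy2
      have hrp : |x1 ^ α - x2 ^ α| ≤ D * |x1 - x2| := by
        have := (lipschitzOnWith_iff_dist_le_mul.mp hDlip) x1 hx1 x2 hx2
        rwa [Real.dist_eq, Real.dist_eq, Real.coe_toNNReal _ hD0] at this
      have h1 : x1 ^ α * |y1 - y2| ≤ 1 * dist (x1, y1) (x2, y2) := by
        rw [one_mul]
        calc x1 ^ α * |y1 - y2| ≤ 1 * |y1 - y2| := by
              apply mul_le_mul_of_nonneg_right hx1le (abs_nonneg _)
          _ = dist y1 y2 := by rw [one_mul, Real.dist_eq]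
          _ ≤ _ := hd2
      have h2 : |y2| * |x1 ^ α - x2 ^ α| ≤ M' * D * dist (x1, y1) (x2, y2) := by
        calc |y2| * |x1 ^ α - x2 ^ α| ≤ M' * (D * |x1 - x2|) :=
              mul_le_mul hy2b hrp (abs_nonneg _) hM'0
          _ = M' * D * |x1 - x2| := by ring
          _ ≤ M' * D * dist (x1, y1) (x2, y2) := by
              apply mul_le_mul_of_nonneg_left _ (mul_nonneg hM'0 hD0)
              rw [← Real.dist_eq]; exact hd1
      calc |x1 ^ α * y1 - x2 ^ α * y2| ≤ x1 ^ α * |y1 - y2| + |y2| * |x1 ^ α - x2 ^ α| := hsplit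
        _ ≤ 1 * dist (x1, y1) (x2, y2) + M' * D * dist (x1, y1) (x2, y2) := add_le_add h1 h2
        _ = (1 + M' * D) * dist (x1, y1) (x2, y2) := by ring
  -- graph of aS is the image of graph of Λ
  set S : Set (ℝ × ℝ) := {p : ℝ × ℝ | ∃ x : ℝ, u < x ∧ x < v ∧ p = (x, Λ x)} with hSdef
  have hSK : S ⊆ K := by
    rintro p ⟨x, hx1, hx2, rfl⟩
    exact ⟨⟨hx1.le, hx2.le⟩, abs_le.mp (hMb x ⟨hx1.le, hx2.le⟩)⟩
  have himg : {p : ℝ × ℝ | ∃ x : ℝ, u < x ∧ x < v ∧ p = (x, aS s α Λ x)} = f '' S := by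
    ext p
    constructor
    · rintro ⟨x, hx1, hx2, rfl⟩
      refine ⟨(x, Λ x), ⟨x, hx1, hx2, rfl⟩, ?_⟩
      have hfl : ⌊x⌋₊ = 0 := Nat.floor_eq_zero.mpr (hx2.trans hv)
      simp [f, aS, hfl]
    · rintro ⟨q, ⟨x, hx1, hx2, rfl⟩, rfl⟩
      refine ⟨x, hx1, hx2, ?_⟩
      have hfl : ⌊x⌋₊ = 0 := Nat.floor_eq_zero.mpr (hx2.trans hv)
      simp [f, aS, hfl]
  rw [himg]
  exact (hLip.mono hSK).dimH_image_le
end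

section
/- Let s be quasi-linear in base b with constant C > 0 and exponents α > β ≥ 0. Then for every integer n ≥ 1, every x ∈ [0,1], and every y in the b-adic interval I_{n−1}(x) := [⌊b^{n−1}x⌋/b^{n−1}, (⌊b^{n−1}x⌋+1)/b^{n−1}) containing x, one has |g_n(x) − g_n(y)| ≤ 2C·b^{−n(α−β)} and |g_n(x) − g_{n−1}(y)| ≤ 3C·b^{−n(α−β)}. -/
open Filter

/-- `g_n(x) := Σ_{j=1}^n c(j,x)·b^{−αj}`. -/
noncomputable def gPartial (b : ℕ) (s : ℕ → ℤ) (α : ℝ) (x : ℝ) (n : ℕ) : ℝ :=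
  ∑ j ∈ Finset.Icc 1 n, cCoeff b s α x j * (b : ℝ) ^ (-(α * (j : ℝ)))

lemma floor_mul_decomp (b : ℕ) (hb : 2 ≤ b) (t : ℝ) :
    ∃ i : ℕ, i ≤ b - 1 ∧ ⌊(b : ℝ) * t⌋₊ = b * ⌊t⌋₊ + i := by
  have hb0 : (0:ℝ) < (b:ℝ) := by positivity
  rcases lt_or_ge t 0 with ht | ht
  · refine ⟨0, Nat.zero_le _, ?_⟩
    rw [Nat.floor_of_nonpos (by nlinarith), Nat.floor_of_nonpos ht.le]
    simp
  · have h1 : b * ⌊t⌋₊ ≤ ⌊(b:ℝ) * t⌋₊ := by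
      apply Nat.le_floor
      push_cast
      exact mul_le_mul_of_nonneg_left (Nat.floor_le ht) hb0.le
    have h2 : ⌊(b:ℝ) * t⌋₊ < b * ⌊t⌋₊ + b := by
      rw [Nat.floor_lt (by positivity)]
      push_cast
      nlinarith [Nat.lt_floor_add_one t]
    exact ⟨⌊(b:ℝ) * t⌋₊ - b * ⌊t⌋₊, by omega, by omega⟩

lemma cCoeff_abs_le (b : ℕ) (hb : 2 ≤ b) (s : ℕ → ℤ) (α β C : ℝ)
    (hql : ∀ n i : ℕ, i ≤ b - 1 →
      |(s (b * n + i) : ℝ) - (b : ℝ) ^ α * (s n : ℝ)| ≤ C * (max (n : ℝ) 1) ^ β)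
    (x : ℝ) (j : ℕ) (hj : 1 ≤ j) :
    |cCoeff b s α x j| ≤ C * (max ((⌊(b : ℝ) ^ (j - 1) * x⌋₊ : ℕ) : ℝ) 1) ^ β := by
  obtain ⟨i, hi, hdec⟩ := floor_mul_decomp b hb ((b : ℝ) ^ (j - 1) * x)
  have hpow : (b:ℝ) ^ j = (b:ℝ) * (b:ℝ) ^ (j - 1) := by
    conv_lhs => rw [show j = 1 + (j - 1) by omega]
    rw [pow_add, pow_one]
  have hfl : ⌊(b:ℝ) ^ j * x⌋₊ = b * ⌊(b:ℝ) ^ (j - 1) * x⌋₊ + i := by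
    rw [hpow, mul_assoc]; exact hdec
  rw [cCoeff, hfl]
  exact hql _ i hi

lemma floor_pow_eq (b : ℕ) (hb : 2 ≤ b) (x y : ℝ) (m : ℕ)
    (hfl : ⌊(b : ℝ) ^ m * x⌋₊ = ⌊(b : ℝ) ^ m * y⌋₊) :
    ∀ j ≤ m, ⌊(b : ℝ) ^ j * x⌋₊ = ⌊(b : ℝ) ^ j * y⌋₊ := by
  intro j hj
  obtain ⟨k, rfl⟩ : ∃ k, m = j + k := ⟨m - j, by omega⟩
  have key : ∀ t : ℝ, ⌊(b : ℝ) ^ j * t⌋₊ = ⌊(b : ℝ) ^ (j + k) * t⌋₊ / b ^ k := by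
    intro t
    have hbk : (0:ℝ) < (b:ℝ) ^ k := by positivity
    have h : (b:ℝ) ^ j * t = ((b:ℝ) ^ (j + k) * t) / ((b ^ k : ℕ) : ℝ) := by
      push_cast
      rw [pow_add]
      field_simp
    rw [h, Nat.floor_div_natCast]
  rw [key x, key y, hfl]

/-- For a quasi-linear sequence `s`, for all `n ≥ 1`, `x ∈ [0,1]` and `y` in the `b`-adic
interval `I_{n−1}(x)` containing `x`, `|g_n(x) − g_n(y)| ≤ 2C·b^{−n(α−β)}` and
`|g_n(x) − g_{n−1}(y)| ≤ 3C·b^{−n(α−β)}`. -/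
theorem abs_gPartial_sub_le
    (b : ℕ) (hb : 2 ≤ b) (s : ℕ → ℤ) (α β C : ℝ)
    (hβ0 : 0 ≤ β) (hαβ : β < α) (hC : 0 < C)
    (hαs : sInf {x : ℝ | 0 ≤ x ∧
        Tendsto (fun n : ℕ => |(s n : ℝ)| / (n : ℝ) ^ x) atTop (nhds 0)} = α)
    (hβs : sInf {x : ℝ | 0 ≤ x ∧
        Tendsto (fun n : ℕ => |(s (n + 1) : ℝ) - (s n : ℝ)| / (n : ℝ) ^ x) atTop (nhds 0)} = β)
    (hql : ∀ n i : ℕ, i ≤ b - 1 →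
      |(s (b * n + i) : ℝ) - (b : ℝ) ^ α * (s n : ℝ)| ≤ C * (max (n : ℝ) 1) ^ β) :
    ∀ n : ℕ, 1 ≤ n → ∀ x : ℝ, 0 ≤ x → x ≤ 1 → ∀ y : ℝ,
      (⌊(b : ℝ) ^ (n - 1) * x⌋₊ : ℝ) / b ^ (n - 1) ≤ y →
      y < ((⌊(b : ℝ) ^ (n - 1) * x⌋₊ : ℝ) + 1) / b ^ (n - 1) →
      |gPartial b s α x n - gPartial b s α y n| ≤
          2 * C * (b : ℝ) ^ (-((n : ℝ) * (α - β))) ∧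
        |gPartial b s α x n - gPartial b s α y (n - 1)| ≤
          3 * C * (b : ℝ) ^ (-((n : ℝ) * (α - β))) := by
  intro n hn x hx0 hx1 y hy1 hy2
  obtain ⟨m, rfl⟩ : ∃ m, n = m + 1 := ⟨n - 1, by omega⟩
  simp only [Nat.add_sub_cancel] at hy1 hy2 ⊢
  have hb0 : (0:ℝ) < (b:ℝ) := by positivity
  have hb1 : (1:ℝ) ≤ (b:ℝ) := by exact_mod_cast hb.trans' (by norm_num)
  have hbm : (0:ℝ) < (b:ℝ) ^ m := by positivity
  set N : ℕ := ⌊(b : ℝ) ^ m * x⌋₊ with hN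
  have hy0 : 0 ≤ y := le_trans (by positivity) hy1
  have hNle : (N : ℝ) ≤ (b:ℝ) ^ m * y := by
    rw [div_le_iff₀ hbm] at hy1; linarith
  have hNlt : (b:ℝ) ^ m * y < (N : ℝ) + 1 := by
    rw [lt_div_iff₀ hbm] at hy2; linarith
  have hNy : ⌊(b : ℝ) ^ m * y⌋₊ = N := by
    rw [Nat.floor_eq_iff (mul_nonneg hbm.le hy0)]
    exact ⟨hNle, by push_cast; linarith⟩
  have hfl := floor_pow_eq b hb x y m (by rw [hNy])
  have hgm : gPartial b s α x m = gPartial b s α y m := by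
    unfold gPartial
    refine Finset.sum_congr rfl fun j hj => ?_
    rw [Finset.mem_Icc] at hj
    rw [cCoeff, cCoeff, hfl j hj.2, hfl (j - 1) (by omega)]
  have hsplit : ∀ z : ℝ, gPartial b s α z (m + 1) =
      gPartial b s α z m + cCoeff b s α z (m + 1) * (b : ℝ) ^ (-(α * ((m + 1 : ℕ) : ℝ))) := by
    intro z
    unfold gPartial
    exact Finset.sum_Icc_succ_top (by omega) _
  have hNb : (N : ℝ) ≤ (b:ℝ) ^ m := by
    have h1 : (N : ℝ) ≤ (b:ℝ) ^ m * x := Nat.floor_le (by positivity)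
    nlinarith
  -- key bound on the top term
  have key : ∀ z : ℝ, ⌊(b : ℝ) ^ m * z⌋₊ = N →
      |cCoeff b s α z (m + 1) * (b : ℝ) ^ (-(α * ((m + 1 : ℕ) : ℝ)))| ≤
        C * (b : ℝ) ^ (-(((m + 1 : ℕ) : ℝ) * (α - β))) := by
    intro z hz
    have h1 : |cCoeff b s α z (m + 1)| ≤ C * (max (N : ℝ) 1) ^ β := by
      have h := cCoeff_abs_le b hb s α β C hql z (m + 1) (by omega)
      simpa [hz] using h
    have hmaxle : (max (N : ℝ) 1) ≤ (b:ℝ) ^ m := max_le hNb (one_le_pow₀ hb1)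
    have h2 : (max (N : ℝ) 1) ^ β ≤ ((b:ℝ) ^ m) ^ β :=
      Real.rpow_le_rpow (le_trans zero_le_one (le_max_right _ _)) hmaxle hβ0
    have e1 : ((b:ℝ) ^ m) ^ β = (b:ℝ) ^ ((m:ℝ) * β) := by
      rw [← Real.rpow_natCast (b:ℝ) m, ← Real.rpow_mul hb0.le]
    have e2 : (b:ℝ) ^ ((m:ℝ) * β) * (b:ℝ) ^ (-(α * ((m + 1 : ℕ) : ℝ))) =
        (b:ℝ) ^ ((m:ℝ) * β + -(α * ((m + 1 : ℕ) : ℝ))) := (Real.rpow_add hb0 _ _).symm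
    have e3 : (b:ℝ) ^ ((m:ℝ) * β + -(α * ((m + 1 : ℕ) : ℝ))) ≤
        (b:ℝ) ^ (-(((m + 1 : ℕ) : ℝ) * (α - β))) := by
      apply Real.rpow_le_rpow_of_exponent_le hb1
      push_cast
      nlinarith
    have Bpos : (0:ℝ) < (b : ℝ) ^ (-(α * ((m + 1 : ℕ) : ℝ))) := Real.rpow_pos_of_pos hb0 _
    calc |cCoeff b s α z (m + 1) * (b : ℝ) ^ (-(α * ((m + 1 : ℕ) : ℝ)))|
        = |cCoeff b s α z (m + 1)| * (b : ℝ) ^ (-(α * ((m + 1 : ℕ) : ℝ))) := by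
          rw [abs_mul, abs_of_pos Bpos]
      _ ≤ (C * (max (N : ℝ) 1) ^ β) * (b : ℝ) ^ (-(α * ((m + 1 : ℕ) : ℝ))) :=
          mul_le_mul_of_nonneg_right h1 Bpos.le
      _ ≤ (C * ((b:ℝ) ^ m) ^ β) * (b : ℝ) ^ (-(α * ((m + 1 : ℕ) : ℝ))) :=
          mul_le_mul_of_nonneg_right (mul_le_mul_of_nonneg_left h2 hC.le) Bpos.le
      _ = C * (b:ℝ) ^ ((m:ℝ) * β + -(α * ((m + 1 : ℕ) : ℝ))) := by rw [e1, mul_assoc, e2]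
      _ ≤ C * (b : ℝ) ^ (-(((m + 1 : ℕ) : ℝ) * (α - β))) :=
          mul_le_mul_of_nonneg_left e3 hC.le
  have kx := key x hN.symm
  have ky := key y hNy
  have Epos : (0:ℝ) < (b : ℝ) ^ (-(((m + 1 : ℕ) : ℝ) * (α - β))) := Real.rpow_pos_of_pos hb0 _
  constructor
  · have hd : gPartial b s α x (m + 1) - gPartial b s α y (m + 1) =
        cCoeff b s α x (m + 1) * (b : ℝ) ^ (-(α * ((m + 1 : ℕ) : ℝ))) -
        cCoeff b s α y (m + 1) * (b : ℝ) ^ (-(α * ((m + 1 : ℕ) : ℝ))) := by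
      rw [hsplit x, hsplit y, hgm]; ring
    rw [hd]
    have := abs_sub (cCoeff b s α x (m + 1) * (b : ℝ) ^ (-(α * ((m + 1 : ℕ) : ℝ))))
      (cCoeff b s α y (m + 1) * (b : ℝ) ^ (-(α * ((m + 1 : ℕ) : ℝ))))
    linarith
  · have hd : gPartial b s α x (m + 1) - gPartial b s α y m =
        cCoeff b s α x (m + 1) * (b : ℝ) ^ (-(α * ((m + 1 : ℕ) : ℝ))) := by
      rw [hsplit x, hgm]; ring
    rw [hd]
    nlinarith [kx, Epos]
end

section
/- Let s be quasi-linear in base b with constant C > 0 and exponents α > β ≥ 0. Then for every integer n ≥ 1, every integer k with 0 ≤ k ≤ b^n − 1, and every integer i with 0 ≤ i ≤ b − 1, the rectangle E_{n+1,bk+i} is contained in E_{n,k}; consequently E_{n+1} := ∪_{k=0}^{b^{n+1}−1} E_{n+1,k} ⊆ E_n := ∪_{k=0}^{b^n−1} E_{n,k}. -/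
open Filter

/-- `D₄ := ⌊3/(b^{α−β} − 1)⌋ + 1`. -/
noncomputable def D4 (b : ℕ) (α β : ℝ) : ℝ :=
  (⌊3 / ((b : ℝ) ^ (α - β) - 1)⌋ : ℝ) + 1

/-- The rectangle
`E_{n,k} = [k/b^n, (k+1)/b^n) × [g_n(k/b^n) − D₄·C·b^{−n(α−β)}, g_n(k/b^n) + D₄·C·b^{−n(α−β)}]`. -/
noncomputable def Erect (b : ℕ) (s : ℕ → ℤ) (α β C : ℝ) (n k : ℕ) : Set (ℝ × ℝ) :=
  Set.Ico ((k : ℝ) / b ^ n) (((k : ℝ) + 1) / b ^ n) ×ˢ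
    Set.Icc (gPartial b s α ((k : ℝ) / b ^ n) n - D4 b α β * C * (b : ℝ) ^ (-((n : ℝ) * (α - β))))
      (gPartial b s α ((k : ℝ) / b ^ n) n + D4 b α β * C * (b : ℝ) ^ (-((n : ℝ) * (α - β))))

private lemma divkey (b k i m : ℕ) (hb : 0 < b) (hi : i < b) :
    (b * k + i) / b ^ (m + 1) = k / b ^ m := by
  rw [pow_succ', ← Nat.div_div_eq_div_mul, Nat.mul_add_div hb, Nat.div_eq_of_lt hi, add_zero]

private lemma floor_key (b N e m : ℕ) (hb : 0 < b) (hm : m ≤ e) :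
    ⌊(b:ℝ) ^ m * ((N:ℝ) / (b:ℝ) ^ e)⌋₊ = N / b ^ (e - m) := by
  have hb0 : (0:ℝ) < (b:ℝ) := by exact_mod_cast hb
  have he : (b:ℝ) ^ m * ((N:ℝ) / (b:ℝ) ^ e) = (N:ℝ) / ((b ^ (e - m) : ℕ) : ℝ) := by
    push_cast
    rw [show e = (e - m) + m by omega, pow_add]
    field_simp
    rw [Nat.add_sub_cancel]
  rw [he, Nat.floor_div_natCast, Nat.floor_natCast]

private lemma gPartial_succ (b : ℕ) (hb : 2 ≤ b) (s : ℕ → ℤ) (α : ℝ) (n k i : ℕ) (hi : i < b) :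
    gPartial b s α (((b * k + i : ℕ) : ℝ) / (b:ℝ) ^ (n+1)) (n+1)
      = gPartial b s α ((k : ℝ) / (b:ℝ) ^ n) n
        + ((s (b*k+i) : ℝ) - (b:ℝ) ^ α * (s k : ℝ)) * (b:ℝ) ^ (-(α * ((n+1 : ℕ) : ℝ))) := by
  have hbpos : 0 < b := by omega
  unfold gPartial
  rw [Finset.sum_Icc_succ_top (by omega : 1 ≤ n+1)]
  congr 1
  · apply Finset.sum_congr rfl
    intro j hj
    rw [Finset.mem_Icc] at hj
    obtain ⟨hj1, hj2⟩ := hj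
    unfold cCoeff
    rw [floor_key b (b*k+i) (n+1) j hbpos (by omega),
        floor_key b (b*k+i) (n+1) (j-1) hbpos (by omega),
        floor_key b k n j hbpos (by omega),
        floor_key b k n (j-1) hbpos (by omega),
        show n+1-j = (n-j)+1 by omega,
        show n+1-(j-1) = (n-(j-1))+1 by omega,
        divkey b k i (n-j) hbpos hi,
        divkey b k i (n-(j-1)) hbpos hi]
  · unfold cCoeff
    rw [floor_key b (b*k+i) (n+1) (n+1) hbpos le_rfl,
        show n+1-(n+1) = 0 by omega,
        floor_key b (b*k+i) (n+1) (n+1-1) hbpos (by omega),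
        show n+1-(n+1-1) = 0+1 by omega,
        divkey b k i 0 hbpos hi]
    simp

private lemma key_ineq (b : ℕ) (hb : 2 ≤ b) (α β C : ℝ)
    (hβ0 : 0 ≤ β) (hαβ : β < α) (hC : 0 < C) (n : ℕ) :
    C * ((b:ℝ) ^ n) ^ β * (b:ℝ) ^ (-(α * ((n+1 : ℕ) : ℝ)))
      + D4 b α β * C * (b:ℝ) ^ (-(((n+1 : ℕ) : ℝ) * (α - β)))
      ≤ D4 b α β * C * (b:ℝ) ^ (-((n : ℝ) * (α - β))) := by
  have hb0 : (0:ℝ) < (b:ℝ) := by exact_mod_cast (by omega : 0 < b)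
  have hb1 : (1:ℝ) < (b:ℝ) := by exact_mod_cast (by omega : 1 < b)
  push_cast
  set t := (b:ℝ) ^ (α - β) with ht
  have htpos : 0 < t := Real.rpow_pos_of_pos hb0 _
  have ht1 : 1 < t := by
    rw [ht]
    exact Real.one_lt_rpow_iff_of_pos hb0 |>.mpr (Or.inl ⟨hb1, by linarith⟩)
  have hD4 : 3 / (t - 1) < D4 b α β := by
    simp only [D4, ← ht]
    exact Int.lt_floor_add_one _
  have hD4pos : 0 < D4 b α β := lt_of_le_of_lt (div_nonneg (by norm_num) (by linarith)) hD4
  have e1 : ((b:ℝ) ^ n) ^ β * (b:ℝ) ^ (-(α * ((n:ℝ)+1)))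
      = (b:ℝ) ^ (-((n:ℝ) * (α - β))) * (b:ℝ) ^ (-α) := by
    rw [← Real.rpow_natCast (b:ℝ) n, ← Real.rpow_mul hb0.le, ← Real.rpow_add hb0,
        ← Real.rpow_add hb0]
    congr 1
    ring
  have e2 : (b:ℝ) ^ (-(((n:ℝ)+1) * (α - β)))
      = (b:ℝ) ^ (-((n:ℝ) * (α - β))) * (b:ℝ) ^ (-(α - β)) := by
    rw [← Real.rpow_add hb0]
    congr 1
    ring
  have hmulassoc : C * ((b:ℝ) ^ n) ^ β * (b:ℝ) ^ (-(α * ((n:ℝ)+1)))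
      = C * (((b:ℝ) ^ n) ^ β * (b:ℝ) ^ (-(α * ((n:ℝ)+1)))) := by ring
  rw [hmulassoc, e1, e2]
  set Z := (b:ℝ) ^ (-((n:ℝ) * (α - β))) with hZ
  have hZpos : 0 < Z := Real.rpow_pos_of_pos hb0 _
  have hu : (b:ℝ) ^ (-(α - β)) = t⁻¹ := by
    rw [Real.rpow_neg hb0.le, ht]
  have hα : (b:ℝ) ^ (-α) ≤ t⁻¹ := by
    rw [← hu]
    exact Real.rpow_le_rpow_of_exponent_le hb1.le (by linarith)
  have h3 : 3 < D4 b α β * (t - 1) := by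
    rw [div_lt_iff₀ (by linarith)] at hD4
    linarith
  have htinv : t⁻¹ * t = 1 := inv_mul_cancel₀ (ne_of_gt htpos)
  have hbapos : 0 < (b:ℝ) ^ (-α) := Real.rpow_pos_of_pos hb0 _
  have step : (b:ℝ) ^ (-α) + D4 b α β * t⁻¹ ≤ D4 b α β := by
    nlinarith [mul_le_mul_of_nonneg_right hα htpos.le, htinv, h3, hD4pos, htpos]
  rw [hu]
  nlinarith [mul_le_mul_of_nonneg_left step (mul_pos hC hZpos).le]

private lemma Erect_step (b : ℕ) (hb : 2 ≤ b) (s : ℕ → ℤ) (α β C : ℝ)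
    (hβ0 : 0 ≤ β) (hαβ : β < α) (hC : 0 < C)
    (hql : ∀ n i : ℕ, i ≤ b - 1 →
      |(s (b * n + i) : ℝ) - (b : ℝ) ^ α * (s n : ℝ)| ≤ C * (max (n : ℝ) 1) ^ β)
    (n k i : ℕ) (hk : k ≤ b ^ n - 1) (hi : i ≤ b - 1) :
    Erect b s α β C (n + 1) (b * k + i) ⊆ Erect b s α β C n k := by
  have hbpos : 0 < b := by omega
  have hb0 : (0:ℝ) < (b:ℝ) := by exact_mod_cast hbpos
  have hbn : (0:ℝ) < (b:ℝ) ^ n := by positivity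
  have hbn1 : (0:ℝ) < (b:ℝ) ^ (n+1) := by positivity
  have hib : i < b := by omega
  have hkbn : k < b ^ n := by
    have := pow_pos hbpos n
    omega
  unfold Erect
  apply Set.prod_mono
  · apply Set.Ico_subset_Ico
    · rw [div_le_div_iff₀ hbn hbn1]
      push_cast
      rw [pow_succ]
      nlinarith [mul_nonneg (Nat.cast_nonneg i : (0:ℝ) ≤ i) hbn.le]
    · rw [div_le_div_iff₀ hbn1 hbn]
      push_cast
      rw [pow_succ]
      have hi1 : (i:ℝ) + 1 ≤ (b:ℝ) := by exact_mod_cast Nat.succ_le_of_lt hib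
      nlinarith [mul_le_mul_of_nonneg_right hi1 hbn.le]
  · rw [gPartial_succ b hb s α n k i hib]
    set c := (s (b*k+i) : ℝ) - (b:ℝ) ^ α * (s k : ℝ) with hc
    set w := (b:ℝ) ^ (-(α * ((n+1 : ℕ) : ℝ))) with hw
    have hwpos : 0 < w := Real.rpow_pos_of_pos hb0 _
    have hcb : |c| ≤ C * ((b:ℝ) ^ n) ^ β := by
      refine (hql k i hi).trans ?_
      apply mul_le_mul_of_nonneg_left _ hC.le
      apply Real.rpow_le_rpow (by positivity) _ hβ0
      apply max_le
      · exact_mod_cast Nat.le_of_lt hkbn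
      · exact_mod_cast Nat.one_le_pow n b hbpos
    have habs : |c * w| ≤ C * ((b:ℝ) ^ n) ^ β * w := by
      rw [abs_mul, abs_of_pos hwpos]
      exact mul_le_mul_of_nonneg_right hcb hwpos.le
    have hkey := key_ineq b hb α β C hβ0 hαβ hC n
    rw [← hw] at hkey
    have hM : |c * w| ≤ D4 b α β * C * (b:ℝ) ^ (-((n : ℝ) * (α - β)))
        - D4 b α β * C * (b:ℝ) ^ (-(((n+1 : ℕ) : ℝ) * (α - β))) := by
      have := habs.trans (by linarith [hkey] :
        C * ((b:ℝ) ^ n) ^ β * w ≤ D4 b α β * C * (b:ℝ) ^ (-((n : ℝ) * (α - β)))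
          - D4 b α β * C * (b:ℝ) ^ (-(((n+1 : ℕ) : ℝ) * (α - β))))
      exact this
    rw [abs_le] at hM
    obtain ⟨h1, h2⟩ := hM
    clear_value c w
    apply Set.Icc_subset_Icc
    · linarith
    · linarith


/-- For a quasi-linear sequence `s`: for all `n ≥ 1`, `0 ≤ k ≤ b^n − 1` and `0 ≤ i ≤ b − 1`,
`E_{n+1,bk+i} ⊆ E_{n,k}`; consequently `E_{n+1} ⊆ E_n`. -/
theorem Erect_nested
    (b : ℕ) (hb : 2 ≤ b) (s : ℕ → ℤ) (α β C : ℝ)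
    (hβ0 : 0 ≤ β) (hαβ : β < α) (hC : 0 < C)
    (hαs : sInf {x : ℝ | 0 ≤ x ∧
        Tendsto (fun n : ℕ => |(s n : ℝ)| / (n : ℝ) ^ x) atTop (nhds 0)} = α)
    (hβs : sInf {x : ℝ | 0 ≤ x ∧
        Tendsto (fun n : ℕ => |(s (n + 1) : ℝ) - (s n : ℝ)| / (n : ℝ) ^ x) atTop (nhds 0)} = β)
    (hql : ∀ n i : ℕ, i ≤ b - 1 →
      |(s (b * n + i) : ℝ) - (b : ℝ) ^ α * (s n : ℝ)| ≤ C * (max (n : ℝ) 1) ^ β) :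
    ∀ n : ℕ, 1 ≤ n →
      (∀ k : ℕ, k ≤ b ^ n - 1 → ∀ i : ℕ, i ≤ b - 1 →
        Erect b s α β C (n + 1) (b * k + i) ⊆ Erect b s α β C n k) ∧
      (⋃ k ∈ Finset.range (b ^ (n + 1)), Erect b s α β C (n + 1) k) ⊆
        ⋃ k ∈ Finset.range (b ^ n), Erect b s α β C n k := by
  intro n hn
  have hbpos : 0 < b := by omega
  constructor
  · intro k hk i hi
    exact Erect_step b hb s α β C hβ0 hαβ hC hql n k i hk hi
  · intro p hp
    simp only [Set.mem_iUnion, Finset.mem_range] at hp ⊢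
    obtain ⟨k', hk', hmem⟩ := hp
    have hdiv : k' / b < b ^ n := by
      rw [Nat.div_lt_iff_lt_mul hbpos]
      rw [pow_succ] at hk'
      exact hk'
    refine ⟨k' / b, hdiv, ?_⟩
    have heq : b * (k' / b) + k' % b = k' := Nat.div_add_mod k' b
    have hmod : k' % b ≤ b - 1 := by
      have := Nat.mod_lt k' hbpos
      omega
    have hsub := Erect_step b hb s α β C hβ0 hαβ hC hql n (k'/b) (k'%b) (by omega) hmod
    rw [heq] at hsub
    exact hsub hmem
end

section
/- Let s be quasi-linear in base b with constant C > 0 and exponents α > β ≥ 0, and let λ_s be its (continuous) limit function. Then for every x with 0 < x ≤ 1 and every integer n ≥ 1, |a_s(x) − g_n(x)| ≤ (C/(b^{α−β} − 1))·b^{−n(α−β)}; in particular |a_s(x) − g_n(x)| ≤ D₄·C·b^{−n(α−β)}, where D₄ := ⌊3/(b^{α−β} − 1)⌋ + 1. -/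
open Filter

set_option maxHeartbeats 1000000 in
/-- For a quasi-linear sequence `s`, for every `0 < x ≤ 1` and `n ≥ 1`,
`|a_s(x) − g_n(x)| ≤ (C/(b^{α−β} − 1))·b^{−n(α−β)}`; in particular
`|a_s(x) − g_n(x)| ≤ D₄·C·b^{−n(α−β)}`. -/
theorem abs_aS_sub_gPartial_le
    (b : ℕ) (hb : 2 ≤ b) (s : ℕ → ℤ) (α β C : ℝ)
    (hβ0 : 0 ≤ β) (hαβ : β < α) (hC : 0 < C)
    (hαs : sInf {x : ℝ | 0 ≤ x ∧
        Tendsto (fun n : ℕ => |(s n : ℝ)| / (n : ℝ) ^ x) atTop (nhds 0)} = α)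
    (hβs : sInf {x : ℝ | 0 ≤ x ∧
        Tendsto (fun n : ℕ => |(s (n + 1) : ℝ) - (s n : ℝ)| / (n : ℝ) ^ x) atTop (nhds 0)} = β)
    (hql : ∀ n i : ℕ, i ≤ b - 1 →
      |(s (b * n + i) : ℝ) - (b : ℝ) ^ α * (s n : ℝ)| ≤ C * (max (n : ℝ) 1) ^ β)
    (Λ : ℝ → ℝ) (hΛcont : ContinuousOn Λ (Set.Ioi 0))
    (hΛ : ∀ x : ℝ, 0 < x →
      Tendsto (fun k : ℕ => (s ⌊(b : ℝ) ^ k * x⌋₊ : ℝ) / ((b : ℝ) ^ k * x) ^ α)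
        atTop (nhds (Λ x))) :
    ∀ x : ℝ, 0 < x → x ≤ 1 → ∀ n : ℕ, 1 ≤ n →
      |aS s α Λ x - gPartial b s α x n| ≤
          C / ((b : ℝ) ^ (α - β) - 1) * (b : ℝ) ^ (-((n : ℝ) * (α - β))) ∧
        |aS s α Λ x - gPartial b s α x n| ≤
          D4 b α β * C * (b : ℝ) ^ (-((n : ℝ) * (α - β))) := by
  intro x hx hx1 n hn
  have hb1 : (1 : ℝ) < (b : ℝ) := by exact_mod_cast Nat.lt_of_lt_of_le one_lt_two hb
  have hb0 : (0 : ℝ) < (b : ℝ) := by linarith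
  have hd : 0 < α - β := by linarith
  set r : ℝ := (b : ℝ) ^ (-(α - β)) with hr
  set t : ℝ := (b : ℝ) ^ (α - β) with ht
  have hr0 : 0 < r := Real.rpow_pos_of_pos hb0 _
  have hr1 : r < 1 := Real.rpow_lt_one_of_one_lt_of_neg hb1 (by linarith)
  have ht1 : 1 < t := (Real.one_lt_rpow_iff_of_pos hb0).2 (Or.inl ⟨hb1, hd⟩)
  have hrt : r * t = 1 := by
    rw [hr, ht, ← Real.rpow_add hb0]; simp
  set f : ℕ → ℝ := fun j => (s ⌊(b : ℝ) ^ j * x⌋₊ : ℝ) * (b : ℝ) ^ (-(α * (j : ℝ))) with hf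
  -- single-term identity
  have hterm : ∀ k : ℕ,
      cCoeff b s α x (k + 1) * (b : ℝ) ^ (-(α * ((k + 1 : ℕ) : ℝ))) = f (k + 1) - f k := by
    intro k
    have hpow : (b : ℝ) ^ α * (b : ℝ) ^ (-(α * ((k + 1 : ℕ) : ℝ))) =
        (b : ℝ) ^ (-(α * (k : ℝ))) := by
      rw [← Real.rpow_add hb0]
      congr 1
      push_cast
      ring
    simp only [hf, cCoeff, Nat.add_sub_cancel]
    linear_combination (-((s ⌊(b : ℝ) ^ k * x⌋₊ : ℤ) : ℝ)) * hpow
  -- telescoping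
  have htel : ∀ k : ℕ, gPartial b s α x k = f k - f 0 := by
    intro k
    induction k with
    | zero => simp [gPartial]
    | succ m ih =>
      rw [gPartial, Finset.sum_Icc_succ_top (by omega), ← gPartial, ih, hterm m]
      ring
  have hf0 : f 0 = (s ⌊x⌋₊ : ℝ) := by
    simp [hf]
  -- limit of f
  have hfl : Tendsto f atTop (nhds (x ^ α * Λ x)) := by
    have h1 := (hΛ x hx).const_mul (x ^ α)
    refine h1.congr (fun k => ?_)
    have hbk : (0 : ℝ) < (b : ℝ) ^ k := pow_pos hb0 k
    have hxα : (0 : ℝ) < x ^ α := Real.rpow_pos_of_pos hx α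
    have hsplit : ((b : ℝ) ^ k * x) ^ α = (b : ℝ) ^ (α * (k : ℝ)) * x ^ α := by
      rw [Real.mul_rpow hbk.le hx.le, ← Real.rpow_natCast (b : ℝ) k,
        ← Real.rpow_mul hb0.le]
      ring_nf
    have hbkα : (0 : ℝ) < (b : ℝ) ^ (α * (k : ℝ)) := Real.rpow_pos_of_pos hb0 _
    rw [hsplit]
    simp only [hf]
    rw [Real.rpow_neg hb0.le]
    field_simp
  have htend : Tendsto (gPartial b s α x) atTop (nhds (aS s α Λ x)) := by
    have := hfl.sub_const (f 0)
    refine Tendsto.congr (fun k => (htel k).symm) ?_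
    rw [aS, ← hf0]
    exact this
  -- coefficient bound
  have hstep : ∀ i : ℕ, |f (i + 1) - f i| ≤ C * (b : ℝ) ^ (-α) * r ^ i := by
    intro i
    rw [← hterm i, abs_mul]
    have hcb : |cCoeff b s α x (i + 1)| ≤ C * ((b : ℝ) ^ i) ^ β := by
      set y : ℝ := (b : ℝ) ^ i * x with hy
      have hy0 : (0 : ℝ) ≤ y := by positivity
      set m : ℕ := ⌊y⌋₊ with hm
      have hmy : (m : ℝ) ≤ y := Nat.floor_le hy0
      have hby0 : (0 : ℝ) ≤ (b : ℝ) * y := by positivity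
      have h1 : b * m ≤ ⌊(b : ℝ) * y⌋₊ := by
        apply Nat.le_floor
        push_cast
        nlinarith
      have h2 : ⌊(b : ℝ) * y⌋₊ < b * m + b := by
        have hy1 : y < m + 1 := Nat.lt_floor_add_one y
        have hfl2 : (⌊(b : ℝ) * y⌋₊ : ℝ) ≤ (b : ℝ) * y := Nat.floor_le hby0
        have : (⌊(b : ℝ) * y⌋₊ : ℝ) < ((b * m + b : ℕ) : ℝ) := by
          push_cast
          nlinarith
        exact_mod_cast this
      set i2 : ℕ := ⌊(b : ℝ) * y⌋₊ - b * m with hi2def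
      have hi2 : i2 ≤ b - 1 := by omega
      have hfloor : ⌊(b : ℝ) * y⌋₊ = b * m + i2 := by omega
      have hkey := hql m i2 hi2
      have hpow1 : (b : ℝ) ^ (i + 1) * x = (b : ℝ) * y := by rw [hy]; ring
      have hcc : cCoeff b s α x (i + 1) =
          (s (b * m + i2) : ℝ) - (b : ℝ) ^ α * (s m : ℝ) := by
        rw [cCoeff, Nat.add_sub_cancel, hpow1, hfloor, ← hy, ← hm]
      rw [hcc]
      refine le_trans hkey ?_
      have hmax : max (m : ℝ) 1 ≤ (b : ℝ) ^ i := by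
        apply max_le
        · calc (m : ℝ) ≤ y := hmy
            _ ≤ (b : ℝ) ^ i := by
              rw [hy]; nlinarith [pow_pos hb0 i]
        · exact one_le_pow₀ hb1.le
      have := Real.rpow_le_rpow (le_trans zero_le_one (le_max_right (m : ℝ) 1)) hmax hβ0
      nlinarith
    have hpoweq : ((b : ℝ) ^ i) ^ β * (b : ℝ) ^ (-(α * ((i + 1 : ℕ) : ℝ))) =
        (b : ℝ) ^ (-α) * r ^ i := by
      rw [← Real.rpow_natCast (b : ℝ) i, ← Real.rpow_mul hb0.le, ← Real.rpow_add hb0,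
        hr, ← Real.rpow_natCast ((b : ℝ) ^ (-(α - β))) i, ← Real.rpow_mul hb0.le,
        ← Real.rpow_add hb0]
      congr 1
      push_cast
      ring
    have habs : |(b : ℝ) ^ (-(α * ((i + 1 : ℕ) : ℝ)))| = (b : ℝ) ^ (-(α * ((i + 1 : ℕ) : ℝ))) :=
      abs_of_pos (Real.rpow_pos_of_pos hb0 _)
    rw [habs]
    calc |cCoeff b s α x (i + 1)| * (b : ℝ) ^ (-(α * ((i + 1 : ℕ) : ℝ)))
        ≤ C * ((b : ℝ) ^ i) ^ β * (b : ℝ) ^ (-(α * ((i + 1 : ℕ) : ℝ))) := by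
          apply mul_le_mul_of_nonneg_right hcb (Real.rpow_pos_of_pos hb0 _).le
      _ = C * ((b : ℝ) ^ (-α) * r ^ i) := by rw [mul_assoc, hpoweq]
      _ = C * (b : ℝ) ^ (-α) * r ^ i := by ring
  -- sum bound
  have h1r : 0 < 1 - r := by linarith
  have hsum : ∀ k : ℕ, n ≤ k → |f k - f n| ≤ C * (b : ℝ) ^ (-α) * (r ^ n / (1 - r)) := by
    intro k hk
    have htele : f k - f n = ∑ i ∈ Finset.Ico n k, (f (i + 1) - f i) := by
      rw [Finset.sum_Ico_eq_sub _ hk, Finset.sum_range_sub, Finset.sum_range_sub]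
      ring
    rw [htele]
    calc |∑ i ∈ Finset.Ico n k, (f (i + 1) - f i)|
        ≤ ∑ i ∈ Finset.Ico n k, |f (i + 1) - f i| := Finset.abs_sum_le_sum_abs _ _
      _ ≤ ∑ i ∈ Finset.Ico n k, C * (b : ℝ) ^ (-α) * r ^ i :=
          Finset.sum_le_sum (fun i _ => hstep i)
      _ = C * (b : ℝ) ^ (-α) * ∑ i ∈ Finset.Ico n k, r ^ i := by
          rw [Finset.mul_sum]
      _ ≤ C * (b : ℝ) ^ (-α) * (r ^ n / (1 - r)) := by
          apply mul_le_mul_of_nonneg_left _ (by positivity)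
          rw [geom_sum_Ico hr1.ne hk,
            show (r ^ k - r ^ n) / (r - 1) = (r ^ n - r ^ k) / (1 - r) from by
              rw [div_eq_div_iff (by linarith) (by linarith)]; ring]
          have hrk : (0 : ℝ) ≤ r ^ k := by positivity
          gcongr
          linarith
  -- final bound constant comparison
  have hkey2 : C * (b : ℝ) ^ (-α) * (r ^ n / (1 - r)) ≤ C / (t - 1) * r ^ n := by
    have hbα : (b : ℝ) ^ (-α) ≤ r := by
      rw [hr]
      exact (Real.rpow_le_rpow_left_iff hb1).2 (by linarith)
    have ht0 : 0 < t - 1 := by linarith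
    have hthis : r * (t - 1) = 1 - r := by rw [mul_sub, hrt]; ring
    have heq : C / (t - 1) * r ^ n = C * r * (r ^ n / (1 - r)) := by
      rw [← hthis]
      field_simp
    rw [heq]
    have hrn : 0 < r ^ n / (1 - r) := by positivity
    have : C * (b : ℝ) ^ (-α) ≤ C * r := by nlinarith
    nlinarith
  have hfin : |aS s α Λ x - gPartial b s α x n| ≤ C / (t - 1) * r ^ n := by
    have hlim : Tendsto (fun k => |gPartial b s α x k - gPartial b s α x n|) atTop
        (nhds |aS s α Λ x - gPartial b s α x n|) := ((htend.sub_const _).abs)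
    refine le_of_tendsto hlim (eventually_atTop.2 ⟨n, fun k hk => ?_⟩)
    rw [htel k, htel n, sub_sub_sub_cancel_right]
    exact le_trans (hsum k hk) hkey2
  have hrn : r ^ n = (b : ℝ) ^ (-((n : ℝ) * (α - β))) := by
    rw [hr, ← Real.rpow_natCast ((b : ℝ) ^ (-(α - β))) n, ← Real.rpow_mul hb0.le]
    congr 1
    ring
  rw [← hrn]
  have ht0 : 0 < t - 1 := by linarith
  have hD : C / (t - 1) ≤ D4 b α β * C := by
    have hD4 : D4 b α β = (⌊3 / (t - 1)⌋ : ℝ) + 1 := by rw [D4, ← ht]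
    have h3 : 3 / (t - 1) < (⌊3 / (t - 1)⌋ : ℝ) + 1 := Int.lt_floor_add_one _
    have hu : 0 < 1 / (t - 1) := by positivity
    have h13 : C / (t - 1) ≤ 3 / (t - 1) * C := by
      rw [div_eq_mul_one_div C, div_eq_mul_one_div 3]
      nlinarith
    calc C / (t - 1) ≤ 3 / (t - 1) * C := h13
      _ ≤ ((⌊3 / (t - 1)⌋ : ℝ) + 1) * C := mul_le_mul_of_nonneg_right h3.le hC.le
      _ = D4 b α β * C := by rw [hD4]
  exact ⟨hfin, le_trans hfin (mul_le_mul_of_nonneg_right hD (by positivity))⟩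
end

section
/- Let m be the Thue–Morse sequence, s(n) := Σ_{i=0}^{n−1} m(i) its partial-sum sequence, λ_s the function satisfying s(2^k x)/(2^k x) → λ_s(x) as k → ∞ for every x > 0 (this limit exists), and a_s(x) := x·λ_s(x) − s(⌊x⌋). Then for every integer k ≥ 1 and every integer n ≥ 1 with 2n + 2 ≤ 2^k − 1, one has a_s((2n+2)·2^{−k}) − a_s(2n·2^{−k}) = 2^{−k}. -/
open Filter

lemma tm_le_one (m : ℕ → ℕ) (hm0 : m 0 = 0)
    (hme : ∀ i : ℕ, m (2 * i) = m i) (hmo : ∀ i : ℕ, m (2 * i + 1) = 1 - m i) :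
    ∀ i, m i ≤ 1 := by
  intro i
  induction i using Nat.strong_induction_on with
  | _ i ih =>
    rcases Nat.even_or_odd i with ⟨j, hj⟩ | ⟨j, hj⟩
    · rcases Nat.eq_zero_or_pos j with h | h
      · subst hj; simp [h, hm0]
      · have : i = 2 * j := by omega
        rw [this, hme]; exact ih j (by omega)
    · have : i = 2 * j + 1 := by omega
      rw [this, hmo]; omega

lemma tm_s_even (m : ℕ → ℕ) (s : ℕ → ℕ) (hm0 : m 0 = 0)
    (hme : ∀ i : ℕ, m (2 * i) = m i) (hmo : ∀ i : ℕ, m (2 * i + 1) = 1 - m i)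
    (hs : ∀ n : ℕ, s n = ∑ i ∈ Finset.range n, m i) :
    ∀ n, s (2 * n) = n := by
  intro n
  induction n with
  | zero => simp [hs]
  | succ n ih =>
    have h : s (2 * (n + 1)) = s (2 * n) + m (2 * n) + m (2 * n + 1) := by
      rw [hs, hs, show 2 * (n + 1) = 2 * n + 1 + 1 by ring,
        Finset.sum_range_succ, Finset.sum_range_succ]
    rw [h, ih, hme, hmo]
    have := tm_le_one m hm0 hme hmo n
    omega

/-- For the sum `s` of the Thue–Morse sequence with limit function `λ_s` (in base 2,
with exponent 1), `a_s((2n+2)·2^{−k}) − a_s(2n·2^{−k}) = 2^{−k}` whenever `k ≥ 1`,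
`n ≥ 1` and `2n + 2 ≤ 2^k − 1`, where `a_s(x) = x·λ_s(x) − s(⌊x⌋)`. -/
theorem thueMorse_aS_increment
    (m : ℕ → ℕ) (s : ℕ → ℕ) (Λ : ℝ → ℝ)
    (hm0 : m 0 = 0)
    (hme : ∀ i : ℕ, m (2 * i) = m i)
    (hmo : ∀ i : ℕ, m (2 * i + 1) = 1 - m i)
    (hs : ∀ n : ℕ, s n = ∑ i ∈ Finset.range n, m i)
    (hΛ : ∀ x : ℝ, 0 < x →
      Tendsto (fun k : ℕ => (s ⌊(2 : ℝ) ^ k * x⌋₊ : ℝ) / ((2 : ℝ) ^ k * x))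
        atTop (nhds (Λ x))) :
    ∀ k : ℕ, 1 ≤ k → ∀ n : ℕ, 1 ≤ n → 2 * n + 2 ≤ 2 ^ k - 1 →
      (((2 * (n : ℝ) + 2) / 2 ^ k) * Λ ((2 * (n : ℝ) + 2) / 2 ^ k) -
          (s ⌊(2 * (n : ℝ) + 2) / 2 ^ k⌋₊ : ℝ)) -
        (((2 * (n : ℝ)) / 2 ^ k) * Λ ((2 * (n : ℝ)) / 2 ^ k) -
          (s ⌊(2 * (n : ℝ)) / 2 ^ k⌋₊ : ℝ)) = ((2 : ℝ) ^ k)⁻¹ := by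
  have hse := tm_s_even m s hm0 hme hmo hs
  -- Λ at dyadic points is 1/2
  have hhalf : ∀ c k : ℕ, 0 < c → Λ ((2 * (c : ℝ)) / 2 ^ k) = 1 / 2 := by
    intro c k hc
    set x : ℝ := (2 * (c : ℝ)) / 2 ^ k with hx
    have hxpos : 0 < x := by
      apply div_pos
      · positivity
      · positivity
    have key : ∀ j : ℕ, k ≤ j →
        (s ⌊(2 : ℝ) ^ j * x⌋₊ : ℝ) / ((2 : ℝ) ^ j * x) = 1 / 2 := by
      intro j hj
      have h2k : (2 : ℝ) ^ k ≠ 0 := by positivity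
      have hval : (2 : ℝ) ^ j * x = ((2 * c * 2 ^ (j - k) : ℕ) : ℝ) := by
        push_cast
        rw [hx]
        rw [show (2 : ℝ) ^ j = 2 ^ k * 2 ^ (j - k) by rw [← pow_add]; congr 1; omega]
        field_simp
      rw [hval, Nat.floor_natCast]
      rw [show 2 * c * 2 ^ (j - k) = 2 * (c * 2 ^ (j - k)) by ring, hse]
      have hne : ((2 * (c * 2 ^ (j - k)) : ℕ) : ℝ) ≠ 0 := by
        positivity
      push_cast at hne ⊢
      rw [div_eq_iff (by positivity)]
      ring
    have h1 : Tendsto (fun j : ℕ => (s ⌊(2 : ℝ) ^ j * x⌋₊ : ℝ) / ((2 : ℝ) ^ j * x))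
        atTop (nhds (1 / 2)) := by
      apply Tendsto.congr' _ tendsto_const_nhds
      filter_upwards [eventually_ge_atTop k] with j hj
      exact (key j hj).symm
    exact tendsto_nhds_unique (hΛ x hxpos) h1
  intro k hk n hn hle
  have h2k : (0 : ℝ) < 2 ^ k := by positivity
  have hlt : (2 : ℕ) * n + 2 < 2 ^ k := by omega
  have hltR : (2 * (n : ℝ) + 2) < 2 ^ k := by
    calc (2 * (n : ℝ) + 2) = ((2 * n + 2 : ℕ) : ℝ) := by push_cast; ring
    _ < ((2 ^ k : ℕ) : ℝ) := by exact_mod_cast hlt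
    _ = (2 : ℝ) ^ k := by push_cast; ring
  have hf1 : ⌊(2 * (n : ℝ) + 2) / 2 ^ k⌋₊ = 0 := by
    rw [Nat.floor_eq_zero]
    rw [div_lt_one h2k]; linarith
  have hf2 : ⌊(2 * (n : ℝ)) / 2 ^ k⌋₊ = 0 := by
    rw [Nat.floor_eq_zero]
    rw [div_lt_one h2k]; linarith
  have hs0 : s 0 = 0 := by simp [hs]
  have hΛ1 : Λ ((2 * (n : ℝ) + 2) / 2 ^ k) = 1 / 2 := by
    have := hhalf (n + 1) k (by omega)
    push_cast at this
    rw [show 2 * (n : ℝ) + 2 = 2 * ((n : ℝ) + 1) by ring]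
    exact this
  have hΛ2 : Λ ((2 * (n : ℝ)) / 2 ^ k) = 1 / 2 := hhalf n k hn
  rw [hf1, hf2, hs0, hΛ1, hΛ2]
  push_cast
  field_simp
  ring
end
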